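/- arXiv:1804.11073 — 7 statements merged into one kernel-verified Lean document; each statement's English description precedes it below -/
import Mathlib

section
/- Let n ≥ 1, p > 1 and R > 0. Define φ₁(x) := ∫_{S^{n−1}} e^{x·ω} dS_ω for n ≥ 2 and φ₁(x) := e^x + e^{−x} for n = 1, and set ψ₁(x,t) := e^{−t} φ₁(x). Then there exists a constant C₁ = C₁(n,p,R) > 0 such that for all t ≥ 0, ∫_{|x| ≤ t+R} ψ₁(x,t)^{p/(p−1)} dx ≤ C₁ (1+t)^{(n−1)(1 − p/(2(p−1)))}. -/
open MeasureTheory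
open Set Metric Real

/-- The Yordanov–Zhang test function `φ₁`: for `n ≥ 2` the integral of `e^{x·ω}` over
the unit sphere `S^{n-1}` (with its surface measure), and `e^x + e^{-x}` for `n = 1`. -/
noncomputable def yzPhi (n : ℕ) (x : EuclideanSpace ℝ (Fin n)) : ℝ :=
  if n = 1 then Real.exp (∑ i, x i) + Real.exp (-(∑ i, x i))
  else ∫ ω : Metric.sphere (0 : EuclideanSpace ℝ (Fin n)) 1,
    Real.exp ((inner ℝ x (ω : EuclideanSpace ℝ (Fin n)) : ℝ))
      ∂((volume : Measure (EuclideanSpace ℝ (Fin n))).toSphere)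

lemma yz_int_exp_abs : Integrable (fun u : ℝ => Real.exp (-|u| / 2)) := by
  have hf : IntegrableOn (fun x : ℝ => Real.exp (-|x| / 2)) (Ioi 0) := by
    refine ((exp_neg_integrableOn_Ioi 0 (by norm_num : (0:ℝ) < 2⁻¹)).congr_fun
      (fun x hx => ?_) measurableSet_Ioi)
    rw [abs_of_pos hx]; ring_nf
  have int_Iic : IntegrableOn (fun x : ℝ => Real.exp (-|x| / 2)) (Iic 0) := by
    rw [← Measure.map_neg_eq_self (volume : Measure ℝ)]
    have m : MeasurableEmbedding fun x : ℝ => -x := (Homeomorph.neg ℝ).measurableEmbedding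
    rw [m.integrableOn_map_iff]
    simp_rw [Function.comp_def, abs_neg, neg_preimage, neg_Iic, neg_zero]
    exact (integrableOn_Ici_iff_integrableOn_Ioi).mpr hf
  rw [← integrableOn_univ, ← Iic_union_Ioi (a := (0:ℝ))]
  exact int_Iic.union hf

lemma yz_abs_apply_le_norm {n : ℕ} (z : EuclideanSpace ℝ (Fin n)) (j : Fin n) :
    |z j| ≤ ‖z‖ := by
  rw [EuclideanSpace.norm_eq, ← Real.sqrt_sq_eq_abs]
  apply Real.sqrt_le_sqrt
  have : z j ^ 2 = ‖z j‖ ^ 2 := by simp [Real.norm_eq_abs, sq_abs]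
  rw [this]
  exact Finset.single_le_sum (f := fun i => ‖z i‖ ^ 2) (fun i _ => by positivity)
    (Finset.mem_univ j)

lemma yz_norm_sq {n : ℕ} (z : EuclideanSpace ℝ (Fin n)) :
    ‖z‖ ^ 2 = ∑ i, z i ^ 2 := by
  rw [EuclideanSpace.norm_eq, Real.sq_sqrt (by positivity)]
  simp [Real.norm_eq_abs, sq_abs]

set_option maxHeartbeats 1000000 in

lemma yzL1' {n : ℕ} (j : Fin n) {ρ : ℝ} (hρ : 1 ≤ ρ) :
    ∫ z in closedBall (0 : EuclideanSpace ℝ (Fin n)) ρ, Real.exp (z j)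
      ≤ (∫ u : ℝ, Real.exp (-|u| / 2)) * Real.sqrt (4 * π * ρ) ^ (n - 1) * Real.exp ρ := by
  have hρ0 : 0 < ρ := lt_of_lt_of_le one_pos hρ
  set g : Fin n → ℝ → ℝ :=
    fun i s => if i = j then Real.exp (-|s - ρ| / 2) else Real.exp (-(4 * ρ)⁻¹ * s ^ 2) with hg
  have hgi : ∀ i, Integrable (g i) := by
    intro i
    by_cases hij : i = j
    · simpa [hg, hij] using yz_int_exp_abs.comp_sub_right ρ
    · simpa [hg, hij] using integrable_exp_neg_mul_sq (by positivity : (0:ℝ) < (4 * ρ)⁻¹)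
  have hprod : Integrable (fun z : EuclideanSpace ℝ (Fin n) => ∏ i, g i (z i)) := by
    exact ((EuclideanSpace.volume_preserving_symm_measurableEquiv_toLp (Fin n)).integrable_comp_emb
      (MeasurableEquiv.measurableEmbedding _)).mpr (Integrable.fintype_prod hgi)
  have hM : Integrable (fun z : EuclideanSpace ℝ (Fin n) => Real.exp ρ * ∏ i, g i (z i)) :=
    hprod.const_mul _
  have hgnn : ∀ i (s : ℝ), 0 ≤ g i s := by
    intro i s
    rcases eq_or_ne i j with h | h
    · simp only [hg, if_pos h]; positivity
    · simp only [hg, if_neg h]; positivity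
  have hpoint : ∀ z ∈ closedBall (0 : EuclideanSpace ℝ (Fin n)) ρ,
      Real.exp (z j) ≤ Real.exp ρ * ∏ i, g i (z i) := by
    intro z hz
    have hn : ‖z‖ ≤ ρ := mem_closedBall_zero_iff.mp hz
    have hzj : |z j| ≤ ρ := (yz_abs_apply_le_norm z j).trans hn
    have hzj' := abs_le.mp hzj
    have hsum : ∑ i ∈ Finset.univ.erase j, z i ^ 2 ≤ 2 * ρ * (ρ - z j) := by
      have h1 : ∑ i ∈ Finset.univ.erase j, z i ^ 2 = (∑ i, z i ^ 2) - z j ^ 2 :=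
        Finset.sum_erase_eq_sub (Finset.mem_univ j)
      have h2 : ‖z‖ ^ 2 ≤ ρ ^ 2 := by nlinarith [norm_nonneg z]
      rw [h1, ← yz_norm_sq]
      nlinarith
    have hsplit : ∏ i, g i (z i)
        = Real.exp (-|z j - ρ| / 2) * Real.exp (-(4 * ρ)⁻¹ * ∑ i ∈ Finset.univ.erase j, z i ^ 2) := by
      rw [← Finset.mul_prod_erase _ _ (Finset.mem_univ j)]
      congr 1
      · simp [hg]
      · rw [Finset.mul_sum, Real.exp_sum]
        exact Finset.prod_congr rfl fun i hi => by
          simp [hg, (Finset.mem_erase.mp hi).1]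
    rw [hsplit]
    have habs : |z j - ρ| = ρ - z j := by
      rw [abs_of_nonpos (by linarith)]; ring
    rw [habs, ← Real.exp_add, ← Real.exp_add]
    apply Real.exp_le_exp.mpr
    have : (4 * ρ)⁻¹ * ∑ i ∈ Finset.univ.erase j, z i ^ 2 ≤ (ρ - z j) / 2 := by
      rw [inv_mul_le_iff₀ (by positivity)]
      nlinarith
    linarith
  calc ∫ z in closedBall (0 : EuclideanSpace ℝ (Fin n)) ρ, Real.exp (z j)
      ≤ ∫ z in closedBall (0 : EuclideanSpace ℝ (Fin n)) ρ,
          Real.exp ρ * ∏ i, g i (z i) := by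
        refine setIntegral_mono_on ?_ hM.integrableOn measurableSet_closedBall hpoint
        refine ContinuousOn.integrableOn_compact (isCompact_closedBall _ _) ?_
        exact (Real.continuous_exp.comp (EuclideanSpace.proj j).continuous).continuousOn
    _ ≤ ∫ z : EuclideanSpace ℝ (Fin n), Real.exp ρ * ∏ i, g i (z i) := by
        refine setIntegral_le_integral hM (Filter.Eventually.of_forall fun z => ?_)
        exact mul_nonneg (Real.exp_pos ρ).le (Finset.prod_nonneg fun i _ => hgnn i _)
    _ = Real.exp ρ * ∏ i, ∫ u, g i u := by
        rw [integral_const_mul]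
        congr 1
        rw [← MeasureTheory.integral_fintype_prod_eq_prod (f := g)]
        exact (EuclideanSpace.volume_preserving_symm_measurableEquiv_toLp
          (Fin n)).integral_comp' (fun w => ∏ i, g i (w i))
    _ ≤ (∫ u : ℝ, Real.exp (-|u| / 2)) * Real.sqrt (4 * π * ρ) ^ (n - 1) * Real.exp ρ := by
        rw [← Finset.mul_prod_erase _ _ (Finset.mem_univ j)]
        have h1 : ∫ u, g j u = ∫ u : ℝ, Real.exp (-|u| / 2) := by
          simp only [hg, if_pos rfl]
          exact integral_sub_right_eq_self (fun u => Real.exp (-|u| / 2)) ρ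
        have h2 : ∏ i ∈ Finset.univ.erase j, ∫ u, g i u
            = Real.sqrt (4 * π * ρ) ^ (n - 1) := by
          have : ∀ i ∈ Finset.univ.erase j, ∫ u, g i u = Real.sqrt (4 * π * ρ) := by
            intro i hi
            simp only [hg, if_neg (Finset.mem_erase.mp hi).1]
            rw [integral_gaussian]
            congr 1
            field_simp
          rw [Finset.prod_congr rfl this, Finset.prod_const,
            Finset.card_erase_of_mem (Finset.mem_univ j), Finset.card_univ, Fintype.card_fin]
        rw [h1, h2]; exact le_of_eq (by ring)

lemma yzL1 {n : ℕ} (hn : 1 ≤ n) (e : EuclideanSpace ℝ (Fin n)) (he : ‖e‖ = 1) {ρ : ℝ}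
    (hρ : 1 ≤ ρ) :
    ∫ z in closedBall (0 : EuclideanSpace ℝ (Fin n)) ρ,
        Real.exp ((inner ℝ z e : ℝ))
      ≤ (∫ u : ℝ, Real.exp (-|u| / 2)) * Real.sqrt (4 * π * ρ) ^ (n - 1) * Real.exp ρ := by
  have hn0 : 0 < n := hn
  set j : Fin n := ⟨0, hn0⟩
  have hv : Orthonormal ℝ (({j} : Set (Fin n)).restrict (fun _ : Fin n => e)) := by
    constructor
    · intro i; exact he
    · intro i k hik
      exact absurd (Subtype.ext ((i.2.trans k.2.symm : _))) hik
  obtain ⟨b, hb⟩ := hv.exists_orthonormalBasis_extension_of_card_eq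
    (by simp [finrank_euclideanSpace_fin])
  have hbj : b j = e := hb j rfl
  have hpre : ⇑b.repr ⁻¹' closedBall (0 : EuclideanSpace ℝ (Fin n)) ρ
      = closedBall (0 : EuclideanSpace ℝ (Fin n)) ρ := by
    ext z
    simp [mem_closedBall_zero_iff]
  have key : ∫ z in closedBall (0 : EuclideanSpace ℝ (Fin n)) ρ, Real.exp ((inner ℝ z e : ℝ))
      = ∫ w in closedBall (0 : EuclideanSpace ℝ (Fin n)) ρ, Real.exp (w j) := by
    rw [← b.measurePreserving_repr.setIntegral_preimage_emb
      (b.repr.toHomeomorph.measurableEmbedding) (fun w => Real.exp (w j)), hpre]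
    refine setIntegral_congr_fun measurableSet_closedBall (fun z _ => ?_)
    rw [b.repr_apply_apply, hbj, real_inner_comm]
  rw [key]
  exact yzL1' j hρ

lemma yz_nontrivial {n : ℕ} (hn : 1 ≤ n) : Nontrivial (EuclideanSpace ℝ (Fin n)) := by
  refine nontrivial_of_ne (EuclideanSpace.single (⟨0, hn⟩ : Fin n) (1:ℝ)) 0 (fun h => ?_)
  have := congrArg norm h
  simp [EuclideanSpace.norm_single] at this

set_option maxHeartbeats 1000000 in

lemma yzPolar {n : ℕ} (hn : 1 ≤ n) (g : EuclideanSpace ℝ (Fin n) → ℝ)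
    (hg : Integrable g) :
    ∫ y, g y = ∫ r in Ioi (0:ℝ), r ^ (n - 1) •
      (∫ ω : Metric.sphere (0 : EuclideanSpace ℝ (Fin n)) 1,
        g (r • (ω : EuclideanSpace ℝ (Fin n)))
        ∂((volume : Measure (EuclideanSpace ℝ (Fin n))).toSphere)) := by
  have hnt : Nontrivial (EuclideanSpace ℝ (Fin n)) := yz_nontrivial hn
  let E := EuclideanSpace ℝ (Fin n)
  let μ : Measure E := volume
  have hdim : Module.finrank ℝ E = n := finrank_euclideanSpace_fin
  have hcomp : ∀ x : ({0}ᶜ : Set E),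
      g ((((homeomorphUnitSphereProd E) x).2 : ℝ) • (((homeomorphUnitSphereProd E) x).1 : E))
      = g x := by
    intro x
    have hx : (x : E) ≠ 0 := x.2
    simp [homeomorphUnitSphereProd, smul_inv_smul₀ (norm_ne_zero_iff.2 hx)]
  have hint : Integrable (fun z : Metric.sphere (0:E) 1 × Ioi (0:ℝ) =>
      g ((z.2 : ℝ) • (z.1 : E)))
      (μ.toSphere.prod (Measure.volumeIoiPow (Module.finrank ℝ E - 1))) := by
    rw [← μ.measurePreserving_homeomorphUnitSphereProd.integrable_comp_emb
      (Homeomorph.measurableEmbedding _)]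
    refine Integrable.congr ?_ (Filter.Eventually.of_forall fun x => (hcomp x).symm)
    exact ((MeasurableEmbedding.subtype_coe
      (measurableSet_singleton (0:E)).compl).integrable_map_iff).mp
      (by rw [map_comap_subtype_coe (measurableSet_singleton (0:E)).compl]
          exact hg.integrableOn)
  set H : ℝ → ℝ := fun r => ∫ ω : Metric.sphere (0:E) 1, g (r • (ω : E)) ∂μ.toSphere with hH
  show ∫ y, g y ∂μ = ∫ r in Ioi (0:ℝ), r ^ (n - 1) • H r
  calc ∫ y, g y ∂μ = ∫ x : ({0}ᶜ : Set E), g x ∂(μ.comap Subtype.val) := by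
        rw [integral_subtype_comap (measurableSet_singleton (0:E)).compl g,
          restrict_compl_singleton]
    _ = ∫ z : Metric.sphere (0:E) 1 × Ioi (0:ℝ), g ((z.2 : ℝ) • (z.1 : E))
          ∂(μ.toSphere.prod (Measure.volumeIoiPow (Module.finrank ℝ E - 1))) := by
        rw [← μ.measurePreserving_homeomorphUnitSphereProd.integral_comp
          (Homeomorph.measurableEmbedding _)]
        exact integral_congr_ae (Filter.Eventually.of_forall fun x => (hcomp x).symm)
    _ = ∫ r : Ioi (0:ℝ), H (r:ℝ) ∂(Measure.volumeIoiPow (Module.finrank ℝ E - 1)) :=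
        integral_prod_symm _ hint
    _ = ∫ r in Ioi (0:ℝ), r ^ (n - 1) • H r := by
        simp only [Measure.volumeIoiPow, ENNReal.ofReal]
        rw [integral_withDensity_eq_integral_smul
          ((measurable_subtype_coe.pow_const _).real_toNNReal),
          integral_subtype_comap measurableSet_Ioi
            (fun r => (r ^ (Module.finrank ℝ E - 1)).toNNReal • H r)]
        refine setIntegral_congr_fun measurableSet_Ioi (fun r hr => ?_)
        rw [NNReal.smul_def, Real.coe_toNNReal _ (pow_nonneg (le_of_lt hr) _), hdim]

lemma yz_sphere_integrable {f : Metric.sphere (0 : EuclideanSpace ℝ (Fin n)) 1 → ℝ}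
    (hf : Continuous f) :
    Integrable f ((volume : Measure (EuclideanSpace ℝ (Fin n))).toSphere) := by
  rw [← integrableOn_univ]
  exact ContinuousOn.integrableOn_compact isCompact_univ hf.continuousOn

lemma yz_inner_continuous (e : EuclideanSpace ℝ (Fin n)) :
    Continuous (fun ω : Metric.sphere (0 : EuclideanSpace ℝ (Fin n)) 1 =>
      (inner ℝ e (ω : EuclideanSpace ℝ (Fin n)) : ℝ)) :=
  (innerSL ℝ e).continuous.comp continuous_subtype_val

lemma yz_abs_inner_le (e : EuclideanSpace ℝ (Fin n)) (he : ‖e‖ = 1)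
    (ω : Metric.sphere (0 : EuclideanSpace ℝ (Fin n)) 1) :
    |(inner ℝ e (ω : EuclideanSpace ℝ (Fin n)) : ℝ)| ≤ 1 := by
  have := abs_real_inner_le_norm e (ω : EuclideanSpace ℝ (Fin n))
  rwa [he, one_mul, mem_sphere_zero_iff_norm.mp ω.2] at this

lemma yzG_cont (e : EuclideanSpace ℝ (Fin n)) (he : ‖e‖ = 1) :
    Continuous (fun r : ℝ => ∫ ω : Metric.sphere (0 : EuclideanSpace ℝ (Fin n)) 1,
      (Real.exp (r * (inner ℝ e (ω : EuclideanSpace ℝ (Fin n)) : ℝ))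
        + Real.exp (-(r * (inner ℝ e (ω : EuclideanSpace ℝ (Fin n)) : ℝ))))
      ∂((volume : Measure (EuclideanSpace ℝ (Fin n))).toSphere)) := by
  rw [continuous_iff_continuousAt]
  intro r₀
  refine continuousAt_of_dominated (bound := fun _ => 2 * Real.exp (|r₀| + 1)) ?_ ?_ ?_ ?_
  · exact Filter.Eventually.of_forall fun r =>
      (((Real.continuous_exp.comp ((continuous_const.mul (yz_inner_continuous e)))).add
        (Real.continuous_exp.comp
          ((continuous_const.mul (yz_inner_continuous e)).neg))).aestronglyMeasurable)
  · filter_upwards [eventually_abs_sub_lt r₀ one_pos] with r hr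
    refine Filter.Eventually.of_forall fun ω => ?_
    have hu := yz_abs_inner_le e he ω
    have h1 : |r| ≤ |r₀| + 1 := by
      have := abs_sub_abs_le_abs_sub r r₀
      linarith
    have h2 : ∀ a : ℝ, |a| ≤ |r₀| + 1 → Real.exp a ≤ Real.exp (|r₀| + 1) := fun a ha =>
      Real.exp_le_exp.mpr ((le_abs_self a).trans ha)
    have key : |r * (inner ℝ e (ω : EuclideanSpace ℝ (Fin n)) : ℝ)| ≤ |r₀| + 1 := by
      rw [abs_mul]
      calc |r| * |(inner ℝ e (ω : EuclideanSpace ℝ (Fin n)) : ℝ)| ≤ (|r₀| + 1) * 1 := by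
            apply mul_le_mul h1 hu (abs_nonneg _) (by positivity)
        _ = |r₀| + 1 := mul_one _
    have e1 := h2 _ key
    have e2 := h2 _ (by rwa [abs_neg])
    rw [Real.norm_eq_abs, abs_of_pos (by positivity)]
    calc Real.exp _ + Real.exp _ ≤ Real.exp (|r₀|+1) + Real.exp (|r₀|+1) := add_le_add e1 e2
      _ = 2 * Real.exp (|r₀| + 1) := by ring
  · exact integrable_const _
  · exact Filter.Eventually.of_forall fun ω =>
      (((Real.continuous_exp.comp ((continuous_id.mul continuous_const))).add
        (Real.continuous_exp.comp
          ((continuous_id.mul continuous_const)).neg)).continuousAt)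

lemma yz_alg {n : ℕ} (hn : 1 ≤ n) {s yz c0 : ℝ} (hs : 1 ≤ s) (hyz : 0 ≤ yz) (hc0 : 0 ≤ c0)
    (h : s ^ (n-1) * yz ≤ 2 * c0 * Real.sqrt (4*π*(s+1)) ^ (n-1) * Real.exp (s+1)) :
    yz ≤ (2 * c0 * Real.sqrt (8*π) ^ (n-1) * (2:ℝ) ^ (((n:ℝ)-1)/2) * Real.exp 1)
      * Real.exp s * (1+s) ^ (-(((n:ℝ)-1)/2)) := by
  have hs0 : 0 < s := lt_of_lt_of_le one_pos hs
  set m := n - 1 with hm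
  have hmcast : ((m : ℕ) : ℝ) = (n:ℝ) - 1 := by
    rw [hm, Nat.cast_sub hn, Nat.cast_one]
  set β : ℝ := ((n:ℝ)-1)/2 with hβdef
  have hβ : 0 ≤ β := by
    rw [hβdef, ← hmcast]; positivity
  have hβm : β = (m:ℝ)/2 := by rw [hβdef, hmcast]
  -- step a: sqrt bound
  have ha : Real.sqrt (4*π*(s+1)) ≤ Real.sqrt (8*π) * Real.sqrt s := by
    rw [← Real.sqrt_mul (by positivity)]
    apply Real.sqrt_le_sqrt
    nlinarith [pi_pos]
  have hb : Real.sqrt (4*π*(s+1)) ^ m ≤ Real.sqrt (8*π) ^ m * Real.sqrt s ^ m := by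
    rw [← mul_pow]
    exact pow_le_pow_left₀ (Real.sqrt_nonneg _) ha m
  have h2 : s ^ m * yz ≤ 2 * c0 * (Real.sqrt (8*π) ^ m * Real.sqrt s ^ m) * Real.exp (s+1) := by
    calc s ^ m * yz ≤ 2 * c0 * Real.sqrt (4*π*(s+1)) ^ m * Real.exp (s+1) := h
      _ ≤ _ := by
          have := mul_le_mul_of_nonneg_left hb (by positivity : (0:ℝ) ≤ 2 * c0)
          nlinarith [Real.exp_pos (s+1)]
  have h3 : yz ≤ 2 * c0 * Real.sqrt (8*π) ^ m * Real.exp (s+1) * (Real.sqrt s ^ m / s ^ m) := by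
    have h3' : yz ≤ (2 * c0 * (Real.sqrt (8*π) ^ m * Real.sqrt s ^ m) * Real.exp (s+1)) / s ^ m := by
      rw [le_div_iff₀ (pow_pos hs0 m)]
      nlinarith [h2]
    calc yz ≤ _ := h3'
      _ = 2 * c0 * Real.sqrt (8*π) ^ m * Real.exp (s+1) * (Real.sqrt s ^ m / s ^ m) := by
        ring
  have hratio : Real.sqrt s ^ m / s ^ m = s ^ (-((m:ℝ)/2)) := by
    rw [Real.sqrt_eq_rpow, ← Real.rpow_natCast (s ^ ((1:ℝ)/2)) m, ← Real.rpow_natCast s m,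
      ← Real.rpow_mul hs0.le, ← Real.rpow_sub hs0]
    congr 1
    ring
  have hcmp : s ^ (-((m:ℝ)/2)) ≤ (2:ℝ) ^ ((m:ℝ)/2) * (1+s) ^ (-((m:ℝ)/2)) := by
    have hβ' : (0:ℝ) ≤ (m:ℝ)/2 := by positivity
    have key : (1+s) ^ ((m:ℝ)/2) ≤ (2:ℝ) ^ ((m:ℝ)/2) * s ^ ((m:ℝ)/2) := by
      rw [← Real.mul_rpow (by norm_num) hs0.le]
      exact Real.rpow_le_rpow (by positivity) (by linarith) hβ'
    rw [Real.rpow_neg hs0.le, Real.rpow_neg (by positivity : (0:ℝ) ≤ 1+s)]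
    have hpos1 : 0 < (1+s) ^ ((m:ℝ)/2) := Real.rpow_pos_of_pos (by positivity) _
    have hpos2 : 0 < s ^ ((m:ℝ)/2) := Real.rpow_pos_of_pos hs0 _
    have hpos3 : 0 < (2:ℝ) ^ ((m:ℝ)/2) := Real.rpow_pos_of_pos (by norm_num) _
    have h4 : (s ^ ((m:ℝ)/2))⁻¹ = (2:ℝ) ^ ((m:ℝ)/2) * ((2:ℝ) ^ ((m:ℝ)/2) * s ^ ((m:ℝ)/2))⁻¹ := by
      field_simp
    rw [h4]
    exact mul_le_mul_of_nonneg_left (inv_anti₀ hpos1 key) hpos3.le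
  calc yz ≤ 2 * c0 * Real.sqrt (8*π) ^ m * Real.exp (s+1) * (Real.sqrt s ^ m / s ^ m) := h3
    _ = 2 * c0 * Real.sqrt (8*π) ^ m * Real.exp (s+1) * s ^ (-((m:ℝ)/2)) := by rw [hratio]
    _ ≤ 2 * c0 * Real.sqrt (8*π) ^ m * Real.exp (s+1)
          * ((2:ℝ) ^ ((m:ℝ)/2) * (1+s) ^ (-((m:ℝ)/2))) := by
        apply mul_le_mul_of_nonneg_left hcmp (by positivity)
    _ = (2 * c0 * Real.sqrt (8*π) ^ m * (2:ℝ) ^ β * Real.exp 1) * Real.exp s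
          * (1+s) ^ (-β) := by
        rw [hβm, Real.exp_add]
        ring

lemma yz_inner_continuous' {n : ℕ} (e : EuclideanSpace ℝ (Fin n)) :
    Continuous (fun y : EuclideanSpace ℝ (Fin n) => (inner ℝ y e : ℝ)) := by
  have : (fun y : EuclideanSpace ℝ (Fin n) => (inner ℝ y e : ℝ))
      = fun y => (inner ℝ e y : ℝ) := funext fun y => real_inner_comm _ _
  rw [this]
  exact (innerSL ℝ e).continuous

lemma yzPhi_nonneg {n : ℕ} (x : EuclideanSpace ℝ (Fin n)) : 0 ≤ yzPhi n x := by
  unfold yzPhi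
  split
  · positivity
  · exact integral_nonneg fun ω => (Real.exp_pos _).le

set_option maxHeartbeats 2000000 in

lemma yzPhi_le {n : ℕ} (hn : 1 ≤ n) :
    ∃ B : ℝ, 0 < B ∧ ∀ x : EuclideanSpace ℝ (Fin n),
      yzPhi n x ≤ B * Real.exp ‖x‖ * (1 + ‖x‖) ^ (-(((n:ℝ) - 1) / 2)) := by
  by_cases h1 : n = 1
  · subst h1
    refine ⟨2, two_pos, fun x => ?_⟩
    have hnorm : ‖x‖ = |x 0| := by
      rw [EuclideanSpace.norm_eq]
      simp [Fin.sum_univ_one, Real.sqrt_sq_eq_abs]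
    have hexp : (-((((1:ℕ):ℝ) - 1) / 2)) = 0 := by norm_num
    rw [yzPhi, if_pos rfl, hexp, Real.rpow_zero, mul_one, hnorm, Fin.sum_univ_one]
    have e1 : Real.exp (x 0) ≤ Real.exp |x 0| := Real.exp_le_exp.mpr (le_abs_self _)
    have e2 : Real.exp (-(x 0)) ≤ Real.exp |x 0| := Real.exp_le_exp.mpr (neg_le_abs _)
    linarith
  -- main case n ≥ 2 (but the proof works whenever n ≠ 1, n ≥ 1)
  set ν := (volume : Measure (EuclideanSpace ℝ (Fin n))).toSphere with hν
  set σ : ℝ := (ν univ).toReal with hσ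
  set c0 : ℝ := ∫ u : ℝ, Real.exp (-|u| / 2) with hc0
  have hσ0 : 0 ≤ σ := ENNReal.toReal_nonneg
  have hc00 : 0 ≤ c0 := integral_nonneg fun u => (Real.exp_pos _).le
  set β : ℝ := ((n:ℝ) - 1) / 2 with hβdef
  have hβ : 0 ≤ β := by
    have : (1:ℝ) ≤ (n:ℝ) := by exact_mod_cast hn
    rw [hβdef]; linarith
  set B1 : ℝ := Real.exp 1 * σ * (2:ℝ) ^ β with hB1
  set B2 : ℝ := 2 * c0 * Real.sqrt (8*π) ^ (n-1) * (2:ℝ) ^ β * Real.exp 1 with hB2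
  have hB1nn : 0 ≤ B1 := by positivity
  have hB2nn : 0 ≤ B2 := by positivity
  refine ⟨B1 + B2 + 1, by positivity, fun x => ?_⟩
  have hXnn : 0 ≤ Real.exp ‖x‖ * (1 + ‖x‖) ^ (-β) := by positivity
  have hyz := yzPhi_nonneg (n := n) x
  have hphi : yzPhi n x = ∫ ω : Metric.sphere (0 : EuclideanSpace ℝ (Fin n)) 1,
      Real.exp ((inner ℝ x (ω : EuclideanSpace ℝ (Fin n)) : ℝ)) ∂ν := by
    rw [yzPhi, if_neg h1]
  rcases le_or_gt ‖x‖ 1 with hs | hs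
  -- small x
  · have hb : yzPhi n x ≤ Real.exp 1 * σ := by
      rw [hphi]
      calc ∫ ω, Real.exp ((inner ℝ x (ω : EuclideanSpace ℝ (Fin n)) : ℝ)) ∂ν
          ≤ ∫ _ω : Metric.sphere (0 : EuclideanSpace ℝ (Fin n)) 1, Real.exp 1 ∂ν := by
            refine integral_mono (yz_sphere_integrable
              (Real.continuous_exp.comp (yz_inner_continuous x))) (integrable_const _)
              (fun ω => Real.exp_le_exp.mpr ?_)
            calc (inner ℝ x (ω : EuclideanSpace ℝ (Fin n)) : ℝ)
                ≤ |(inner ℝ x (ω : EuclideanSpace ℝ (Fin n)) : ℝ)| := le_abs_self _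
              _ ≤ ‖x‖ * ‖(ω : EuclideanSpace ℝ (Fin n))‖ := abs_real_inner_le_norm _ _
              _ ≤ 1 := by
                  rw [mem_sphere_zero_iff_norm.mp ω.2, mul_one]; exact hs
        _ = Real.exp 1 * σ := by rw [integral_const, smul_eq_mul, mul_comm]; rfl
    have hkey : (1:ℝ) ≤ (2:ℝ) ^ β * (Real.exp ‖x‖ * (1 + ‖x‖) ^ (-β)) := by
      have h2x : (2:ℝ) ^ (-β) ≤ (1 + ‖x‖) ^ (-β) := by
        apply Real.rpow_le_rpow_of_nonpos (by positivity) (by linarith) (by linarith)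
      have hexp1 : (1:ℝ) ≤ Real.exp ‖x‖ := Real.one_le_exp (norm_nonneg x)
      have h2β : (0:ℝ) < (2:ℝ) ^ β := Real.rpow_pos_of_pos two_pos β
      have hmm : (2:ℝ) ^ β * (2:ℝ) ^ (-β) = 1 := by
        rw [← Real.rpow_add two_pos]; simp
      calc (1:ℝ) = (2:ℝ) ^ β * (2:ℝ) ^ (-β) := hmm.symm
        _ ≤ (2:ℝ) ^ β * ((1 + ‖x‖) ^ (-β)) := by
            exact mul_le_mul_of_nonneg_left h2x h2β.le
        _ ≤ (2:ℝ) ^ β * (Real.exp ‖x‖ * (1 + ‖x‖) ^ (-β)) := by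
            have hXp : (0:ℝ) ≤ (1 + ‖x‖) ^ (-β) := by positivity
            exact mul_le_mul_of_nonneg_left (le_mul_of_one_le_left hXp hexp1) h2β.le
    calc yzPhi n x ≤ Real.exp 1 * σ := hb
      _ = (Real.exp 1 * σ) * 1 := (mul_one _).symm
      _ ≤ (Real.exp 1 * σ) * ((2:ℝ) ^ β * (Real.exp ‖x‖ * (1 + ‖x‖) ^ (-β))) := by
          exact mul_le_mul_of_nonneg_left hkey (by positivity)
      _ = B1 * (Real.exp ‖x‖ * (1 + ‖x‖) ^ (-β)) := by rw [hB1]; ring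
      _ ≤ (B1 + B2 + 1) * (Real.exp ‖x‖ * (1 + ‖x‖) ^ (-β)) := by
          apply mul_le_mul_of_nonneg_right (by linarith) hXnn
      _ = (B1 + B2 + 1) * Real.exp ‖x‖ * (1 + ‖x‖) ^ (-β) := by ring
  -- large x
  · set s : ℝ := ‖x‖ with hsdef
    have hs1 : 1 ≤ s := hs.le
    have hs0 : 0 < s := lt_of_lt_of_le one_pos hs1
    set e : EuclideanSpace ℝ (Fin n) := s⁻¹ • x with he_def
    have he : ‖e‖ = 1 := by
      rw [he_def, norm_smul, norm_inv, Real.norm_eq_abs, abs_of_pos hs0, ← hsdef,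
        inv_mul_cancel₀ hs0.ne']
    have hxe : x = s • e := by
      rw [he_def, smul_inv_smul₀ hs0.ne']
    set G : ℝ → ℝ := fun r => ∫ ω : Metric.sphere (0 : EuclideanSpace ℝ (Fin n)) 1,
      (Real.exp (r * (inner ℝ e (ω : EuclideanSpace ℝ (Fin n)) : ℝ))
        + Real.exp (-(r * (inner ℝ e (ω : EuclideanSpace ℝ (Fin n)) : ℝ)))) ∂ν with hGdef
    have hGmono : ∀ r : ℝ, s ≤ r → yzPhi n x ≤ G r := by
      intro r hr
      rw [hphi, hGdef]
      refine integral_mono (yz_sphere_integrable ?_) (yz_sphere_integrable ?_) (fun ω => ?_)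
      · exact Real.continuous_exp.comp (yz_inner_continuous x)
      · exact ((Real.continuous_exp.comp ((continuous_const.mul (yz_inner_continuous e)))).add
          (Real.continuous_exp.comp ((continuous_const.mul (yz_inner_continuous e)).neg)))
      · set u : ℝ := (inner ℝ e (ω : EuclideanSpace ℝ (Fin n)) : ℝ) with hu
        have hxu : (inner ℝ x (ω : EuclideanSpace ℝ (Fin n)) : ℝ) = s * u := by
          rw [hxe, hu, real_inner_smul_left]
        rw [hxu]
        have h1 : Real.exp (s * u) ≤ Real.exp |r * u| := by
          apply Real.exp_le_exp.mpr
          calc s * u ≤ |s * u| := le_abs_self _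
            _ = s * |u| := by rw [abs_mul, abs_of_pos hs0]
            _ ≤ r * |u| := by
                apply mul_le_mul_of_nonneg_right hr (abs_nonneg _)
            _ = |r * u| := by rw [abs_mul, abs_of_nonneg (hs0.le.trans hr)]
        rcases le_or_gt 0 (r * u) with hru | hru
        · rw [abs_of_nonneg hru] at h1
          nlinarith [Real.exp_pos (-(r*u))]
        · rw [abs_of_neg hru] at h1
          nlinarith [Real.exp_pos (r*u)]
    -- constant lower bound step
    have hGIoc : IntegrableOn (fun r => r ^ (n-1) • G r) (Ioc s (s+1)) volume := by
      refine (ContinuousOn.integrableOn_compact isCompact_Icc ?_).mono_set Ioc_subset_Icc_self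
      exact ((continuous_pow (n-1)).smul (yzG_cont e he)).continuousOn
    have h3 : s ^ (n-1) * yzPhi n x ≤ ∫ r in Ioc s (s+1), r ^ (n-1) • G r := by
      have hconst : ∫ _r in Ioc s (s+1), (s ^ (n-1) * yzPhi n x) = s ^ (n-1) * yzPhi n x := by
        rw [setIntegral_const, Real.volume_real_Ioc_of_le (by linarith), smul_eq_mul]
        rw [show s + 1 - s = 1 by ring]
        norm_num
      rw [← hconst]
      refine setIntegral_mono_on ?_ hGIoc measurableSet_Ioc (fun r hr => ?_)
      · exact integrableOn_const measure_Ioc_lt_top.ne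
      · rw [smul_eq_mul]
        apply mul_le_mul (pow_le_pow_left₀ hs0.le hr.1.le _) (hGmono r hr.1.le) hyz
          (pow_nonneg (hs0.le.trans hr.1.le) _)
    -- polar step
    set A : Set (EuclideanSpace ℝ (Fin n)) := (fun y => ‖y‖) ⁻¹' (Ioc s (s+1)) with hAdef
    have hA : MeasurableSet A := continuous_norm.measurable measurableSet_Ioc
    set F : EuclideanSpace ℝ (Fin n) → ℝ :=
      fun y => Real.exp ((inner ℝ y e : ℝ)) + Real.exp ((inner ℝ y (-e) : ℝ)) with hFdef
    have hFc : Continuous F := (Real.continuous_exp.comp (yz_inner_continuous' e)).add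
      (Real.continuous_exp.comp (yz_inner_continuous' (-e)))
    have hsub : A ⊆ closedBall (0 : EuclideanSpace ℝ (Fin n)) (s+1) := by
      intro y hy
      simp only [hAdef, mem_preimage, mem_Ioc] at hy
      exact mem_closedBall_zero_iff.mpr hy.2
    have hFcb : IntegrableOn F (closedBall (0 : EuclideanSpace ℝ (Fin n)) (s+1)) volume :=
      ContinuousOn.integrableOn_compact (isCompact_closedBall _ _) hFc.continuousOn
    have hFA : IntegrableOn F A volume := hFcb.mono_set hsub
    have hInd : Integrable (A.indicator F) volume := (integrable_indicator_iff hA).mpr hFA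
    have hpolar := yzPolar hn (A.indicator F) hInd
    have hG_of_r : ∀ r ∈ Ioi (0:ℝ),
        r ^ (n-1) • (∫ ω : Metric.sphere (0 : EuclideanSpace ℝ (Fin n)) 1,
          (A.indicator F) (r • (ω : EuclideanSpace ℝ (Fin n))) ∂ν)
        = (Ioc s (s+1)).indicator (fun r => r ^ (n-1) • G r) r := by
      intro r hr
      have hrω : ∀ ω : Metric.sphere (0 : EuclideanSpace ℝ (Fin n)) 1,
          ‖r • (ω : EuclideanSpace ℝ (Fin n))‖ = r := fun ω => by
        rw [norm_smul, mem_sphere_zero_iff_norm.mp ω.2, mul_one, Real.norm_eq_abs,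
          abs_of_pos hr]
      by_cases hmem : r ∈ Ioc s (s+1)
      · rw [indicator_of_mem hmem]
        congr 1
        refine integral_congr_ae (Filter.Eventually.of_forall fun ω => ?_)
        have hmemA : r • (ω : EuclideanSpace ℝ (Fin n)) ∈ A := by
          simp only [hAdef, mem_preimage, hrω ω]
          exact hmem
        show A.indicator F (r • (ω : EuclideanSpace ℝ (Fin n))) = _
        rw [indicator_of_mem hmemA]
        have i1 : (inner ℝ (r • (ω : EuclideanSpace ℝ (Fin n))) e : ℝ)
            = r * (inner ℝ e (ω : EuclideanSpace ℝ (Fin n)) : ℝ) := by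
          rw [real_inner_smul_left, real_inner_comm]
        have i2 : (inner ℝ (r • (ω : EuclideanSpace ℝ (Fin n))) (-e) : ℝ)
            = -(r * (inner ℝ e (ω : EuclideanSpace ℝ (Fin n)) : ℝ)) := by
          rw [inner_neg_right, i1]
        simp only [hFdef, i1, i2]
      · rw [indicator_of_notMem hmem]
        have hz : ∀ ω : Metric.sphere (0 : EuclideanSpace ℝ (Fin n)) 1,
            (A.indicator F) (r • (ω : EuclideanSpace ℝ (Fin n))) = 0 := by
          intro ω
          apply indicator_of_notMem
          simp only [hAdef, mem_preimage, hrω ω]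
          exact hmem
        rw [integral_congr_ae (Filter.Eventually.of_forall hz), integral_zero, smul_zero]
    have h4 : ∫ y, (A.indicator F) y = ∫ r in Ioc s (s+1), r ^ (n-1) • G r := by
      have hss : Ioi (0:ℝ) ∩ Ioc s (s+1) = Ioc s (s+1) :=
        inter_eq_self_of_subset_right (fun y hy => lt_trans hs0 hy.1)
      rw [hpolar, setIntegral_congr_fun measurableSet_Ioi hG_of_r,
        setIntegral_indicator measurableSet_Ioc, hss]
    have hbound : ∀ e' : EuclideanSpace ℝ (Fin n), ‖e'‖ = 1 →
        (∫ y in A, Real.exp ((inner ℝ y e' : ℝ)))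
          ≤ c0 * Real.sqrt (4*π*(s+1)) ^ (n-1) * Real.exp (s+1) := by
      intro e' he'
      have hIcb : IntegrableOn (fun y => Real.exp ((inner ℝ y e' : ℝ)))
          (closedBall (0 : EuclideanSpace ℝ (Fin n)) (s+1)) volume :=
        ContinuousOn.integrableOn_compact (isCompact_closedBall _ _)
          (Real.continuous_exp.comp (yz_inner_continuous' e')).continuousOn
      calc (∫ y in A, Real.exp ((inner ℝ y e' : ℝ)))
          ≤ ∫ y in closedBall (0 : EuclideanSpace ℝ (Fin n)) (s+1),
              Real.exp ((inner ℝ y e' : ℝ)) := by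
            refine setIntegral_mono_set hIcb
              (Filter.Eventually.of_forall fun y => (Real.exp_pos _).le)
              (HasSubset.Subset.eventuallyLE hsub)
        _ ≤ _ := yzL1 hn e' he' (by linarith)
    have h5 : ∫ y, (A.indicator F) y
        ≤ 2 * c0 * Real.sqrt (4*π*(s+1)) ^ (n-1) * Real.exp (s+1) := by
      rw [integral_indicator hA]
      have hIe : IntegrableOn (fun y => Real.exp ((inner ℝ y e : ℝ))) A volume :=
        (ContinuousOn.integrableOn_compact (isCompact_closedBall _ _)
          (Real.continuous_exp.comp (yz_inner_continuous' e)).continuousOn).mono_set hsub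
      have hIe' : IntegrableOn (fun y => Real.exp ((inner ℝ y (-e) : ℝ))) A volume :=
        (ContinuousOn.integrableOn_compact (isCompact_closedBall _ _)
          (Real.continuous_exp.comp (yz_inner_continuous' (-e))).continuousOn).mono_set hsub
      have hsplit : ∫ y in A, F y = (∫ y in A, Real.exp ((inner ℝ y e : ℝ)))
          + ∫ y in A, Real.exp ((inner ℝ y (-e) : ℝ)) := by
        rw [hFdef]
        exact integral_add hIe hIe'
      rw [hsplit]
      have b1 := hbound e he
      have b2 := hbound (-e) (by rw [norm_neg, he])
      linarith
    have h6 : s ^ (n-1) * yzPhi n x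
        ≤ 2 * c0 * Real.sqrt (4*π*(s+1)) ^ (n-1) * Real.exp (s+1) := by
      calc s ^ (n-1) * yzPhi n x ≤ ∫ r in Ioc s (s+1), r ^ (n-1) • G r := h3
        _ = ∫ y, (A.indicator F) y := h4.symm
        _ ≤ _ := h5
    have halg := yz_alg hn hs1 hyz hc00 h6
    calc yzPhi n x ≤ B2 * Real.exp s * (1+s) ^ (-β) := halg
      _ ≤ (B1 + B2 + 1) * Real.exp s * (1+s) ^ (-β) := by
          have hX : (0:ℝ) ≤ Real.exp s * (1+s) ^ (-β) := by positivity
          nlinarith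
      _ = (B1 + B2 + 1) * Real.exp ‖x‖ * (1 + ‖x‖) ^ (-β) := by rw [hsdef]

lemma yz_exp_rpow (a b : ℝ) : (Real.exp a) ^ b = Real.exp (a * b) := by
  rw [Real.rpow_def_of_pos (Real.exp_pos a), Real.log_exp]

lemma yzE0 {β c : ℝ} (hβ : 0 ≤ β) (hc : 0 < c) :
    ∃ K : ℝ, 0 < K ∧ ∀ t : ℝ, 0 ≤ t → (1+t) ^ β ≤ K * Real.exp (c*t) := by
  rcases eq_or_lt_of_le hβ with h0 | hβ'
  · exact ⟨1, one_pos, fun t ht => by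
      rw [← h0, Real.rpow_zero, one_mul]
      exact Real.one_le_exp (by positivity)⟩
  · set ε : ℝ := min 1 (c/β) with hε
    have hε0 : 0 < ε := lt_min one_pos (by positivity)
    have hεβ : ε * β ≤ c := by
      have h1 : ε ≤ c / β := min_le_right _ _
      calc ε * β ≤ (c/β) * β := mul_le_mul_of_nonneg_right h1 hβ
        _ = c := by field_simp
    refine ⟨ε⁻¹ ^ β, Real.rpow_pos_of_pos (by positivity) _, fun t ht => ?_⟩
    have h2 : 1 + t ≤ ε⁻¹ * Real.exp (ε*t) := by
      have h3 : ε * (1 + t) ≤ Real.exp (ε * t) := by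
        have h4 : ε * t + 1 ≤ Real.exp (ε * t) := Real.add_one_le_exp _
        have h5 : ε ≤ 1 := min_le_left _ _
        nlinarith
      calc 1 + t = ε⁻¹ * (ε * (1+t)) := by field_simp
        _ ≤ ε⁻¹ * Real.exp (ε*t) := mul_le_mul_of_nonneg_left h3 (by positivity)
    calc (1+t) ^ β ≤ (ε⁻¹ * Real.exp (ε*t)) ^ β := by
          apply Real.rpow_le_rpow (by positivity) h2 hβ
      _ = ε⁻¹ ^ β * Real.exp (ε*t*β) := by
          rw [Real.mul_rpow (by positivity) (Real.exp_pos _).le, yz_exp_rpow]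
      _ ≤ ε⁻¹ ^ β * Real.exp (c*t) := by
          apply mul_le_mul_of_nonneg_left _ (Real.rpow_pos_of_pos (by positivity) β).le
          apply Real.exp_le_exp.mpr
          calc ε * t * β = (ε * β) * t := by ring
            _ ≤ c * t := mul_le_mul_of_nonneg_right hεβ ht

set_option maxHeartbeats 2000000 in

/-- Yordanov–Zhang estimate: with `ψ₁(x,t) = e^{-t} φ₁(x)`, there is
`C₁ = C₁(n,p,R) > 0` such that for all `t ≥ 0`,
`∫_{|x| ≤ t+R} ψ₁(x,t)^{p/(p-1)} dx ≤ C₁ (1+t)^{(n-1)(1 - p/(2(p-1)))}`. -/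
theorem stmt_4 (n : ℕ) (hn : 1 ≤ n) (p R : ℝ) (hp : 1 < p) (hR : 0 < R) :
    ∃ C₁ : ℝ, 0 < C₁ ∧
      ∀ t : ℝ, 0 ≤ t →
        (∫ x in {x : EuclideanSpace ℝ (Fin n) | ‖x‖ ≤ t + R},
            (Real.exp (-t) * yzPhi n x) ^ (p / (p - 1)))
          ≤ C₁ * (1 + t) ^ (((n : ℝ) - 1) * (1 - p / (2 * (p - 1)))) := by
  haveI := yz_nontrivial hn
  set q : ℝ := p / (p - 1) with hqdef
  have hp1 : 0 < p - 1 := by linarith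
  have hq1 : 1 < q := by
    rw [hqdef, lt_div_iff₀ hp1]; linarith
  have hq0 : 0 < q := lt_trans one_pos hq1
  set β : ℝ := ((n:ℝ) - 1) / 2 with hβdef
  have hn1 : (1:ℝ) ≤ (n:ℝ) := by exact_mod_cast hn
  have hβ0 : 0 ≤ β := by rw [hβdef]; linarith
  set α : ℝ := β * q with hαdef
  have hα0 : 0 ≤ α := by positivity
  set γ : ℝ := ((n:ℝ) - 1) - α with hγdef
  have hγeq : ((n : ℝ) - 1) * (1 - p / (2 * (p - 1))) = γ := by
    rw [hγdef, hαdef, hβdef, hqdef]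
    field_simp
  obtain ⟨B, hB0, hB⟩ := yzPhi_le (n := n) hn
  obtain ⟨K₁, hK₁0, hK₁⟩ := yzE0 (β := α + 1) (by positivity) (half_pos hq0)
  set Vb : ℝ := ((volume : Measure (EuclideanSpace ℝ (Fin n))) (ball 0 1)).toReal with hVb
  have hVb0 : 0 ≤ Vb := ENNReal.toReal_nonneg
  set D : ℝ := B ^ q * (1+R) ^ (n-1) * (2:ℝ) ^ α with hD
  have hD0 : 0 ≤ D := by positivity
  set K₂ : ℝ := D * Real.exp (R*q) / q with hK₂
  set C₁ : ℝ := (n : ℝ) * Vb * (B ^ q * K₁ + K₂) + 1 with hC₁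
  have hK₂0 : 0 ≤ K₂ := by positivity
  have hC₁0 : 0 < C₁ := by positivity
  refine ⟨C₁, hC₁0, fun t ht => ?_⟩
  rw [hγeq]
  set T : ℝ := t + R with hT
  have hT0 : 0 < T := by positivity
  have htT : t/2 ≤ T := by rw [hT]; linarith
  have hγpos : 0 < (1+t) ^ γ := Real.rpow_pos_of_pos (by linarith) _
  have hSet : {x : EuclideanSpace ℝ (Fin n) | ‖x‖ ≤ t + R}
      = closedBall (0 : EuclideanSpace ℝ (Fin n)) T := by
    ext x; simp [mem_closedBall_zero_iff, hT]
  rw [hSet]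
  by_cases hInt : IntegrableOn
      (fun x : EuclideanSpace ℝ (Fin n) => (Real.exp (-t) * yzPhi n x) ^ q)
      (closedBall (0 : EuclideanSpace ℝ (Fin n)) T) volume
  swap
  · rw [integral_undef hInt]
    positivity
  -- majorant
  set f : ℝ → ℝ := fun y =>
    (Iic T).indicator (fun y => B ^ q * Real.exp ((y - t)*q) * (1+y) ^ (-α)) y with hf
  have hcont1D : ContinuousOn
      (fun y : ℝ => (y:ℝ) ^ (n-1) • (B ^ q * Real.exp ((y - t)*q) * (1+y) ^ (-α)))
      (Icc 0 T) := by
    intro y hy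
    have h1y : (0:ℝ) < 1 + y := by have := hy.1; linarith
    apply ContinuousAt.continuousWithinAt
    have hc1 : ContinuousAt (fun y : ℝ => (1+y) ^ (-α)) y :=
      ContinuousAt.rpow_const ((continuous_const.add continuous_id).continuousAt)
        (Or.inl h1y.ne')
    have hc2 : ContinuousAt (fun y : ℝ => Real.exp ((y - t)*q)) y :=
      (Real.continuous_exp.comp ((continuous_id.sub continuous_const).mul
        continuous_const)).continuousAt
    exact ((continuous_pow (n-1)).continuousAt).smul
      ((continuousAt_const.mul hc2).mul hc1)
  have hcontE : Continuous
      (fun x : EuclideanSpace ℝ (Fin n) =>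
        B ^ q * Real.exp ((‖x‖ - t)*q) * (1+‖x‖) ^ (-α)) := by
    have hc1 : Continuous (fun x : EuclideanSpace ℝ (Fin n) => (1+‖x‖) ^ (-α)) :=
      (continuous_const.add continuous_norm).rpow_const
        (fun x => Or.inl (by positivity : (0:ℝ) < 1 + ‖x‖).ne')
    exact (continuous_const.mul (Real.continuous_exp.comp
      ((continuous_norm.sub continuous_const).mul continuous_const))).mul hc1
  have hfnorm : (fun x : EuclideanSpace ℝ (Fin n) => f ‖x‖)
      = (closedBall (0 : EuclideanSpace ℝ (Fin n)) T).indicator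
        (fun x => B ^ q * Real.exp ((‖x‖ - t)*q) * (1+‖x‖) ^ (-α)) := by
    funext x
    by_cases hx : ‖x‖ ≤ T
    · simp only [hf]
      rw [indicator_of_mem (mem_Iic.mpr hx), indicator_of_mem (mem_closedBall_zero_iff.mpr hx)]
    · simp only [hf]
      rw [indicator_of_notMem (by simpa using hx),
        indicator_of_notMem (fun h => hx (mem_closedBall_zero_iff.mp h))]
  have hIntf : Integrable (fun x : EuclideanSpace ℝ (Fin n) => f ‖x‖) volume := by
    rw [hfnorm]
    exact (integrable_indicator_iff measurableSet_closedBall).mpr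
      (ContinuousOn.integrableOn_compact (isCompact_closedBall _ _) hcontE.continuousOn)
  have hfnn : ∀ x : EuclideanSpace ℝ (Fin n), 0 ≤ f ‖x‖ := by
    intro x
    simp only [hf]
    by_cases hx : ‖x‖ ∈ Iic T
    · rw [indicator_of_mem hx]
      have h1x : (0:ℝ) < 1 + ‖x‖ := by positivity
      positivity
    · rw [indicator_of_notMem hx]
  -- pointwise bound
  have hpoint : ∀ x ∈ closedBall (0 : EuclideanSpace ℝ (Fin n)) T,
      (Real.exp (-t) * yzPhi n x) ^ q ≤ f ‖x‖ := by
    intro x hx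
    have hxT : ‖x‖ ≤ T := mem_closedBall_zero_iff.mp hx
    simp only [hf]
    rw [indicator_of_mem (mem_Iic.mpr hxT)]
    have hb1 : Real.exp (-t) * yzPhi n x
        ≤ B * Real.exp (‖x‖ - t) * (1+‖x‖) ^ (-β) := by
      have := hB x
      have h2 : Real.exp (-t) * yzPhi n x
          ≤ Real.exp (-t) * (B * Real.exp ‖x‖ * (1 + ‖x‖) ^ (-β)) :=
        mul_le_mul_of_nonneg_left this (Real.exp_pos _).le
      calc Real.exp (-t) * yzPhi n x
          ≤ Real.exp (-t) * (B * Real.exp ‖x‖ * (1 + ‖x‖) ^ (-β)) := h2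
        _ = B * Real.exp (‖x‖ - t) * (1+‖x‖) ^ (-β) := by
            rw [show ‖x‖ - t = -t + ‖x‖ by ring, Real.exp_add]
            ring
    calc (Real.exp (-t) * yzPhi n x) ^ q
        ≤ (B * Real.exp (‖x‖ - t) * (1+‖x‖) ^ (-β)) ^ q := by
          apply Real.rpow_le_rpow
            (mul_nonneg (Real.exp_pos _).le (yzPhi_nonneg x)) hb1 hq0.le
      _ = B ^ q * Real.exp ((‖x‖ - t)*q) * (1+‖x‖) ^ (-α) := by
          have h1x : (0:ℝ) < 1 + ‖x‖ := by positivity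
          rw [Real.mul_rpow (by positivity) (by positivity),
            Real.mul_rpow (by positivity) (Real.exp_pos _).le, yz_exp_rpow,
            ← Real.rpow_mul h1x.le,
            show -β * q = -α by rw [hαdef]; ring]
  -- chain
  calc (∫ x in closedBall (0 : EuclideanSpace ℝ (Fin n)) T,
          (Real.exp (-t) * yzPhi n x) ^ q)
      ≤ ∫ x in closedBall (0 : EuclideanSpace ℝ (Fin n)) T, f ‖x‖ :=
        setIntegral_mono_on hInt hIntf.integrableOn measurableSet_closedBall hpoint
    _ ≤ ∫ x : EuclideanSpace ℝ (Fin n), f ‖x‖ :=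
        setIntegral_le_integral hIntf (Filter.Eventually.of_forall fun x => hfnn x)
    _ = (n:ℝ) * Vb * ∫ y in Ioi (0:ℝ), y ^ (n-1) • f y := by
        rw [integral_fun_norm_addHaar (volume : Measure (EuclideanSpace ℝ (Fin n))) f]
        simp only [finrank_euclideanSpace_fin, nsmul_eq_mul, smul_eq_mul]
        change (n:ℝ) * (Vb * _) = _
        ring
    _ ≤ (n:ℝ) * Vb * ((B ^ q * K₁ + K₂) * (1+t) ^ γ) := by
        apply mul_le_mul_of_nonneg_left _ (by positivity)
        set h' : ℝ → ℝ :=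
          fun y => y ^ (n-1) • (B ^ q * Real.exp ((y - t)*q) * (1+y) ^ (-α)) with hh'
        have h1t : (0:ℝ) < 1 + t := by linarith
        have e1 : ∫ y in Ioi (0:ℝ), y ^ (n-1) • f y = ∫ y in Ioc 0 T, h' y := by
          have hcong : ∀ y ∈ Ioi (0:ℝ), y ^ (n-1) • f y = (Iic T).indicator h' y := by
            intro y _
            simp only [hf, hh']
            by_cases hmem : y ∈ Iic T
            · rw [indicator_of_mem hmem, indicator_of_mem hmem]
            · rw [indicator_of_notMem hmem, indicator_of_notMem hmem, smul_zero]
          rw [setIntegral_congr_fun measurableSet_Ioi hcong,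
            setIntegral_indicator measurableSet_Iic, Ioi_inter_Iic]
        rw [e1]
        have hI : IntegrableOn h' (Ioc 0 T) volume :=
          (ContinuousOn.integrableOn_compact isCompact_Icc hcont1D).mono_set
            Ioc_subset_Icc_self
        have hI1 : IntegrableOn h' (Ioc 0 (t/2)) volume :=
          hI.mono_set (Ioc_subset_Ioc_right htT)
        have hI2 : IntegrableOn h' (Ioc (t/2) T) volume :=
          hI.mono_set (Ioc_subset_Ioc_left (by positivity))
        have hsplit : ∫ y in Ioc 0 T, h' y
            = (∫ y in Ioc 0 (t/2), h' y) + ∫ y in Ioc (t/2) T, h' y := by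
          rw [← setIntegral_union (Ioc_disjoint_Ioc_of_le le_rfl) measurableSet_Ioc hI1 hI2,
            Ioc_union_Ioc_eq_Ioc (by positivity) htT]
        -- piece 1
        have hnpow : ((1+t):ℝ) ^ n = (1+t) ^ γ * (1+t) ^ (α+1) := by
          rw [← Real.rpow_natCast (1+t) n, ← Real.rpow_add h1t]
          congr 1
          rw [hγdef]; ring
        have hc2 : Real.exp (-(t/2)*q) * (1+t) ^ (α+1) ≤ K₁ := by
          have hk := hK₁ t ht
          have hee : Real.exp (-(t/2)*q) * (K₁ * Real.exp (q/2*t)) = K₁ := by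
            rw [mul_comm K₁, ← mul_assoc, ← Real.exp_add,
              show -(t/2)*q + q/2*t = 0 by ring, Real.exp_zero, one_mul]
          calc Real.exp (-(t/2)*q) * (1+t) ^ (α+1)
              ≤ Real.exp (-(t/2)*q) * (K₁ * Real.exp (q/2*t)) :=
                mul_le_mul_of_nonneg_left hk (Real.exp_pos _).le
            _ = K₁ := hee
        have hp1b : ∫ y in Ioc 0 (t/2), h' y ≤ B ^ q * K₁ * (1+t) ^ γ := by
          have hstep : ∀ y ∈ Ioc 0 (t/2),
              h' y ≤ B ^ q * Real.exp (-(t/2)*q) * (1+t) ^ (n-1) := by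
            intro y hy
            have hy0 : 0 < y := hy.1
            have hy2 : y ≤ t/2 := hy.2
            have e2 : Real.exp ((y - t)*q) ≤ Real.exp (-(t/2)*q) :=
              Real.exp_le_exp.mpr (mul_le_mul_of_nonneg_right (by linarith) hq0.le)
            have e3 : (1+y) ^ (-α) ≤ 1 :=
              Real.rpow_le_one_of_one_le_of_nonpos (by linarith) (by linarith)
            have e4 : y ^ (n-1) ≤ (1+t) ^ (n-1) :=
              pow_le_pow_left₀ hy0.le (by linarith) _
            have e5 : (0:ℝ) < (1+y) ^ (-α) := Real.rpow_pos_of_pos (by linarith) _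
            simp only [hh', smul_eq_mul]
            calc y ^ (n-1) * (B ^ q * Real.exp ((y - t)*q) * (1+y) ^ (-α))
                ≤ (1+t) ^ (n-1) * (B ^ q * Real.exp (-(t/2)*q) * 1) := by
                  apply mul_le_mul e4 _ (by positivity) (by positivity)
                  apply mul_le_mul (mul_le_mul_of_nonneg_left e2 (by positivity)) e3
                    e5.le (by positivity)
              _ = B ^ q * Real.exp (-(t/2)*q) * (1+t) ^ (n-1) := by ring
          calc ∫ y in Ioc 0 (t/2), h' y
              ≤ ∫ _y in Ioc 0 (t/2), (B ^ q * Real.exp (-(t/2)*q) * (1+t) ^ (n-1)) :=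
                setIntegral_mono_on hI1
                  (integrableOn_const measure_Ioc_lt_top.ne)
                  measurableSet_Ioc hstep
            _ = B ^ q * Real.exp (-(t/2)*q) * (1+t) ^ (n-1) * (t/2) := by
                rw [setIntegral_const, Real.volume_real_Ioc_of_le (by positivity), smul_eq_mul,
                  show t/2 - 0 = t/2 by ring]
                ring
            _ ≤ B ^ q * Real.exp (-(t/2)*q) * ((1+t) ^ (n-1) * (1+t)) := by
                rw [mul_assoc (B ^ q * Real.exp (-(t/2)*q))]
                apply mul_le_mul_of_nonneg_left _ (by positivity)
                apply mul_le_mul_of_nonneg_left (by linarith) (by positivity)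
            _ = B ^ q * (Real.exp (-(t/2)*q) * ((1+t) ^ γ * (1+t) ^ (α+1))) := by
                rw [← pow_succ, show n - 1 + 1 = n from Nat.succ_pred_eq_of_pos hn, hnpow]
                ring
            _ ≤ B ^ q * ((1+t) ^ γ * K₁) := by
                apply mul_le_mul_of_nonneg_left _ (by positivity)
                calc Real.exp (-(t/2)*q) * ((1+t) ^ γ * (1+t) ^ (α+1))
                    = (1+t) ^ γ * (Real.exp (-(t/2)*q) * (1+t) ^ (α+1)) := by ring
                  _ ≤ (1+t) ^ γ * K₁ := mul_le_mul_of_nonneg_left hc2 hγpos.le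
            _ = B ^ q * K₁ * (1+t) ^ γ := by ring
        -- piece 2
        have hγpow : ((1+t):ℝ) ^ (n-1) * (1+t) ^ (-α) = (1+t) ^ γ := by
          rw [← Real.rpow_natCast (1+t) (n-1), ← Real.rpow_add h1t]
          congr 1
          rw [hγdef, Nat.cast_sub hn, Nat.cast_one]
          ring
        have hexpint : ∫ y in Ioc (t/2) T, Real.exp ((y - t)*q) ≤ Real.exp (R*q)/q := by
          rw [← intervalIntegral.integral_of_le htT]
          have hderiv : ∀ y ∈ uIcc (t/2) T,
              HasDerivAt (fun y : ℝ => Real.exp ((y - t)*q) / q)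
                ((fun y : ℝ => Real.exp ((y - t)*q)) y) y := by
            intro y _
            have h1 : HasDerivAt (fun y : ℝ => (y - t)*q) q y := by
              simpa using ((hasDerivAt_id y).sub_const t).mul_const q
            have h3 := (h1.exp).div_const q
            simpa [mul_div_cancel_right₀ _ hq0.ne'] using h3
          have hint : IntervalIntegrable (fun y : ℝ => Real.exp ((y - t)*q))
              volume (t/2) T := by
            apply Continuous.intervalIntegrable
            exact Real.continuous_exp.comp ((continuous_id.sub continuous_const).mul
              continuous_const)
          have key := intervalIntegral.integral_eq_sub_of_hasDerivAt hderiv hint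
          rw [key, show T - t = R from by rw [hT]; ring]
          have : 0 < Real.exp ((t/2 - t)*q)/q := by positivity
          linarith
        have hp2b : ∫ y in Ioc (t/2) T, h' y ≤ K₂ * (1+t) ^ γ := by
          set C2 : ℝ := D * (1+t) ^ (n-1) * (1+t) ^ (-α) with hC2
          have hC2nn : 0 ≤ C2 := by positivity
          have hstep2 : ∀ y ∈ Ioc (t/2) T, h' y ≤ C2 * Real.exp ((y - t)*q) := by
            intro y hy
            have hy0 : 0 < y := lt_of_le_of_lt (by positivity) hy.1
            have e4 : y ^ (n-1) ≤ (1+R) ^ (n-1) * (1+t) ^ (n-1) := by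
              rw [← mul_pow]
              apply pow_le_pow_left₀ hy0.le
              calc y ≤ T := hy.2
                _ = t + R := hT
                _ ≤ (1+R) * (1+t) := by nlinarith
            have e5 : (1+y) ^ (-α) ≤ (2:ℝ) ^ α * (1+t) ^ (-α) := by
              have hyt : (1+t)/2 ≤ 1+y := by
                have := hy.1; linarith
              have e6 : (1+y) ^ (-α) ≤ ((1+t)/2) ^ (-α) :=
                Real.rpow_le_rpow_of_nonpos (by positivity) hyt (by linarith)
              have e7 : ((1+t)/2 : ℝ) ^ (-α) = (2:ℝ) ^ α * (1+t) ^ (-α) := by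
                rw [Real.div_rpow h1t.le (by norm_num : (0:ℝ) ≤ 2), Real.rpow_neg
                  (by norm_num : (0:ℝ) ≤ 2), div_inv_eq_mul]
                ring
              rw [← e7]; exact e6
            simp only [hh', smul_eq_mul]
            calc y ^ (n-1) * (B ^ q * Real.exp ((y - t)*q) * (1+y) ^ (-α))
                ≤ ((1+R) ^ (n-1) * (1+t) ^ (n-1))
                    * (B ^ q * Real.exp ((y - t)*q) * ((2:ℝ) ^ α * (1+t) ^ (-α))) := by
                  apply mul_le_mul e4 (mul_le_mul_of_nonneg_left e5 (by positivity))
                    (by positivity) (by positivity)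
              _ = C2 * Real.exp ((y - t)*q) := by
                  rw [hC2, hD]; ring
          calc ∫ y in Ioc (t/2) T, h' y
              ≤ ∫ y in Ioc (t/2) T, C2 * Real.exp ((y - t)*q) := by
                refine setIntegral_mono_on hI2 ?_ measurableSet_Ioc hstep2
                apply Continuous.integrableOn_Ioc
                exact continuous_const.mul (Real.continuous_exp.comp
                  ((continuous_id.sub continuous_const).mul continuous_const))
            _ = C2 * ∫ y in Ioc (t/2) T, Real.exp ((y - t)*q) := integral_const_mul _ _
            _ ≤ C2 * (Real.exp (R*q)/q) := mul_le_mul_of_nonneg_left hexpint hC2nn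
            _ = K₂ * (1+t) ^ γ := by
                rw [hC2, hK₂, ← hγpow]; ring
        rw [hsplit]
        calc (∫ y in Ioc 0 (t/2), h' y) + ∫ y in Ioc (t/2) T, h' y
            ≤ B ^ q * K₁ * (1+t) ^ γ + K₂ * (1+t) ^ γ := add_le_add hp1b hp2b
          _ = (B ^ q * K₁ + K₂) * (1+t) ^ γ := by ring
    _ ≤ C₁ * (1+t) ^ γ := by
        rw [hC₁]
        have : (n:ℝ) * Vb * ((B ^ q * K₁ + K₂) * (1+t) ^ γ)
            = ((n:ℝ) * Vb * (B ^ q * K₁ + K₂)) * (1+t) ^ γ := by ring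
        rw [this]
        apply mul_le_mul_of_nonneg_right _ hγpos.le
        linarith
end

section
/- Let μ₁, μ₂ > 0, β > 1 and α > 1. Let F ∈ C²([0,∞)) and let G : [0,∞) → ℝ be continuous with G(t) ≥ 0 for all t ≥ 0. Assume that for all t ≥ 0, F''(t) + μ₁(1+t)^{−β} F'(t) = μ₂(1+t)^{−(α+1)} F(t) + G(t), and that F(0) ≥ 0, F'(0) ≥ 0 and F(0) + F'(0) > 0. Then F(t) > 0 for all t > 0. -/
open Set

/-- Key step: if `F ≥ 0` on `[0, b)` then `F b > 0`. -/
lemma stmt_5_key (μ₁ μ₂ β α : ℝ) (hμ₁ : 0 < μ₁) (hμ₂ : 0 < μ₂)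
    (hβ : 1 < β)
    (F F' F'' G : ℝ → ℝ)
    (hF : ∀ t ∈ Ici (0 : ℝ), HasDerivWithinAt F (F' t) (Ici 0) t)
    (hF' : ∀ t ∈ Ici (0 : ℝ), HasDerivWithinAt F' (F'' t) (Ici 0) t)
    (hGpos : ∀ t : ℝ, 0 ≤ t → 0 ≤ G t)
    (heq : ∀ t : ℝ, 0 ≤ t →
      F'' t + μ₁ / (1 + t) ^ β * F' t = μ₂ / (1 + t) ^ (α + 1) * F t + G t)
    (hF0 : 0 ≤ F 0) (hF'0 : 0 ≤ F' 0) (hsum : 0 < F 0 + F' 0)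
    (b : ℝ) (hb : 0 < b) (hFge : ∀ s : ℝ, 0 ≤ s → s < b → 0 ≤ F s) :
    0 < F b := by
  set φ : ℝ → ℝ := fun t => μ₁ / (1 - β) * ((1 + t) ^ (1 - β) - 1) with hφdef
  have hβ0 : (1 : ℝ) - β ≠ 0 := by intro h; linarith
  have hφd : ∀ t : ℝ, 0 ≤ t → HasDerivAt φ (μ₁ / (1 + t) ^ β) t := by
    intro t ht
    have h1 : (0 : ℝ) < 1 + t := by linarith
    have h2 : HasDerivAt (fun s : ℝ => 1 + s) 1 t := by
      simpa using (hasDerivAt_id t).const_add 1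
    have h3 : HasDerivAt (fun s : ℝ => (1 + s) ^ (1 - β))
        ((1 - β) * (1 + t) ^ (1 - β - 1) * 1) t :=
      (Real.hasDerivAt_rpow_const (Or.inl h1.ne')).comp t h2
    have h4 := (h3.sub_const 1).const_mul (μ₁ / (1 - β))
    convert h4 using 1
    case e'_4 => rfl
    case e'_5 => rfl
    have he : (1 : ℝ) - β - 1 = -β := by ring
    rw [he, Real.rpow_neg h1.le]
    have hne : (1 + t) ^ β ≠ 0 := (Real.rpow_pos_of_pos h1 β).ne'
    field_simp
  have hφ0 : φ 0 = 0 := by simp [hφdef]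
  set Hf : ℝ → ℝ := fun t => F' t * Real.exp (φ t) with hHfdef
  have hHd : ∀ t : ℝ, 0 ≤ t → HasDerivWithinAt Hf
      (Real.exp (φ t) * (μ₂ / (1 + t) ^ (α + 1) * F t + G t)) (Ici 0) t := by
    intro t ht
    have h1 := (hF' t ht).mul ((hφd t ht).exp.hasDerivWithinAt)
    convert h1 using 1
    case e'_4 => rfl
    case e'_5 => rfl
    case e'_8 => rfl
    rw [← heq t ht]; ring
  have hsubIoo : Ioo (0 : ℝ) b ⊆ Ici 0 := fun x hx => le_of_lt hx.1
  have hHcont : ContinuousOn Hf (Icc 0 b) := fun x hx =>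
    ((hHd x hx.1).continuousWithinAt).mono Icc_subset_Ici_self
  have hHmono : MonotoneOn Hf (Icc 0 b) := by
    refine monotoneOn_of_hasDerivWithinAt_nonneg
      (f' := fun t => Real.exp (φ t) * (μ₂ / (1 + t) ^ (α + 1) * F t + G t))
      (convex_Icc 0 b) hHcont (fun x hx => ?_) (fun x hx => ?_)
    · rw [interior_Icc] at hx ⊢
      exact (hHd x hx.1.le).mono hsubIoo
    · rw [interior_Icc] at hx
      have h1 : 0 < (1 + x) ^ (α + 1) := Real.rpow_pos_of_pos (by linarith [hx.1]) _
      exact mul_nonneg (Real.exp_pos _).le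
        (add_nonneg (mul_nonneg (div_nonneg hμ₂.le h1.le) (hFge x hx.1.le hx.2))
          (hGpos x hx.1.le))
  have hH0 : Hf 0 = F' 0 := by simp [hHfdef, hφ0]
  have hHge : ∀ s ∈ Icc (0 : ℝ) b, F' 0 ≤ Hf s := fun s hs => by
    rw [← hH0]; exact hHmono (left_mem_Icc.mpr hb.le) hs hs.1
  have hFcont : ContinuousOn F (Icc 0 b) := fun x hx =>
    (hF x hx.1).continuousWithinAt.mono Icc_subset_Ici_self
  rcases eq_or_lt_of_le hF0 with h0 | h0
  · -- F 0 = 0, so F' 0 > 0 and F is strictly monotone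
    have hF'0pos : 0 < F' 0 := by linarith
    have hstrict : StrictMonoOn F (Icc 0 b) := by
      refine strictMonoOn_of_hasDerivWithinAt_pos (f' := F') (convex_Icc 0 b) hFcont
        (fun x hx => ?_) (fun x hx => ?_)
      · rw [interior_Icc] at hx ⊢
        exact (hF x hx.1.le).mono hsubIoo
      · rw [interior_Icc] at hx
        have h1 := hHge x ⟨hx.1.le, hx.2.le⟩
        have h2 : 0 < F' x * Real.exp (φ x) := lt_of_lt_of_le hF'0pos h1
        have he := Real.exp_pos (φ x)
        by_contra hneg
        push_neg at hneg
        exact absurd h2 (not_lt.mpr (mul_nonpos_of_nonpos_of_nonneg hneg he.le))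
    have := hstrict (left_mem_Icc.mpr hb.le) (right_mem_Icc.mpr hb.le) hb
    linarith
  · -- F 0 > 0, F is monotone
    have hmono : MonotoneOn F (Icc 0 b) := by
      refine monotoneOn_of_hasDerivWithinAt_nonneg (f' := F') (convex_Icc 0 b) hFcont
        (fun x hx => ?_) (fun x hx => ?_)
      · rw [interior_Icc] at hx ⊢
        exact (hF x hx.1.le).mono hsubIoo
      · rw [interior_Icc] at hx
        have h1 := hHge x ⟨hx.1.le, hx.2.le⟩
        have h2 : 0 ≤ F' x * Real.exp (φ x) := le_trans hF'0 h1
        have he := Real.exp_pos (φ x)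
        by_contra hneg
        push_neg at hneg
        exact absurd h2 (not_le.mpr (mul_neg_of_neg_of_pos hneg he))
    have := hmono (left_mem_Icc.mpr hb.le) (right_mem_Icc.mpr hb.le) hb.le
    linarith

/-- Comparison argument: if `F ∈ C²([0,∞))` satisfies
`F'' + μ₁(1+t)^{-β} F' = μ₂(1+t)^{-(α+1)} F + G` with `G ≥ 0` continuous,
`F(0) ≥ 0`, `F'(0) ≥ 0` and `F(0) + F'(0) > 0`, then `F(t) > 0` for all `t > 0`. -/
theorem stmt_5 (μ₁ μ₂ β α : ℝ) (hμ₁ : 0 < μ₁) (hμ₂ : 0 < μ₂)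
    (hβ : 1 < β) (hα : 1 < α)
    (F F' F'' G : ℝ → ℝ)
    (hF : ∀ t ∈ Ici (0 : ℝ), HasDerivWithinAt F (F' t) (Ici 0) t)
    (hF' : ∀ t ∈ Ici (0 : ℝ), HasDerivWithinAt F' (F'' t) (Ici 0) t)
    (hF''cont : ContinuousOn F'' (Ici 0))
    (hGcont : ContinuousOn G (Ici 0)) (hGpos : ∀ t : ℝ, 0 ≤ t → 0 ≤ G t)
    (heq : ∀ t : ℝ, 0 ≤ t →
      F'' t + μ₁ / (1 + t) ^ β * F' t = μ₂ / (1 + t) ^ (α + 1) * F t + G t)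
    (hF0 : 0 ≤ F 0) (hF'0 : 0 ≤ F' 0) (hsum : 0 < F 0 + F' 0) :
    ∀ t : ℝ, 0 < t → 0 < F t := by
  have key := stmt_5_key μ₁ μ₂ β α hμ₁ hμ₂ hβ F F' F'' G hF hF' hGpos heq hF0 hF'0 hsum
  -- First show F ≥ 0 on [0, ∞)
  have hFnn : ∀ s : ℝ, 0 ≤ s → 0 ≤ F s := by
    by_contra hcon
    push_neg at hcon
    obtain ⟨s₀, hs₀, hFs₀⟩ := hcon
    set A : Set ℝ := {s | 0 ≤ s ∧ F s < 0} with hAdef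
    have hAne : A.Nonempty := ⟨s₀, hs₀, hFs₀⟩
    have hAbd : BddBelow A := ⟨0, fun x hx => hx.1⟩
    set t₀ := sInf A with ht₀def
    have ht₀0 : 0 ≤ t₀ := le_csInf hAne fun x hx => hx.1
    have hFge : ∀ s : ℝ, 0 ≤ s → s < t₀ → 0 ≤ F s := by
      intro s hs hst
      by_contra h
      exact absurd (csInf_le hAbd ⟨hs, not_le.mp h⟩) (not_le.mpr hst)
    -- F t₀ ≤ 0 by continuity
    have hFt₀ : F t₀ ≤ 0 := by
      by_contra h
      push_neg at h
      have hc : ContinuousWithinAt F (Ici 0) t₀ := (hF t₀ ht₀0).continuousWithinAt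
      have hev : ∀ᶠ x in nhdsWithin t₀ (Ici 0), 0 < F x :=
        hc.eventually_const_lt h
      obtain ⟨ε, hε, hball⟩ := Metric.mem_nhdsWithin_iff.mp hev
      obtain ⟨a, ha, halt⟩ := exists_lt_of_csInf_lt hAne
        (show sInf A < t₀ + ε by rw [← ht₀def]; linarith)
      have hat₀ : t₀ ≤ a := csInf_le hAbd ha
      have hdist : a ∈ Metric.ball t₀ ε := by
        rw [Metric.mem_ball, Real.dist_eq, abs_of_nonneg (by linarith : (0:ℝ) ≤ a - t₀)]
        linarith
      have hpos : 0 < F a := hball ⟨hdist, ha.1⟩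
      exact absurd ha.2 (not_lt.mpr hpos.le)
    -- t₀ > 0
    have ht₀pos : 0 < t₀ := by
      rcases eq_or_lt_of_le hF0 with h0 | h0
      · -- F 0 = 0, F' 0 > 0 : use the derivative to show F > 0 near 0
        have hF'0pos : 0 < F' 0 := by linarith
        have hslope := hasDerivWithinAt_iff_tendsto_slope.mp (hF 0 self_mem_Ici)
        have hev : ∀ᶠ x in nhdsWithin 0 (Ici 0 \ {0}), 0 < slope F 0 x :=
          hslope.eventually (eventually_gt_nhds hF'0pos)
        obtain ⟨ε, hε, hball⟩ := Metric.mem_nhdsWithin_iff.mp hev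
        refine lt_of_lt_of_le hε (le_csInf hAne fun a ha => ?_)
        by_contra hlt
        push_neg at hlt
        have ha0 : 0 < a := by
          rcases eq_or_lt_of_le ha.1 with h | h
          · exact absurd ha.2 (by rw [← h]; linarith)
          · exact h
        have hdist : a ∈ Metric.ball (0 : ℝ) ε := by
          rw [Metric.mem_ball, Real.dist_eq, sub_zero, abs_of_nonneg ha.1]
          exact hlt
        have hsl : 0 < slope F 0 a := hball ⟨hdist, ha.1, by simp [ha0.ne']⟩
        rw [slope_def_field] at hsl
        have : 0 < F a - F 0 := by
          have hapos : 0 < a - 0 := by linarith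
          exact (div_pos_iff.mp hsl).elim (fun h => h.1)
            (fun h => absurd hapos (not_lt.mpr h.2.le))
        have : 0 < F a := by rw [← h0] at this; linarith
        exact absurd ha.2 (not_lt.mpr this.le)
      · -- F 0 > 0 : F > 0 near 0 by continuity
        have hc : ContinuousWithinAt F (Ici 0) 0 := (hF 0 self_mem_Ici).continuousWithinAt
        have hev : ∀ᶠ x in nhdsWithin 0 (Ici 0), 0 < F x := hc.eventually_const_lt h0
        obtain ⟨ε, hε, hball⟩ := Metric.mem_nhdsWithin_iff.mp hev
        refine lt_of_lt_of_le hε (le_csInf hAne fun a ha => ?_)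
        by_contra hlt
        push_neg at hlt
        have hdist : a ∈ Metric.ball (0 : ℝ) ε := by
          rw [Metric.mem_ball, Real.dist_eq, sub_zero, abs_of_nonneg ha.1]
          exact hlt
        have hpos : 0 < F a := hball ⟨hdist, ha.1⟩
        exact absurd ha.2 (not_lt.mpr hpos.le)
    have := key t₀ ht₀pos hFge
    linarith
  intro t ht
  exact key t ht fun s hs _ => hFnn s hs
end

section
/- Let μ₁, μ₂ > 0, β > 1 and α > 1, and set m(t) := exp(μ₁(1+t)^{1−β}/(1−β)). Let F ∈ C²([0,∞)) and let G : [0,∞) → ℝ be continuous with G(t) ≥ 0 for all t ≥ 0. Assume that for all t ≥ 0, F''(t) + μ₁(1+t)^{−β} F'(t) = μ₂(1+t)^{−(α+1)} F(t) + G(t), and that F(0) ≥ 0, F'(0) ≥ 0 and F(0) + F'(0) > 0. Then for all t ≥ 0, F'(t) ≥ m(0) ∫₀ᵗ G(s) ds. -/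
open Set

/-- With `m(t) = exp(μ₁(1+t)^{1-β}/(1-β))`: if `F ∈ C²([0,∞))` satisfies
`F'' + μ₁(1+t)^{-β} F' = μ₂(1+t)^{-(α+1)} F + G` with `G ≥ 0` continuous,
`F(0) ≥ 0`, `F'(0) ≥ 0` and `F(0) + F'(0) > 0`, then
`F'(t) ≥ m(0) ∫₀ᵗ G(s) ds` for all `t ≥ 0`. -/
theorem stmt_6 (μ₁ μ₂ β α : ℝ) (hμ₁ : 0 < μ₁) (hμ₂ : 0 < μ₂)
    (hβ : 1 < β) (hα : 1 < α)
    (F F' F'' G : ℝ → ℝ)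
    (hF : ∀ t ∈ Ici (0 : ℝ), HasDerivWithinAt F (F' t) (Ici 0) t)
    (hF' : ∀ t ∈ Ici (0 : ℝ), HasDerivWithinAt F' (F'' t) (Ici 0) t)
    (hF''cont : ContinuousOn F'' (Ici 0))
    (hGcont : ContinuousOn G (Ici 0)) (hGpos : ∀ t : ℝ, 0 ≤ t → 0 ≤ G t)
    (heq : ∀ t : ℝ, 0 ≤ t →
      F'' t + μ₁ / (1 + t) ^ β * F' t = μ₂ / (1 + t) ^ (α + 1) * F t + G t)
    (hF0 : 0 ≤ F 0) (hF'0 : 0 ≤ F' 0) (hsum : 0 < F 0 + F' 0) :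
    ∀ t : ℝ, 0 ≤ t →
      Real.exp (μ₁ * (1 + (0 : ℝ)) ^ (1 - β) / (1 - β)) * ∫ s in (0 : ℝ)..t, G s
        ≤ F' t := by
  have hβ0 : 1 - β < 0 := by linarith
  have hβne : (1 - β) ≠ 0 := ne_of_lt hβ0
  set m : ℝ → ℝ := fun t => Real.exp (μ₁ * (1 + t) ^ (1 - β) / (1 - β)) with hmdef
  have hmpos : ∀ t, 0 < m t := fun t => Real.exp_pos _
  have hbase : ∀ t : ℝ, 0 ≤ t → (0 : ℝ) < 1 + t := fun t ht => by linarith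
  have hm0le : ∀ t : ℝ, 0 ≤ t → m 0 ≤ m t := by
    intro t ht
    apply Real.exp_le_exp.mpr
    have h1 : (1 + t : ℝ) ^ (1 - β) ≤ 1 :=
      Real.rpow_le_one_of_one_le_of_nonpos (by linarith) hβ0.le
    have h10 : ((1 : ℝ) + 0) ^ (1 - β) = 1 := by norm_num
    rw [h10, div_eq_mul_inv, div_eq_mul_inv]
    exact mul_le_mul_of_nonpos_right (by nlinarith) (inv_nonpos.mpr hβ0.le)
  have hmle1 : ∀ t : ℝ, 0 ≤ t → m t ≤ 1 := by
    intro t ht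
    apply Real.exp_le_one_iff.mpr
    apply div_nonpos_of_nonneg_of_nonpos _ hβ0.le
    exact mul_nonneg hμ₁.le (Real.rpow_pos_of_pos (hbase t ht) _).le
  -- derivative of m
  have hmderiv : ∀ t : ℝ, 0 ≤ t → HasDerivWithinAt m (μ₁ / (1 + t) ^ β * m t) (Ici 0) t := by
    intro t ht
    have hne : (1 + t : ℝ) ≠ 0 := (hbase t ht).ne'
    have h1 : HasDerivAt (fun x : ℝ => (1 + x) ^ (1 - β))
        ((1 - β) * (1 + t) ^ (1 - β - 1) * 1) t :=
      (Real.hasDerivAt_rpow_const (Or.inl hne)).comp t ((hasDerivAt_id t).const_add 1)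
    have h2 : HasDerivAt (fun x : ℝ => μ₁ * (1 + x) ^ (1 - β) / (1 - β))
        (μ₁ * ((1 - β) * (1 + t) ^ (1 - β - 1) * 1) / (1 - β)) t :=
      (h1.const_mul μ₁).div_const _
    have h3 := h2.exp
    have hpowne : ((1 + t : ℝ)) ^ β ≠ 0 := (Real.rpow_pos_of_pos (hbase t ht) β).ne'
    have harith : Real.exp (μ₁ * (1 + t) ^ (1 - β) / (1 - β)) *
        (μ₁ * ((1 - β) * (1 + t) ^ (1 - β - 1) * 1) / (1 - β))
        = μ₁ / (1 + t) ^ β * m t := by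
      have hpow : (1 + t : ℝ) ^ (1 - β - 1) = ((1 + t) ^ β)⁻¹ := by
        rw [show (1 - β - 1 : ℝ) = -β by ring, Real.rpow_neg (hbase t ht).le]
      rw [hmdef]
      simp only [hpow]
      field_simp
    exact (harith ▸ h3).hasDerivWithinAt
  set H : ℝ → ℝ := fun t => m t * F' t with hHdef
  set H' : ℝ → ℝ := fun t => m t * (μ₂ / (1 + t) ^ (α + 1) * F t + G t) with hH'def
  have hHderiv : ∀ t : ℝ, 0 ≤ t → HasDerivWithinAt H (H' t) (Ici 0) t := by
    intro t ht
    have h := (hmderiv t ht).mul (hF' t ht)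
    have he : μ₁ / (1 + t) ^ β * m t * F' t + m t * F'' t = H' t := by
      simp only [hH'def]
      rw [← heq t ht]; ring
    rw [← he]
    exact h
  have hFcont : ContinuousOn F (Ici 0) := fun t ht => (hF t ht).continuousWithinAt
  have hF'cont : ContinuousOn F' (Ici 0) := fun t ht => (hF' t ht).continuousWithinAt
  have hmcont : ContinuousOn m (Ici 0) := fun t ht => (hmderiv t ht).continuousWithinAt
  have hrpowcont : ContinuousOn (fun t : ℝ => μ₂ / (1 + t) ^ (α + 1)) (Ici 0) := by
    apply continuousOn_const.div
    · exact (continuousOn_const.add continuousOn_id).rpow_const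
        (fun t ht => Or.inl (hbase t ht).ne')
    · exact fun t ht => (Real.rpow_pos_of_pos (hbase t ht) _).ne'
  have hH'cont : ContinuousOn H' (Ici 0) := hmcont.mul ((hrpowcont.mul hFcont).add hGcont)
  -- FTC helper
  have ftc : ∀ (f g : ℝ → ℝ), (∀ s ∈ Ici (0 : ℝ), HasDerivWithinAt f (g s) (Ici 0) s) →
      ContinuousOn g (Ici 0) → ∀ t : ℝ, 0 ≤ t → ∫ s in (0 : ℝ)..t, g s = f t - f 0 := by
    intro f g hf hg t ht
    apply intervalIntegral.integral_eq_sub_of_hasDeriv_right_of_le ht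
    · have hc : ContinuousOn f (Ici 0) := fun s hs => (hf s hs).continuousWithinAt
      exact hc.mono Icc_subset_Ici_self
    · intro x hx
      exact (hf x hx.1.le).mono (fun y hy => le_trans hx.1.le (le_of_lt hy))
    · exact (hg.mono (by rw [uIcc_of_le ht]; exact Icc_subset_Ici_self)).intervalIntegrable
  -- nonnegativity of F
  have hFnonneg : ∀ t : ℝ, 0 ≤ t → 0 ≤ F t := by
    by_contra hcon
    push_neg at hcon
    obtain ⟨a, ha0, haF⟩ := hcon
    set B : Set ℝ := {t | 0 ≤ t ∧ F t < 0} with hBdef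
    have hBne : B.Nonempty := ⟨a, ha0, haF⟩
    have hBbdd : BddBelow B := ⟨0, fun x hx => hx.1⟩
    set c := sInf B with hcdef
    have hc0 : 0 ≤ c := le_csInf hBne (fun x hx => hx.1)
    have hlt : ∀ s : ℝ, 0 ≤ s → s < c → 0 ≤ F s := by
      intro s hs hsc
      by_contra h
      push_neg at h
      exact absurd (csInf_le hBbdd ⟨hs, h⟩) (not_le.mpr hsc)
    have hcc : c ∈ closure B := csInf_mem_closure hBne hBbdd
    have hnB : (nhdsWithin c B).NeBot := mem_closure_iff_nhdsWithin_neBot.mp hcc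
    have hFc_le : F c ≤ 0 := by
      have htend : Filter.Tendsto F (nhdsWithin c B) (nhds (F c)) :=
        (hFcont c hc0).mono (fun x hx => hx.1)
      exact le_of_tendsto htend
        (Filter.eventually_of_mem self_mem_nhdsWithin (fun x hx => hx.2.le))
    have hFc_ge : 0 ≤ F c := by
      rcases eq_or_lt_of_le hc0 with h | h
      · rw [← h]; exact hF0
      · have hcl : c ∈ closure (Ico 0 c) := by
          rw [closure_Ico (ne_of_lt h)]
          exact ⟨hc0, le_refl c⟩
        haveI hnb : (nhdsWithin c (Ico 0 c)).NeBot := mem_closure_iff_nhdsWithin_neBot.mp hcl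
        have htend : Filter.Tendsto F (nhdsWithin c (Ico 0 c)) (nhds (F c)) :=
          (hFcont c hc0).mono (fun x hx => hx.1)
        exact ge_of_tendsto htend
          (Filter.eventually_of_mem self_mem_nhdsWithin (fun x hx => hlt x hx.1 hx.2))
    have hFc : F c = 0 := le_antisymm hFc_le hFc_ge
    have hFnn : ∀ s ∈ Icc (0 : ℝ) c, 0 ≤ F s := by
      intro s hs
      rcases lt_or_eq_of_le hs.2 with h | h
      · exact hlt s hs.1 h
      · rw [h]; exact hFc_ge
    have hH'nn : ∀ s ∈ Icc (0 : ℝ) c, 0 ≤ H' s := by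
      intro s hs
      have h1 : 0 ≤ μ₂ / (1 + s) ^ (α + 1) :=
        div_nonneg hμ₂.le (Real.rpow_pos_of_pos (hbase s hs.1) _).le
      exact mul_nonneg (hmpos s).le
        (add_nonneg (mul_nonneg h1 (hFnn s hs)) (hGpos s hs.1))
    have hF'nn : ∀ s ∈ Icc (0 : ℝ) c, 0 ≤ F' s := by
      intro s hs
      have hint : ∫ u in (0 : ℝ)..s, H' u = H s - H 0 := ftc H H' hHderiv hH'cont s hs.1
      have h1 : 0 ≤ ∫ u in (0 : ℝ)..s, H' u :=
        intervalIntegral.integral_nonneg hs.1 (fun u hu => hH'nn u ⟨hu.1, le_trans hu.2 hs.2⟩)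
      have hH0 : 0 ≤ H 0 := mul_nonneg (hmpos 0).le hF'0
      have hHs : 0 ≤ m s * F' s := by
        have : 0 ≤ H s := by linarith
        simpa [hHdef] using this
      nlinarith [hmpos s]
    have hintF : ∫ u in (0 : ℝ)..c, F' u = F c - F 0 := ftc F F' hF hF'cont c hc0
    have h2 : 0 ≤ ∫ u in (0 : ℝ)..c, F' u := intervalIntegral.integral_nonneg hc0 hF'nn
    have hF00 : F 0 = 0 := by rw [hFc] at hintF; linarith
    have hF'0pos : 0 < F' 0 := by rw [hF00] at hsum; linarith
    have hF'cpos : 0 < F' c := by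
      have hint : ∫ u in (0 : ℝ)..c, H' u = H c - H 0 := ftc H H' hHderiv hH'cont c hc0
      have h1 : 0 ≤ ∫ u in (0 : ℝ)..c, H' u := intervalIntegral.integral_nonneg hc0 hH'nn
      have hH0 : 0 < H 0 := mul_pos (hmpos 0) hF'0pos
      have hHc : 0 < m c * F' c := by
        have : 0 < H c := by linarith
        simpa [hHdef] using this
      nlinarith [hmpos c]
    -- slope argument at c
    have hslope := hasDerivWithinAt_iff_tendsto_slope.mp (hF c hc0)
    have hBsub : B ⊆ Ici (0 : ℝ) \ {c} := by
      intro x hx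
      refine ⟨hx.1, ?_⟩
      intro hxc
      rw [mem_singleton_iff] at hxc
      have hx2 : F x < 0 := hx.2
      rw [hxc, hFc] at hx2
      exact lt_irrefl 0 hx2
    have hmono : nhdsWithin c B ≤ nhdsWithin c (Ici 0 \ {c}) := nhdsWithin_mono _ hBsub
    have htendB : Filter.Tendsto (slope F c) (nhdsWithin c B) (nhds (F' c)) :=
      hslope.mono_left hmono
    have hev : ∀ᶠ x in nhdsWithin c B, 0 < slope F c x :=
      htendB.eventually (eventually_gt_nhds hF'cpos)
    have hev2 : ∀ᶠ x in nhdsWithin c B, slope F c x < 0 := by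
      filter_upwards [self_mem_nhdsWithin] with x hx
      have hcx : c < x := by
        have hle : c ≤ x := by rw [hcdef]; exact csInf_le hBbdd hx
        rcases lt_or_eq_of_le hle with h | h
        · exact h
        · exfalso
          have hx2 : F x < 0 := hx.2
          rw [← h, hFc] at hx2
          exact lt_irrefl 0 hx2
      rw [slope_def_field]
      apply div_neg_of_neg_of_pos
      · rw [hFc]; linarith [hx.2]
      · linarith
    obtain ⟨x, hx1, hx2⟩ := (hev.and hev2).exists
    exact absurd hx1 (not_lt.mpr hx2.le)
  -- main conclusion
  intro t ht
  have hint : ∫ u in (0 : ℝ)..t, H' u = H t - H 0 := ftc H H' hHderiv hH'cont t ht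
  have hsub : uIcc (0 : ℝ) t ⊆ Ici 0 := by rw [uIcc_of_le ht]; exact Icc_subset_Ici_self
  have hmono : ∫ u in (0 : ℝ)..t, m 0 * G u ≤ ∫ u in (0 : ℝ)..t, H' u := by
    apply intervalIntegral.integral_mono_on ht
    · exact (continuousOn_const.mul (hGcont.mono hsub)).intervalIntegrable
    · exact (hH'cont.mono hsub).intervalIntegrable
    · intro u hu
      have h1 : m 0 * G u ≤ m u * G u :=
        mul_le_mul_of_nonneg_right (hm0le u hu.1) (hGpos u hu.1)
      have h0 : 0 ≤ μ₂ / (1 + u) ^ (α + 1) * F u :=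
        mul_nonneg (div_nonneg hμ₂.le (Real.rpow_pos_of_pos (hbase u hu.1) _).le)
          (hFnonneg u hu.1)
      have h2 : m u * G u ≤ H' u := by
        rw [hH'def]
        nlinarith [hmpos u]
      linarith
  have hconst : ∫ u in (0 : ℝ)..t, m 0 * G u = m 0 * ∫ u in (0 : ℝ)..t, G u :=
    intervalIntegral.integral_const_mul _ _
  have hH0 : 0 ≤ H 0 := mul_nonneg (hmpos 0).le hF'0
  have h3 : m 0 * ∫ u in (0 : ℝ)..t, G u ≤ m t * F' t := by
    have hHt : H t = m t * F' t := by rw [hHdef]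
    rw [← hconst]
    linarith [hint, hmono, hHt ▸ hint]
  have hGint : 0 ≤ ∫ u in (0 : ℝ)..t, G u :=
    intervalIntegral.integral_nonneg ht (fun u hu => hGpos u hu.1)
  have hGm : 0 ≤ m 0 * ∫ u in (0 : ℝ)..t, G u := mul_nonneg (hmpos 0).le hGint
  have hF't : 0 ≤ F' t := by nlinarith [hmpos t]
  have hm0 : Real.exp (μ₁ * (1 + (0 : ℝ)) ^ (1 - β) / (1 - β)) = m 0 := by rw [hmdef]
  rw [hm0]
  nlinarith [hmle1 t ht, hmpos t]
end

section
/- Let n ≥ 1, p > 1 and A > 0. Let F ∈ C¹([1,∞)) with F(1) ≥ 0, and assume that for all t ≥ 1, F'(t) ≥ A ∫₁ᵗ (1+s)^{(n−1)(1−p/2)} ds. Then for all t ≥ 1, F(t) ≥ (A/(n(n+1))) (1+t)^{−(n−1)p/2} (t−1)^{n+1}. -/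
open Set

/-- First-step lower bound in the iteration: if `F ∈ C¹([1,∞))`, `F(1) ≥ 0` and
`F'(t) ≥ A ∫₁ᵗ (1+s)^{(n-1)(1-p/2)} ds` for `t ≥ 1`, then
`F(t) ≥ (A/(n(n+1))) (1+t)^{-(n-1)p/2} (t-1)^{n+1}` for all `t ≥ 1`. -/
theorem stmt_9 (n : ℕ) (hn : 1 ≤ n) (p A : ℝ) (hp : 1 < p) (hA : 0 < A)
    (F F' : ℝ → ℝ)
    (hF : ∀ t ∈ Ici (1 : ℝ), HasDerivWithinAt F (F' t) (Ici 1) t)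
    (hF'cont : ContinuousOn F' (Ici 1))
    (hF1 : 0 ≤ F 1)
    (hineq : ∀ t : ℝ, 1 ≤ t →
      A * ∫ s in (1 : ℝ)..t, (1 + s) ^ (((n : ℝ) - 1) * (1 - p / 2)) ≤ F' t) :
    ∀ t : ℝ, 1 ≤ t →
      A / (n * (n + 1)) * (1 + t) ^ (-(((n : ℝ) - 1) * p / 2)) * (t - 1) ^ (n + 1)
        ≤ F t := by
  intro t ht
  set α : ℝ := ((n : ℝ) - 1) * p / 2 with hα
  have hn1 : (1 : ℝ) ≤ (n : ℝ) := by exact_mod_cast hn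
  have hnpos : (0 : ℝ) < n := lt_of_lt_of_le one_pos hn1
  have hαnn : 0 ≤ α := by
    have h1 : (0:ℝ) ≤ (n:ℝ) - 1 := by linarith
    have h2 : (0:ℝ) ≤ p := by linarith
    positivity
  have hcast : ((n - 1 : ℕ) : ℝ) = (n : ℝ) - 1 := by
    push_cast [Nat.cast_sub hn]; ring
  -- pointwise bound on the integrand
  have hpt : ∀ s, 1 ≤ s → s ≤ t →
      (s - 1) ^ (n - 1) * (1 + t) ^ (-α) ≤ (1 + s) ^ (((n : ℝ) - 1) * (1 - p / 2)) := by
    intro s hs hst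
    have hb : (0:ℝ) < 1 + s := by linarith
    have hsplit : (1 + s) ^ (((n : ℝ) - 1) * (1 - p / 2))
        = (1 + s) ^ ((n : ℝ) - 1) * (1 + s) ^ (-α) := by
      rw [← Real.rpow_add hb]
      rw [hα]
      ring_nf
    rw [hsplit]
    have h1 : (s - 1) ^ (n - 1) ≤ (1 + s) ^ ((n : ℝ) - 1) := by
      rw [← hcast, Real.rpow_natCast]
      exact pow_le_pow_left₀ (by linarith) (by linarith) _
    have h2 : (1 + t) ^ (-α) ≤ (1 + s) ^ (-α) :=
      Real.rpow_le_rpow_of_nonpos hb (by linarith) (by linarith)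
    have hp1 : (0:ℝ) ≤ (s - 1) ^ (n - 1) := pow_nonneg (by linarith) _
    have hp2 : (0:ℝ) ≤ (1 + t) ^ (-α) := Real.rpow_nonneg (by linarith) _
    exact mul_le_mul h1 h2 hp2 (le_trans hp1 h1)
  -- lower bound on F' r for r ∈ [1, t]
  have hkey : ∀ r, 1 ≤ r → r ≤ t →
      A * (1 + t) ^ (-α) * (r - 1) ^ n / n ≤ F' r := by
    intro r hr hrt
    refine le_trans ?_ (hineq r hr)
    have hint1 : IntervalIntegrable
        (fun s => (s - 1) ^ (n - 1) * (1 + t) ^ (-α)) MeasureTheory.volume 1 r := by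
      apply Continuous.intervalIntegrable
      continuity
    have hint2 : IntervalIntegrable
        (fun s => (1 + s) ^ (((n : ℝ) - 1) * (1 - p / 2))) MeasureTheory.volume 1 r := by
      apply ContinuousOn.intervalIntegrable
      apply ContinuousOn.rpow_const
      · fun_prop
      · intro x hx
        rw [uIcc_of_le hr] at hx
        exact Or.inl (by have := hx.1; positivity)
    have hmono := intervalIntegral.integral_mono_on hr hint1 hint2
      (fun s hs => hpt s hs.1 (le_trans hs.2 hrt))
    have hcomp : (∫ s in (1:ℝ)..r, (s - 1) ^ (n - 1) * (1 + t) ^ (-α))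
        = (r - 1) ^ n / n * (1 + t) ^ (-α) := by
      rw [intervalIntegral.integral_mul_const]
      have := intervalIntegral.integral_comp_sub_right (fun u : ℝ => u ^ (n - 1)) 1 (a := 1) (b := r)
      rw [this]
      simp only [sub_self, integral_pow]
      rw [Nat.sub_add_cancel hn]
      rw [show ((n - 1 : ℕ) : ℝ) + 1 = (n : ℝ) by rw [hcast]; ring]
      rw [zero_pow (by omega), sub_zero]
    calc A * (1 + t) ^ (-α) * (r - 1) ^ n / n
        = A * ((r - 1) ^ n / n * (1 + t) ^ (-α)) := by ring
      _ ≤ A * ∫ s in (1:ℝ)..r, (1 + s) ^ (((n : ℝ) - 1) * (1 - p / 2)) := by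
          apply mul_le_mul_of_nonneg_left _ hA.le
          rw [← hcomp]; exact hmono
  -- FTC
  have hFcont : ContinuousOn F (Icc 1 t) := fun x hx =>
    ((hF x (mem_Ici.mpr hx.1)).mono Icc_subset_Ici_self).continuousWithinAt
  have hF'int : IntervalIntegrable F' MeasureTheory.volume 1 t :=
    (hF'cont.mono (by rw [uIcc_of_le ht]; exact Icc_subset_Ici_self)).intervalIntegrable
  have hftc : ∫ r in (1:ℝ)..t, F' r = F t - F 1 := by
    apply intervalIntegral.integral_eq_sub_of_hasDeriv_right_of_le ht hFcont _ hF'int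
    intro x hx
    exact (hF x (mem_Ici.mpr hx.1.le)).mono (Ioi_subset_Ici hx.1.le)
  have hgint : IntervalIntegrable
      (fun r => A * (1 + t) ^ (-α) * (r - 1) ^ n / n) MeasureTheory.volume 1 t := by
    apply Continuous.intervalIntegrable; continuity
  have hmono2 := intervalIntegral.integral_mono_on ht hgint hF'int
    (fun r hr => hkey r hr.1 hr.2)
  have hgval : (∫ r in (1:ℝ)..t, A * (1 + t) ^ (-α) * (r - 1) ^ n / n)
      = A / (n * (n + 1)) * (1 + t) ^ (-α) * (t - 1) ^ (n + 1) := by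
    have : (fun r : ℝ => A * (1 + t) ^ (-α) * (r - 1) ^ n / n)
        = fun r : ℝ => (r - 1) ^ n * (A * (1 + t) ^ (-α) / n) := by
      funext r; ring
    rw [this, intervalIntegral.integral_mul_const]
    rw [intervalIntegral.integral_comp_sub_right (fun u : ℝ => u ^ n) 1]
    simp only [sub_self, integral_pow, zero_pow (by omega : n + 1 ≠ 0), sub_zero]
    have hn1' : ((n : ℝ) + 1) ≠ 0 := by positivity
    field_simp
  have : A / (n * (n + 1)) * (1 + t) ^ (-α) * (t - 1) ^ (n + 1) ≤ F t - F 1 := by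
    rw [← hgval, ← hftc]; exact hmono2
  linarith
end

section
/- Let n ≥ 1 and p > 1 satisfy γ(p,n) := 2 + (n+1)p − (n−1)p² > 0, and let C₃ > 0. Then there exists a constant C = C(n,p,C₃) > 0 such that the following holds for every D₁ > 0: if T > 2 and F : [1,T) → ℝ is continuous, nonnegative, and satisfies for all t ∈ [1,T) both F(t) ≥ C₃ ∫₁ᵗ ds ∫₁ˢ (1+r)^{−n(p−1)} F(r)^p dr and F(t) ≥ D₁ (1+t)^{−(n−1)p/2} (t−1)^{n+1}, then T ≤ max(2, C D₁^{−2(p−1)/γ(p,n)}). -/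
open Set Finset

noncomputable def aS (n : ℕ) (p : ℝ) : ℕ → ℝ
  | 0 => ((n:ℝ) - 1) * p / 2
  | j + 1 => p * aS n p j + (n:ℝ) * (p - 1)

noncomputable def bS (n : ℕ) (p : ℝ) : ℕ → ℝ
  | 0 => (n:ℝ) + 1
  | j + 1 => p * bS n p j + 2

noncomputable def dS (n : ℕ) (p C₃ D₁ : ℝ) : ℕ → ℝ
  | 0 => D₁
  | j + 1 => C₃ * dS n p C₃ D₁ j ^ p / ((p * bS n p j + 1) * (p * bS n p j + 2))

lemma aS_nonneg (n : ℕ) (p : ℝ) (hn : 1 ≤ n) (hp : 1 < p) : ∀ j, 0 ≤ aS n p j := by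
  intro j; induction j with
  | zero =>
    have h1 : (1:ℝ) ≤ (n:ℝ) := by exact_mod_cast hn
    simp only [aS]; nlinarith
  | succ j ih =>
    simp only [aS]
    have h0 : (0:ℝ) ≤ (n:ℝ) := Nat.cast_nonneg n
    nlinarith

lemma bS_ge_one (n : ℕ) (p : ℝ) (hp : 1 < p) : ∀ j, 1 ≤ bS n p j := by
  intro j; induction j with
  | zero =>
    simp only [bS]
    have h0 : (0:ℝ) ≤ (n:ℝ) := Nat.cast_nonneg n
    linarith
  | succ j ih => simp only [bS]; nlinarith

lemma dS_pos (n : ℕ) (p C₃ D₁ : ℝ) (hp : 1 < p) (hC₃ : 0 < C₃) (hD₁ : 0 < D₁) :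
    ∀ j, 0 < dS n p C₃ D₁ j := by
  intro j; induction j with
  | zero => simpa [dS] using hD₁
  | succ j ih =>
    have hb := bS_ge_one n p hp j
    simp only [dS]
    apply div_pos (mul_pos hC₃ (Real.rpow_pos_of_pos ih p))
    have h1 : 0 < p * bS n p j + 1 := by nlinarith
    have h2 : 0 < p * bS n p j + 2 := by nlinarith
    exact mul_pos h1 h2

lemma aS_closed (n : ℕ) (p : ℝ) :
    ∀ j, aS n p j = p ^ j * (((n:ℝ) - 1) * p / 2 + (n:ℝ)) - (n:ℝ) := by
  intro j; induction j with
  | zero => simp [aS]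
  | succ j ih => simp only [aS, ih, pow_succ]; ring

lemma bS_closed (n : ℕ) (p : ℝ) (hp : 1 < p) :
    ∀ j, bS n p j = p ^ j * ((n:ℝ) + 1 + 2 / (p - 1)) - 2 / (p - 1) := by
  have hp1 : p - 1 ≠ 0 := by intro h; nlinarith
  intro j; induction j with
  | zero => simp [bS]
  | succ j ih =>
    simp only [bS, ih, pow_succ]
    field_simp
    ring

lemma bS_le (n : ℕ) (p : ℝ) (hp : 1 < p) :
    ∀ j, bS n p j ≤ ((n:ℝ) + 1 + 2 / (p - 1)) * p ^ j := by
  intro j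
  rw [bS_closed n p hp]
  have hp1 : (0:ℝ) < p - 1 := by linarith
  have h2 : 0 < 2 / (p - 1) := by positivity
  linarith

lemma geom_tail_sum_le (x : ℝ) (hx0 : 0 ≤ x) (hx1 : x < 1) (j : ℕ) :
    ∑ k ∈ Finset.range j, x ^ (k + 1) ≤ x / (1 - x) := by
  have hne : x ≠ 1 := ne_of_lt hx1
  have hsum : ∑ k ∈ Finset.range j, x ^ (k + 1) = x * ∑ k ∈ Finset.range j, x ^ k := by
    rw [Finset.mul_sum]
    exact Finset.sum_congr rfl (fun k _ => by ring)
  rw [hsum, geom_sum_eq hne]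
  have h1x : 0 < 1 - x := by linarith
  have hxj : 0 ≤ x ^ j := pow_nonneg hx0 j
  have heq : (x ^ j - 1) / (x - 1) = (1 - x ^ j) / (1 - x) := by
    rw [div_eq_div_iff (by linarith) (by linarith)]
    ring
  rw [heq]
  calc x * ((1 - x ^ j) / (1 - x)) ≤ x * (1 / (1 - x)) := by
        apply mul_le_mul_of_nonneg_left _ hx0
        apply div_le_div_of_nonneg_right _ h1x.le
        linarith
    _ = x / (1 - x) := by ring

lemma nat_le_pow_div (y : ℝ) (hy : 1 < y) (m : ℕ) : (m:ℝ) ≤ y ^ m / (y - 1) := by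
  have h := one_add_mul_le_pow (a := y - 1) (by linarith) m
  rw [show 1 + (y - 1) = y by ring] at h
  rw [le_div_iff₀ (by linarith)]
  nlinarith [Nat.cast_nonneg (α := ℝ) m]

noncomputable def Bc (n : ℕ) (p : ℝ) : ℝ := (n:ℝ) + 1 + 2 / (p - 1)

noncomputable def cc (n : ℕ) (p C₃ : ℝ) : ℝ := 2 * Real.log (Bc n p) - Real.log C₃

noncomputable def Sc (n : ℕ) (p C₃ : ℝ) : ℝ :=
  |cc n p C₃| / (p - 1) + 2 * Real.log p / (Real.sqrt p - 1) ^ 2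

lemma Bc_pos (n : ℕ) (p : ℝ) (hp : 1 < p) : 0 < Bc n p := by
  have h0 : (0:ℝ) ≤ (n:ℝ) := Nat.cast_nonneg n
  have : 0 < 2 / (p - 1) := div_pos (by norm_num) (by linarith)
  unfold Bc; linarith

lemma log_step (n : ℕ) (p C₃ D₁ : ℝ) (hp : 1 < p) (hC₃ : 0 < C₃) (hD₁ : 0 < D₁) (j : ℕ) :
    p * Real.log (dS n p C₃ D₁ j) - (cc n p C₃ + 2 * ((j:ℝ) + 1) * Real.log p)
      ≤ Real.log (dS n p C₃ D₁ (j + 1)) := by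
  have hdj := dS_pos n p C₃ D₁ hp hC₃ hD₁ j
  have hb := bS_ge_one n p hp j
  have hB := Bc_pos n p hp
  have h1 : (0:ℝ) < p * bS n p j + 1 := by nlinarith
  have h2 : (0:ℝ) < p * bS n p j + 2 := by nlinarith
  have hlog : Real.log (dS n p C₃ D₁ (j + 1))
      = Real.log C₃ + p * Real.log (dS n p C₃ D₁ j)
        - Real.log ((p * bS n p j + 1) * (p * bS n p j + 2)) := by
    show Real.log (C₃ * dS n p C₃ D₁ j ^ p / ((p * bS n p j + 1) * (p * bS n p j + 2))) = _
    rw [Real.log_div (ne_of_gt (mul_pos hC₃ (Real.rpow_pos_of_pos hdj p)))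
        (ne_of_gt (mul_pos h1 h2)),
      Real.log_mul (ne_of_gt hC₃) (ne_of_gt (Real.rpow_pos_of_pos hdj p)),
      Real.log_rpow hdj]
  rw [hlog]
  -- bound the denominator's log
  have hbsucc : p * bS n p j + 2 = bS n p (j + 1) := rfl
  have hble : bS n p (j + 1) ≤ Bc n p * p ^ (j + 1) := bS_le n p hp (j + 1)
  have hDle : (p * bS n p j + 1) * (p * bS n p j + 2) ≤ (Bc n p * p ^ (j + 1)) ^ 2 := by
    have h3 : p * bS n p j + 2 ≤ Bc n p * p ^ (j + 1) := by rw [hbsucc]; exact hble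
    nlinarith
  have hlogD : Real.log ((p * bS n p j + 1) * (p * bS n p j + 2))
      ≤ 2 * (Real.log (Bc n p) + ((j:ℝ) + 1) * Real.log p) := by
    calc Real.log ((p * bS n p j + 1) * (p * bS n p j + 2))
        ≤ Real.log ((Bc n p * p ^ (j + 1)) ^ 2) := Real.log_le_log (by positivity) hDle
      _ = 2 * (Real.log (Bc n p) + ((j:ℝ) + 1) * Real.log p) := by
          rw [Real.log_pow, Real.log_mul (ne_of_gt hB) (by positivity), Real.log_pow]
          push_cast
          ring
  unfold cc
  linarith

lemma dS_log_closed (n : ℕ) (p C₃ D₁ : ℝ) (hp : 1 < p) (hC₃ : 0 < C₃) (hD₁ : 0 < D₁) :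
    ∀ j, p ^ j * (Real.log D₁
        - ∑ k ∈ Finset.range j, (cc n p C₃ + 2 * ((k:ℝ) + 1) * Real.log p) / p ^ (k + 1))
      ≤ Real.log (dS n p C₃ D₁ j) := by
  intro j
  have hp0 : (0:ℝ) < p := by linarith
  induction j with
  | zero => simp [dS]
  | succ j ih =>
    have hstep := log_step n p C₃ D₁ hp hC₃ hD₁ j
    have hmul := mul_le_mul_of_nonneg_left ih (le_of_lt hp0)
    rw [Finset.sum_range_succ]
    have hpj : (0:ℝ) < p ^ (j + 1) := pow_pos hp0 _
    have hexp : p ^ (j + 1) * (Real.log D₁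
        - (∑ k ∈ Finset.range j, (cc n p C₃ + 2 * ((k:ℝ) + 1) * Real.log p) / p ^ (k + 1)
          + (cc n p C₃ + 2 * ((j:ℝ) + 1) * Real.log p) / p ^ (j + 1)))
        = p * (p ^ j * (Real.log D₁
            - ∑ k ∈ Finset.range j, (cc n p C₃ + 2 * ((k:ℝ) + 1) * Real.log p) / p ^ (k + 1)))
          - (cc n p C₃ + 2 * ((j:ℝ) + 1) * Real.log p) := by
      have hX : p ^ (j + 1) * ((cc n p C₃ + 2 * ((j:ℝ) + 1) * Real.log p) / p ^ (j + 1))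
          = cc n p C₃ + 2 * ((j:ℝ) + 1) * Real.log p := mul_div_cancel₀ _ hpj.ne'
      linear_combination -hX
    rw [hexp]
    linarith

lemma sum_le_Sc (n : ℕ) (p C₃ : ℝ) (hp : 1 < p) (j : ℕ) :
    ∑ k ∈ Finset.range j, (cc n p C₃ + 2 * ((k:ℝ) + 1) * Real.log p) / p ^ (k + 1)
      ≤ Sc n p C₃ := by
  have hp0 : (0:ℝ) < p := by linarith
  set s := Real.sqrt p with hs
  have hs1 : 1 < s := by
    rw [hs, show (1:ℝ) = Real.sqrt 1 by simp]
    exact Real.sqrt_lt_sqrt zero_le_one hp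
  have hs2 : s ^ 2 = p := Real.sq_sqrt hp0.le
  have hL : 0 < Real.log p := Real.log_pos hp
  have hterm : ∀ k ∈ Finset.range j,
      (cc n p C₃ + 2 * ((k:ℝ) + 1) * Real.log p) / p ^ (k + 1)
      ≤ |cc n p C₃| * (1 / p) ^ (k + 1)
        + 2 * Real.log p / (s - 1) * (1 / s) ^ (k + 1) := by
    intro k _
    have hpk : (0:ℝ) < p ^ (k + 1) := pow_pos hp0 _
    have hsk : (0:ℝ) < s ^ (k + 1) := pow_pos (by linarith) _
    have e1 : (1 / p : ℝ) ^ (k + 1) = 1 / p ^ (k + 1) := by rw [div_pow]; simp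
    have e2 : (1 / s : ℝ) ^ (k + 1) = 1 / s ^ (k + 1) := by rw [div_pow]; simp
    have hpss : p ^ (k + 1) = s ^ (k + 1) * s ^ (k + 1) := by
      rw [← hs2]; ring
    have hk1 : ((k:ℝ) + 1) ≤ s ^ (k + 1) / (s - 1) := by
      have := nat_le_pow_div s hs1 (k + 1)
      push_cast at this
      linarith
    have t1 : cc n p C₃ / p ^ (k + 1) ≤ |cc n p C₃| * (1 / p) ^ (k + 1) := by
      rw [e1]
      rw [div_le_iff₀ hpk] -- careful: RHS * p^(k+1)
      have : |cc n p C₃| * (1 / p ^ (k + 1)) * p ^ (k + 1) = |cc n p C₃| := by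
        field_simp
      rw [this]
      exact le_abs_self _
    have t2 : 2 * ((k:ℝ) + 1) * Real.log p / p ^ (k + 1)
        ≤ 2 * Real.log p / (s - 1) * (1 / s) ^ (k + 1) := by
      rw [e2, hpss]
      rw [div_le_iff₀ (by positivity)]
      have hs0 : s ≠ 0 := by linarith
      have hs1' : s - 1 ≠ 0 := by linarith
      have hskne : s ^ (k + 1) ≠ 0 := pow_ne_zero _ hs0
      have hrhs : 2 * Real.log p / (s - 1) * (1 / s ^ (k + 1)) * (s ^ (k + 1) * s ^ (k + 1))
          = 2 * Real.log p * (s ^ (k + 1) / (s - 1)) := by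
        field_simp
      rw [hrhs]
      have := mul_le_mul_of_nonneg_left hk1 (by positivity : (0:ℝ) ≤ 2 * Real.log p)
      linarith
    have hsplit : (cc n p C₃ + 2 * ((k:ℝ) + 1) * Real.log p) / p ^ (k + 1)
        = cc n p C₃ / p ^ (k + 1) + 2 * ((k:ℝ) + 1) * Real.log p / p ^ (k + 1) := by
      ring
    rw [hsplit]
    exact add_le_add t1 t2
  calc ∑ k ∈ Finset.range j, (cc n p C₃ + 2 * ((k:ℝ) + 1) * Real.log p) / p ^ (k + 1)
      ≤ ∑ k ∈ Finset.range j, (|cc n p C₃| * (1 / p) ^ (k + 1)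
          + 2 * Real.log p / (s - 1) * (1 / s) ^ (k + 1)) := Finset.sum_le_sum hterm
    _ = |cc n p C₃| * ∑ k ∈ Finset.range j, (1 / p) ^ (k + 1)
        + 2 * Real.log p / (s - 1) * ∑ k ∈ Finset.range j, (1 / s) ^ (k + 1) := by
        rw [Finset.sum_add_distrib, Finset.mul_sum, Finset.mul_sum]
    _ ≤ |cc n p C₃| * ((1 / p) / (1 - 1 / p))
        + 2 * Real.log p / (s - 1) * ((1 / s) / (1 - 1 / s)) := by
        apply add_le_add
        · exact mul_le_mul_of_nonneg_left
            (geom_tail_sum_le _ (by positivity) (by rw [div_lt_one hp0]; exact hp) j)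
            (abs_nonneg _)
        · exact mul_le_mul_of_nonneg_left
            (geom_tail_sum_le _ (by positivity) (by rw [div_lt_one (by linarith)]; exact hs1) j)
            (div_nonneg (by linarith) (by linarith))
    _ = Sc n p C₃ := by
        have hpne : p ≠ 0 := by linarith
        have hp1ne : p - 1 ≠ 0 := by linarith
        have hsne : s ≠ 0 := by linarith
        have hs1ne : s - 1 ≠ 0 := by linarith
        have e1 : (1 / p) / (1 - 1 / p) = 1 / (p - 1) := by
          rw [show 1 - 1 / p = (p - 1) / p by field_simp]
          field_simp
        have e2 : (1 / s) / (1 - 1 / s) = 1 / (s - 1) := by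
          rw [show 1 - 1 / s = (s - 1) / s by field_simp]
          field_simp
        rw [e1, e2]
        unfold Sc
        rw [← hs]
        field_simp

open intervalIntegral in
lemma integral_shift_rpow (q s : ℝ) (hq : 0 ≤ q) :
    ∫ r in (1:ℝ)..s, (r - 1) ^ q = (s - 1) ^ (q + 1) / (q + 1) := by
  have h := intervalIntegral.integral_comp_sub_right (a := (1:ℝ)) (b := s)
    (fun x => x ^ q) 1
  rw [h]
  norm_num
  rw [integral_rpow (Or.inl (by linarith))]
  rw [Real.zero_rpow (by linarith)]
  ring

lemma step_lemma (n : ℕ) (p C₃ : ℝ) (hp : 1 < p) (hC₃ : 0 < C₃) (T : ℝ) (F : ℝ → ℝ)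
    (hcont : ContinuousOn F (Ico 1 T))
    (hframe : ∀ t ∈ Ico (1:ℝ) T,
      C₃ * ∫ s in (1:ℝ)..t, ∫ r in (1:ℝ)..s, (1 + r) ^ (-((n:ℝ) * (p - 1))) * F r ^ p ≤ F t)
    (d α β : ℝ) (hd : 0 < d) (hα : 0 ≤ α) (hβ : 0 ≤ β)
    (h : ∀ t ∈ Ico (1:ℝ) T, d * (1 + t) ^ (-α) * (t - 1) ^ β ≤ F t) :
    ∀ t ∈ Ico (1:ℝ) T,
      C₃ * d ^ p / ((p * β + 1) * (p * β + 2)) * (1 + t) ^ (-(p * α + (n:ℝ) * (p - 1)))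
        * (t - 1) ^ (p * β + 2) ≤ F t := by
  intro t ht
  obtain ⟨ht1, htT⟩ := ht
  set G : ℝ → ℝ := fun r => (1 + r) ^ (-((n:ℝ) * (p - 1))) * F r ^ p with hGdef
  set q : ℝ := p * β with hqdef
  have hq : 0 ≤ q := mul_nonneg (by linarith) hβ
  have h1t : (0:ℝ) < 1 + t := by linarith
  set e : ℝ := p * α + (n:ℝ) * (p - 1) with hedef
  have he : 0 ≤ e := by
    have : 0 ≤ (n:ℝ) := Nat.cast_nonneg n
    have h1 : 0 ≤ p * α := mul_nonneg (by linarith) hα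
    nlinarith
  set c : ℝ := d ^ p * (1 + t) ^ (-e) with hcdef
  have hcpos : 0 < c :=
    mul_pos (Real.rpow_pos_of_pos hd p) (Real.rpow_pos_of_pos h1t _)
  -- continuity of G on Icc 1 t'
  have hGcont : ∀ t', 1 ≤ t' → t' < T → ContinuousOn G (Icc 1 t') := by
    intro t' h1 h2
    have hsub : Icc (1:ℝ) t' ⊆ Ico 1 T := fun x hx => ⟨hx.1, lt_of_le_of_lt hx.2 h2⟩
    apply ContinuousOn.mul
    · apply ContinuousOn.rpow_const (by fun_prop)
      intro x hx
      have hx0 : (0:ℝ) < 1 + x := by have := hx.1; linarith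
      exact Or.inl (ne_of_gt hx0)
    · exact ContinuousOn.rpow_const (hcont.mono hsub) (fun x hx => Or.inr (by linarith))
  -- pointwise bound
  have hpt : ∀ r ∈ Icc (1:ℝ) t, c * (r - 1) ^ q ≤ G r := by
    intro r hr
    obtain ⟨hr1, hrt⟩ := hr
    have hrT : r < T := lt_of_le_of_lt hrt htT
    have h1r : (0:ℝ) < 1 + r := by linarith
    have hr1' : (0:ℝ) ≤ r - 1 := by linarith
    have hFr := h r ⟨hr1, hrT⟩
    have hun : (0:ℝ) ≤ (1 + r) ^ (-α) := (Real.rpow_pos_of_pos h1r _).le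
    have hvn : (0:ℝ) ≤ (r - 1) ^ β := Real.rpow_nonneg hr1' _
    have hFrnn : 0 ≤ d * (1 + r) ^ (-α) * (r - 1) ^ β :=
      mul_nonneg (mul_nonneg hd.le hun) hvn
    have h2 : (d * (1 + r) ^ (-α) * (r - 1) ^ β) ^ p ≤ F r ^ p :=
      Real.rpow_le_rpow hFrnn hFr (by linarith)
    have h3 : (d * (1 + r) ^ (-α) * (r - 1) ^ β) ^ p
        = d ^ p * (1 + r) ^ (-α * p) * (r - 1) ^ q := by
      rw [Real.mul_rpow (mul_nonneg hd.le hun) hvn, Real.mul_rpow hd.le hun,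
        ← Real.rpow_mul h1r.le, ← Real.rpow_mul hr1', hqdef]
      ring_nf
    have h4 : (1 + r) ^ (-((n:ℝ) * (p - 1))) * ((1 + r) ^ (-α * p)) = (1 + r) ^ (-e) := by
      rw [← Real.rpow_add h1r]; rw [hedef]; ring_nf
    have h5 : (1 + t) ^ (-e) ≤ (1 + r) ^ (-e) :=
      Real.rpow_le_rpow_of_nonpos h1r (by linarith) (by linarith)
    calc c * (r - 1) ^ q = d ^ p * (1 + t) ^ (-e) * (r - 1) ^ q := by rw [hcdef]
      _ ≤ d ^ p * (1 + r) ^ (-e) * (r - 1) ^ q := by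
          apply mul_le_mul_of_nonneg_right _ (Real.rpow_nonneg hr1' _)
          exact mul_le_mul_of_nonneg_left h5 (Real.rpow_nonneg hd.le _)
      _ = (1 + r) ^ (-((n:ℝ) * (p - 1))) * (d * (1 + r) ^ (-α) * (r - 1) ^ β) ^ p := by
          rw [h3, ← h4]; ring
      _ ≤ G r := by
          rw [hGdef]
          exact mul_le_mul_of_nonneg_left h2 (Real.rpow_nonneg h1r.le _)
  -- inner integral bound
  have hinner : ∀ s ∈ Icc (1:ℝ) t,
      c / (q + 1) * (s - 1) ^ (q + 1) ≤ ∫ r in (1:ℝ)..s, G r := by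
    intro s hs
    obtain ⟨hs1, hst⟩ := hs
    have hInt2 : IntervalIntegrable G MeasureTheory.volume 1 s := by
      apply ContinuousOn.intervalIntegrable
      rw [uIcc_of_le hs1]
      exact hGcont s hs1 (lt_of_le_of_lt hst htT)
    have hInt1 : IntervalIntegrable (fun r => c * (r - 1) ^ q) MeasureTheory.volume 1 s := by
      apply Continuous.intervalIntegrable
      exact continuous_const.mul ((continuous_id.sub continuous_const).rpow_const
        (fun x => Or.inr hq))
    have hmono := intervalIntegral.integral_mono_on hs1 hInt1 hInt2
      (fun r hr => hpt r ⟨hr.1, le_trans hr.2 hst⟩)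
    calc c / (q + 1) * (s - 1) ^ (q + 1) = ∫ r in (1:ℝ)..s, c * (r - 1) ^ q := by
          rw [intervalIntegral.integral_const_mul, integral_shift_rpow q s hq]
          field_simp
      _ ≤ _ := hmono
  -- outer integral bound
  have hGIcc : ContinuousOn G (Icc 1 t) := hGcont t ht1 htT
  have hprimcont : ContinuousOn (fun s => ∫ r in (1:ℝ)..s, G r) (Icc 1 t) := by
    have := intervalIntegral.continuousOn_primitive_interval
      (f := G) (μ := MeasureTheory.volume) (a := 1) (b := t)
      (by rw [uIcc_of_le ht1]; exact hGIcc.integrableOn_Icc)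
    rwa [uIcc_of_le ht1] at this
  have hOInt2 : IntervalIntegrable (fun s => ∫ r in (1:ℝ)..s, G r)
      MeasureTheory.volume 1 t := by
    apply ContinuousOn.intervalIntegrable; rwa [uIcc_of_le ht1]
  have hOInt1 : IntervalIntegrable (fun s => c / (q + 1) * (s - 1) ^ (q + 1))
      MeasureTheory.volume 1 t := by
    apply Continuous.intervalIntegrable
    exact continuous_const.mul ((continuous_id.sub continuous_const).rpow_const
      (fun x => Or.inr (by linarith)))
  have houter : c / (q + 1) * ((t - 1) ^ (q + 2) / (q + 2))
      ≤ ∫ s in (1:ℝ)..t, ∫ r in (1:ℝ)..s, G r := by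
    have hmono := intervalIntegral.integral_mono_on ht1 hOInt1 hOInt2 hinner
    calc c / (q + 1) * ((t - 1) ^ (q + 2) / (q + 2))
        = ∫ s in (1:ℝ)..t, c / (q + 1) * (s - 1) ^ (q + 1) := by
          rw [intervalIntegral.integral_const_mul, integral_shift_rpow (q+1) t (by linarith)]
          rw [show q + 1 + 1 = q + 2 by ring]
      _ ≤ _ := hmono
  -- conclude
  have hfr := hframe t ⟨ht1, htT⟩
  have hchain : C₃ * (c / (q + 1) * ((t - 1) ^ (q + 2) / (q + 2))) ≤ F t :=
    le_trans (mul_le_mul_of_nonneg_left houter hC₃.le) hfr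
  have heq : C₃ * (c / (q + 1) * ((t - 1) ^ (q + 2) / (q + 2)))
      = C₃ * d ^ p / ((q + 1) * (q + 2)) * (1 + t) ^ (-e) * (t - 1) ^ (q + 2) := by
    have h1 : q + 1 ≠ 0 := by linarith
    have h2 : q + 2 ≠ 0 := by linarith
    rw [hcdef]; field_simp
  linarith [hchain, heq.symm.le]

lemma main_bound (n : ℕ) (p C₃ D₁ : ℝ) (hp : 1 < p) (hn : 1 ≤ n) (hC₃ : 0 < C₃)
    (hD₁ : 0 < D₁) (T : ℝ) (F : ℝ → ℝ)
    (hcont : ContinuousOn F (Ico 1 T))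
    (hframe : ∀ t ∈ Ico (1:ℝ) T,
      C₃ * ∫ s in (1:ℝ)..t, ∫ r in (1:ℝ)..s, (1 + r) ^ (-((n:ℝ) * (p - 1))) * F r ^ p ≤ F t)
    (hfirst : ∀ t ∈ Ico (1:ℝ) T,
      D₁ * (1 + t) ^ (-(((n:ℝ) - 1) * p / 2)) * (t - 1) ^ (n + 1) ≤ F t) :
    ∀ j, ∀ t ∈ Ico (1:ℝ) T,
      dS n p C₃ D₁ j * (1 + t) ^ (-(aS n p j)) * (t - 1) ^ (bS n p j) ≤ F t := by
  intro j
  induction j with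
  | zero =>
    intro t ht
    have h := hfirst t ht
    have hv : (0:ℝ) ≤ t - 1 := by linarith [ht.1]
    have hcast : (t - 1) ^ (bS n p 0) = (t - 1) ^ (n + 1 : ℕ) := by
      show (t - 1) ^ ((n:ℝ) + 1) = _
      rw [show ((n:ℝ) + 1) = ((n + 1 : ℕ) : ℝ) by push_cast; ring, Real.rpow_natCast]
    show dS n p C₃ D₁ 0 * (1 + t) ^ (-(aS n p 0)) * (t - 1) ^ (bS n p 0) ≤ F t
    rw [hcast]
    exact h
  | succ j ih =>
    have hstep := step_lemma n p C₃ hp hC₃ T F hcont hframe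
      (dS n p C₃ D₁ j) (aS n p j) (bS n p j)
      (dS_pos n p C₃ D₁ hp hC₃ hD₁ j) (aS_nonneg n p hn hp j)
      (le_trans zero_le_one (bS_ge_one n p hp j)) ih
    intro t ht
    have := hstep t ht
    show dS n p C₃ D₁ (j + 1) * (1 + t) ^ (-(aS n p (j + 1)))
      * (t - 1) ^ (bS n p (j + 1)) ≤ F t
    simp only [dS, aS, bS]
    exact this

/-- The iteration (blow-up) lemma: for `n ≥ 1`, `p > 1` with
`γ(p,n) = 2 + (n+1)p - (n-1)p² > 0` and `C₃ > 0`, there is `C = C(n,p,C₃) > 0`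
such that for every `D₁ > 0`: if `T > 2` and `F : [1,T) → ℝ` is continuous,
nonnegative, satisfies the iteration frame
`F(t) ≥ C₃ ∫₁ᵗ ∫₁ˢ (1+r)^{-n(p-1)} F(r)^p dr ds` and the first-step bound
`F(t) ≥ D₁ (1+t)^{-(n-1)p/2} (t-1)^{n+1}`, then `T ≤ max(2, C D₁^{-2(p-1)/γ(p,n)})`. -/
theorem stmt_10 (n : ℕ) (hn : 1 ≤ n) (p C₃ : ℝ) (hp : 1 < p)
    (hγ : 0 < 2 + ((n : ℝ) + 1) * p - ((n : ℝ) - 1) * p ^ 2) (hC₃ : 0 < C₃) :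
    ∃ C : ℝ, 0 < C ∧
      ∀ D₁ : ℝ, 0 < D₁ →
        ∀ T : ℝ, 2 < T →
          ∀ F : ℝ → ℝ,
            ContinuousOn F (Ico 1 T) →
            (∀ t ∈ Ico (1 : ℝ) T, 0 ≤ F t) →
            (∀ t ∈ Ico (1 : ℝ) T,
              C₃ * ∫ s in (1 : ℝ)..t, ∫ r in (1 : ℝ)..s,
                  (1 + r) ^ (-((n : ℝ) * (p - 1))) * F r ^ p ≤ F t) →
            (∀ t ∈ Ico (1 : ℝ) T,
              D₁ * (1 + t) ^ (-(((n : ℝ) - 1) * p / 2)) * (t - 1) ^ (n + 1) ≤ F t) →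
            T ≤ max 2
              (C * D₁ ^ (-(2 * (p - 1) / (2 + ((n : ℝ) + 1) * p - ((n : ℝ) - 1) * p ^ 2)))) := by
  have hp1 : (0:ℝ) < p - 1 := by linarith
  set γ : ℝ := 2 + ((n : ℝ) + 1) * p - ((n : ℝ) - 1) * p ^ 2 with hγdef
  set a0 : ℝ := ((n : ℝ) - 1) * p / 2 with ha0def
  have ha0 : 0 ≤ a0 := aS_nonneg n p hn hp 0
  set K0 : ℝ := Sc n p C₃ + (a0 + (n : ℝ)) * Real.log 3 with hK0def
  clear_value a0 K0
  refine ⟨2 * Real.exp (K0 * (2 * (p - 1) / γ)), by positivity, ?_⟩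
  intro D₁ hD₁ T hT F hcont hpos hframe hfirst
  by_contra hcon
  push_neg at hcon
  set E : ℝ := -(2 * (p - 1) / γ) with hEdef
  set M : ℝ := max 2 (2 * Real.exp (K0 * (2 * (p - 1) / γ)) * D₁ ^ E) with hMdef
  have hM2 : (2:ℝ) ≤ M := le_max_left _ _
  set t₀ : ℝ := (M + T) / 2 with ht₀def
  clear_value M
  have ht₀M : M < t₀ := by rw [ht₀def]; linarith
  have ht₀T : t₀ < T := by rw [ht₀def]; linarith
  have ht₀2 : 2 < t₀ := lt_of_le_of_lt hM2 ht₀M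
  clear_value t₀
  have hmem : t₀ ∈ Ico (1:ℝ) T := ⟨by linarith, ht₀T⟩
  set u : ℝ := 1 + t₀ with hudef
  set v : ℝ := t₀ - 1 with hvdef
  have hu : (0:ℝ) < u := by rw [hudef]; linarith
  have hv1 : (1:ℝ) < v := by rw [hvdef]; linarith
  have hv : (0:ℝ) < v := by linarith
  clear_value u v
  set γ' : ℝ := γ / (2 * (p - 1)) with hγ'def
  have hγ' : 0 < γ' := div_pos hγ (by linarith)
  clear_value γ'
  have hγ'E : γ' * E = -1 := by
    rw [hγ'def, hEdef]
    field_simp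
  have hγ'K : γ' * (K0 * (2 * (p - 1) / γ)) = K0 := by
    rw [hγ'def]
    field_simp
  -- v is large
  have hM' : max 2 (2 * Real.exp (K0 * (2 * (p - 1) / γ)) * D₁ ^ E) < t₀ := by
    rw [← hMdef]; exact ht₀M
  have hCD : 2 * Real.exp (K0 * (2 * (p - 1) / γ)) * D₁ ^ E < t₀ :=
    lt_of_le_of_lt (le_max_right _ _) hM'
  have hvC : Real.exp (K0 * (2 * (p - 1) / γ)) * D₁ ^ E < v := by
    have h1 : 0 < D₁ ^ E := Real.rpow_pos_of_pos hD₁ E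
    have h2 : 0 < Real.exp (K0 * (2 * (p - 1) / γ)) := Real.exp_pos _
    rw [hvdef]
    nlinarith
  have hlogv : K0 * (2 * (p - 1) / γ) + E * Real.log D₁ < Real.log v := by
    have h := Real.log_lt_log (by positivity) hvC
    rwa [Real.log_mul (by positivity) (ne_of_gt (Real.rpow_pos_of_pos hD₁ E)),
      Real.log_exp, Real.log_rpow hD₁] at h
  -- J > 0
  set J : ℝ := Real.log D₁ - Sc n p C₃ - (a0 + (n:ℝ)) * Real.log u
      + Bc n p * Real.log v with hJdef
  clear_value J
  have hBγ : Bc n p = a0 + (n:ℝ) + γ' := by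
    rw [hγ'def, ha0def, hγdef]
    unfold Bc
    field_simp
    ring
  have hlogu : Real.log u ≤ Real.log 3 + Real.log v := by
    have h3v : u ≤ 3 * v := by rw [hudef, hvdef]; linarith
    have := Real.log_le_log hu h3v
    rwa [Real.log_mul (by norm_num) (ne_of_gt hv)] at this
  have hJpos : 0 < J := by
    have h1 : (a0 + (n:ℝ)) * Real.log u ≤ (a0 + (n:ℝ)) * (Real.log 3 + Real.log v) :=
      mul_le_mul_of_nonneg_left hlogu (by positivity)
    have h2 := mul_lt_mul_of_pos_left hlogv hγ'
    have h2' : K0 - Real.log D₁ < γ' * Real.log v := by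
      have hexpand : γ' * (K0 * (2 * (p - 1) / γ) + E * Real.log D₁)
          = K0 - Real.log D₁ := by
        rw [mul_add, hγ'K, ← mul_assoc, hγ'E]
        ring
      linarith [hexpand ▸ h2]
    have hK0' : K0 = Sc n p C₃ + (a0 + (n:ℝ)) * Real.log 3 := hK0def
    have h1' : (a0 + (n:ℝ)) * Real.log u
        ≤ (a0 + (n:ℝ)) * Real.log 3 + (a0 + (n:ℝ)) * Real.log v := by
      have hexp1 : (a0 + (n:ℝ)) * (Real.log 3 + Real.log v)
          = (a0 + (n:ℝ)) * Real.log 3 + (a0 + (n:ℝ)) * Real.log v := by ring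
      linarith [hexp1 ▸ h1]
    rw [hJdef, hBγ, add_mul]
    linarith [h1', h2', hK0'.ge, hK0'.le]
  set K' : ℝ := (n:ℝ) * Real.log u - 2 / (p - 1) * Real.log v with hK'def
  clear_value K'
  -- F t₀ dominates exp(p^j J + K')
  rw [ha0def] at hfirst
  have hmain := main_bound n p C₃ D₁ hp hn hC₃ hD₁ T F hcont hframe hfirst
  have hFG : ∀ j : ℕ, p ^ j * J + K' ≤ F t₀ := by
    intro j
    have hdpos := dS_pos n p C₃ D₁ hp hC₃ hD₁ j
    have hb := hmain j t₀ hmem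
    rw [← hudef, ← hvdef] at hb
    have hlogd : p ^ j * (Real.log D₁ - Sc n p C₃) ≤ Real.log (dS n p C₃ D₁ j) := by
      have hsum := sum_le_Sc n p C₃ hp j
      have hmono : p ^ j * (Real.log D₁ - Sc n p C₃) ≤ p ^ j * (Real.log D₁
          - ∑ k ∈ Finset.range j, (cc n p C₃ + 2 * ((k:ℝ) + 1) * Real.log p) / p ^ (k + 1)) := by
        apply mul_le_mul_of_nonneg_left _ (pow_nonneg (by linarith) j)
        linarith
      exact le_trans hmono (dS_log_closed n p C₃ D₁ hp hC₃ hD₁ j)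
    have hbig : Real.exp (p ^ j * J + K')
        ≤ dS n p C₃ D₁ j * u ^ (-(aS n p j)) * v ^ (bS n p j) := by
      rw [Real.rpow_def_of_pos hu, Real.rpow_def_of_pos hv, ← Real.exp_log hdpos,
        ← Real.exp_add, ← Real.exp_add]
      apply Real.exp_le_exp.mpr
      have hac := aS_closed n p j
      have hbc := bS_closed n p hp j
      calc p ^ j * J + K'
          = p ^ j * (Real.log D₁ - Sc n p C₃)
            + Real.log u * (-(p ^ j * (a0 + (n:ℝ)) - (n:ℝ)))
            + Real.log v * (p ^ j * ((n:ℝ) + 1 + 2 / (p - 1)) - 2 / (p - 1)) := by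
            simp only [hJdef, hK'def, hBγ, hγ'def, ha0def]
            field_simp
            ring
        _ ≤ Real.log (dS n p C₃ D₁ j)
            + Real.log u * (-(p ^ j * (a0 + (n:ℝ)) - (n:ℝ)))
            + Real.log v * (p ^ j * ((n:ℝ) + 1 + 2 / (p - 1)) - 2 / (p - 1)) := by
            linarith
        _ = Real.log (dS n p C₃ D₁ j) + Real.log u * (-aS n p j)
            + Real.log v * bS n p j := by
            rw [hac, hbc, ha0def]
    have hexpself : p ^ j * J + K' ≤ Real.exp (p ^ j * J + K') := by
      linarith [Real.add_one_le_exp (p ^ j * J + K')]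
    linarith [le_trans hbig hb]
  -- contradiction
  obtain ⟨N, hN⟩ := exists_nat_gt ((F t₀ - K' - J) / ((p - 1) * J))
  have hpN : 1 + (N:ℝ) * (p - 1) ≤ p ^ N := by
    have h := one_add_mul_le_pow (a := p - 1) (by linarith) N
    rwa [show 1 + (p - 1) = p by ring] at h
  have h1 : F t₀ - K' - J < (N:ℝ) * ((p - 1) * J) := by
    rw [div_lt_iff₀ (mul_pos hp1 hJpos)] at hN
    linarith
  have h2 := hFG N
  have h3 : (1 + (N:ℝ) * (p - 1)) * J ≤ p ^ N * J :=
    mul_le_mul_of_nonneg_right hpN (le_of_lt hJpos)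
  have h4 : J + (N:ℝ) * ((p - 1) * J) = (1 + (N:ℝ) * (p - 1)) * J := by ring
  linarith
end

section
/- Let n ≥ 1 and p > 1 satisfy γ(p,n) := 2 + (n+1)p − (n−1)p² > 2, and let C₃ > 0. Then there exists a constant C = C(n,p,C₃) > 0 such that the following holds for every D̃₁ > 0: if T > 1 and F : [0,T) → ℝ is continuous, nonnegative, and satisfies for all t ∈ [0,T) both F(t) ≥ C₃ ∫₀ᵗ ds ∫₀ˢ (1+r)^{−n(p−1)} F(r)^p dr and F(t) ≥ D̃₁ (1+t)^{−n(p−1)} t^{p+2}, then T ≤ max(1, C D̃₁^{−(p−1)/(γ(p,n)−2)}). -/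
set_option maxHeartbeats 1000000

open Set

noncomputable def Bseq (p : ℝ) : ℕ → ℝ
  | 0 => p + 2
  | (k+1) => p * Bseq p k + 2

noncomputable def Dseq (p C₃ D₁ : ℝ) : ℕ → ℝ
  | 0 => D₁
  | (k+1) => C₃ * (Dseq p C₃ D₁ k) ^ p / (Bseq p (k+1)) ^ 2

lemma Bseq_ge {p : ℝ} (hp : 1 < p) : ∀ k, p + 2 ≤ Bseq p k
  | 0 => le_rfl
  | (k+1) => by
      have h := Bseq_ge hp k
      simp only [Bseq]
      nlinarith

lemma Bseq_pos {p : ℝ} (hp : 1 < p) (k : ℕ) : 0 < Bseq p k :=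
  lt_of_lt_of_le (by linarith) (Bseq_ge hp k)

lemma Bseq_closed {p : ℝ} (hp : 1 < p) : ∀ k,
    Bseq p k = (p + 2 + 2 / (p - 1)) * p ^ k - 2 / (p - 1)
  | 0 => by simp [Bseq]
  | (k+1) => by
      have h := Bseq_closed hp k
      have hp1 : p - 1 ≠ 0 := by intro h'; nlinarith
      simp only [Bseq, h]
      field_simp
      ring

lemma Dseq_pos {p C₃ D₁ : ℝ} (hp : 1 < p) (hC₃ : 0 < C₃) (hD₁ : 0 < D₁) :
    ∀ k, 0 < Dseq p C₃ D₁ k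
  | 0 => hD₁
  | (k+1) => by
      have h := Dseq_pos hp hC₃ hD₁ k
      have hB := Bseq_pos hp (k+1)
      show 0 < C₃ * (Dseq p C₃ D₁ k) ^ p / (Bseq p (k+1)) ^ 2
      exact div_pos (mul_pos hC₃ (Real.rpow_pos_of_pos h p)) (pow_pos hB 2)

noncomputable def Kc1 (p C₃ : ℝ) : ℝ :=
  max 0 (-Real.log C₃) + 2 * Real.log (p + 2 + 2 / (p - 1)) + 2 * Real.log p

noncomputable def Mc (p C₃ : ℝ) : ℝ := 2 * Kc1 p C₃ * max 1 (1 / (p - 1))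

noncomputable def Kc' (p C₃ : ℝ) : ℝ := Mc p C₃ * (1 + 2 / (p - 1))

lemma Kc1_nonneg {p : ℝ} (C₃ : ℝ) (hp : 1 < p) : 0 ≤ Kc1 p C₃ := by
  have hd : 0 < 2 / (p - 1) := div_pos two_pos (by linarith)
  have h2 : 0 ≤ Real.log (p + 2 + 2 / (p - 1)) := Real.log_nonneg (by linarith)
  have h3 : 0 ≤ Real.log p := Real.log_nonneg hp.le
  have h4 : (0:ℝ) ≤ max 0 (-Real.log C₃) := le_max_left _ _
  unfold Kc1; linarith

lemma Mc_nonneg {p : ℝ} (C₃ : ℝ) (hp : 1 < p) : 0 ≤ Mc p C₃ := by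
  have h := Kc1_nonneg C₃ hp
  have h1 : (1:ℝ) ≤ max 1 (1 / (p - 1)) := le_max_left _ _
  unfold Mc; nlinarith

lemma Dseq_log {p C₃ D₁ : ℝ} (hp : 1 < p) (hC₃ : 0 < C₃) (hD₁ : 0 < D₁) (k : ℕ) :
    p ^ k * (Real.log D₁ - Kc' p C₃) + Mc p C₃ * ((k : ℝ) + 1 + 2 / (p - 1))
      ≤ Real.log (Dseq p C₃ D₁ k) := by
  induction k with
  | zero =>
      have h0 : Dseq p C₃ D₁ 0 = D₁ := rfl
      have hK' : Kc' p C₃ = Mc p C₃ * (1 + 2 / (p - 1)) := rfl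
      rw [h0, pow_zero, hK']
      push_cast
      apply le_of_eq
      ring
  | succ k ih =>
      have hDk := Dseq_pos hp hC₃ hD₁ k
      have hBk1 := Bseq_pos hp (k+1)
      have hp1 : p - 1 ≠ 0 := by intro h'; nlinarith
      have hd : 0 < 2 / (p - 1) := div_pos two_pos (by linarith)
      set β := p + 2 + 2 / (p - 1) with hβ
      have hβ3 : (3:ℝ) ≤ β := by rw [hβ]; linarith
      have hBle : Bseq p (k+1) ≤ β * p ^ (k+1) := by
        rw [Bseq_closed hp, ← hβ]; linarith
      have hlogB : Real.log (Bseq p (k+1)) ≤ Real.log β + ((k:ℝ)+1) * Real.log p := by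
        calc Real.log (Bseq p (k+1)) ≤ Real.log (β * p ^ (k+1)) :=
              Real.log_le_log hBk1 hBle
          _ = Real.log β + ((k:ℝ)+1) * Real.log p := by
              rw [Real.log_mul (by linarith) (pow_ne_zero _ (by linarith : p ≠ 0)),
                Real.log_pow]
              push_cast; ring
      have hlog : Real.log (Dseq p C₃ D₁ (k+1))
          = Real.log C₃ + p * Real.log (Dseq p C₃ D₁ k)
            - 2 * Real.log (Bseq p (k+1)) := by
        show Real.log (C₃ * (Dseq p C₃ D₁ k) ^ p / (Bseq p (k+1)) ^ 2) = _
        rw [Real.log_div (ne_of_gt (mul_pos hC₃ (Real.rpow_pos_of_pos hDk p)))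
              (pow_ne_zero 2 (ne_of_gt hBk1)),
            Real.log_mul (ne_of_gt hC₃) (ne_of_gt (Real.rpow_pos_of_pos hDk p)),
            Real.log_rpow hDk, Real.log_pow]
        push_cast; ring
      have hK := Kc1_nonneg C₃ hp
      have hlogβ : 0 ≤ Real.log β := Real.log_nonneg (by linarith)
      have hlogp : 0 ≤ Real.log p := Real.log_nonneg hp.le
      have hmax1 : (1:ℝ) ≤ max 1 (1/(p-1)) := le_max_left _ _
      have hmaxp : 1 ≤ max 1 (1/(p-1)) * (p-1) := by
        rcases le_total (1/(p-1)) 1 with h | h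
        · rw [max_eq_left h]
          rw [div_le_one (by linarith)] at h
          linarith
        · rw [max_eq_right h]
          rw [div_mul_cancel₀]
          linarith
      have hKc1def : Kc1 p C₃ = max 0 (-Real.log C₃) + 2*Real.log β + 2*Real.log p := rfl
      have hKlogp : 2 * Real.log p ≤ Kc1 p C₃ := by
        rw [hKc1def]
        have := le_max_left (0:ℝ) (-Real.log C₃)
        linarith
      have hKfull : -Real.log C₃ + 2*Real.log β + 2*Real.log p ≤ Kc1 p C₃ := by
        rw [hKc1def]
        have := le_max_right (0:ℝ) (-Real.log C₃)
        linarith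
      have hk0 : (0:ℝ) ≤ (k:ℝ) := Nat.cast_nonneg k
      have hkK : (0:ℝ) ≤ (k:ℝ) * Kc1 p C₃ := mul_nonneg hk0 hK
      have h5 : (k:ℝ) * (2*Real.log p) ≤ (k:ℝ) * Kc1 p C₃ :=
        mul_le_mul_of_nonneg_left hKlogp hk0
      have e2 : 2*Real.log β + 2*((k:ℝ)+1)*Real.log p - Real.log C₃
          ≤ 2*(Kc1 p C₃)*((k:ℝ)+2) := by nlinarith
      have hA : (p-1) * (2/(p-1)) = 2 := by
        rw [mul_comm]; exact div_mul_cancel₀ 2 hp1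
      have t1 : (k:ℝ)+1 ≤ max 1 (1/(p-1)) * ((p-1)*((k:ℝ)+1)) := by
        have h := mul_le_mul_of_nonneg_right hmaxp (by linarith : (0:ℝ) ≤ (k:ℝ)+1)
        nlinarith
      have hMdef : Mc p C₃ = 2 * Kc1 p C₃ * max 1 (1/(p-1)) := rfl
      have e1 : Mc p C₃*((k:ℝ)+2+2/(p-1)) + 2*(Kc1 p C₃)*((k:ℝ)+2)
          ≤ p*(Mc p C₃*((k:ℝ)+1+2/(p-1))) := by
        have expand : p*(Mc p C₃*((k:ℝ)+1+2/(p-1))) - Mc p C₃*((k:ℝ)+2+2/(p-1))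
            = Mc p C₃ * ((p-1)*((k:ℝ)+1) + 1) := by
          have h0 : p*(Mc p C₃*((k:ℝ)+1+2/(p-1))) - Mc p C₃*((k:ℝ)+2+2/(p-1))
              = Mc p C₃ * ((p-1)*((k:ℝ)+1) + ((p-1)*(2/(p-1)) - 1)) := by ring
          rw [h0, hA]; ring
        have key : 2*(Kc1 p C₃)*((k:ℝ)+2) ≤ Mc p C₃*((p-1)*((k:ℝ)+1)+1) := by
          rw [hMdef]
          have h2 : (k:ℝ)+2 ≤ max 1 (1/(p-1)) * ((p-1)*((k:ℝ)+1)) + max 1 (1/(p-1)) := by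
            linarith
          nlinarith
        linarith
      have hmain := mul_le_mul_of_nonneg_left ih (by linarith : (0:ℝ) ≤ p)
      have hps : p * (p ^ k * (Real.log D₁ - Kc' p C₃))
          = p ^ (k+1) * (Real.log D₁ - Kc' p C₃) := by rw [pow_succ]; ring
      rw [hlog]
      push_cast
      nlinarith [hmain, hlogB, e1, e2, hps]

lemma iter_step (n : ℕ) (p C₃ T : ℝ) (hp : 1 < p) (hC₃ : 0 < C₃)
    (F : ℝ → ℝ) (hF : ContinuousOn F (Ico 0 T)) (hFnn : ∀ t ∈ Ico (0:ℝ) T, 0 ≤ F t)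
    (h1 : ∀ t ∈ Ico (0:ℝ) T,
      C₃ * ∫ s in (0:ℝ)..t, ∫ r in (0:ℝ)..s,
        (1 + r) ^ (-((n:ℝ) * (p - 1))) * F r ^ p ≤ F t)
    (Dk Ak Bk : ℝ) (hDk : 0 < Dk) (hAk : 0 ≤ Ak) (hBk : 0 < Bk)
    (hlow : ∀ t ∈ Ico (0:ℝ) T, Dk * (1 + t) ^ (-Ak) * t ^ Bk ≤ F t) :
    ∀ t ∈ Ico (0:ℝ) T,
      (C₃ * Dk ^ p / (p * Bk + 2) ^ 2) * (1 + t) ^ (-((n:ℝ)*(p-1) + p * Ak))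
        * t ^ (p * Bk + 2) ≤ F t := by
  intro t ht
  obtain ⟨ht0, htT⟩ := ht
  set α : ℝ := (n:ℝ) * (p - 1) with hα
  have hα0 : 0 ≤ α := mul_nonneg (Nat.cast_nonneg n) (by linarith)
  set c : ℝ := p * Bk with hc
  have hc0 : 0 < c := mul_pos (by linarith) hBk
  have hp0 : (0:ℝ) ≤ p := by linarith
  have hIccsub : Icc (0:ℝ) t ⊆ Ico 0 T := fun x hx => ⟨hx.1, lt_of_le_of_lt hx.2 htT⟩
  set φ : ℝ → ℝ := fun r => (1 + r) ^ (-α) * F r ^ p with hφ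
  have hφcont : ContinuousOn φ (Icc 0 t) := by
    apply ContinuousOn.mul
    · apply ContinuousOn.rpow_const (by fun_prop)
      intro x hx
      left
      have hx0 : (0:ℝ) ≤ x := hx.1
      intro h
      linarith [h]
    · exact (hF.mono hIccsub).rpow_const (fun x _ => Or.inr hp0)
  set E : ℝ := -(α + p * Ak) with hE
  have hE0 : E ≤ 0 := by rw [hE]; nlinarith
  have h1t : (0:ℝ) < 1 + t := by linarith
  set Kc : ℝ := Dk ^ p * (1 + t) ^ E with hKc
  have hKcpos : 0 < Kc :=
    mul_pos (Real.rpow_pos_of_pos hDk p) (Real.rpow_pos_of_pos h1t E)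
  -- pointwise bound
  have hpt : ∀ r ∈ Icc (0:ℝ) t, Kc * r ^ c ≤ φ r := by
    intro r hr
    have hr0 : (0:ℝ) ≤ r := hr.1
    have hrt : r ≤ t := hr.2
    have h1r : (0:ℝ) < 1 + r := by linarith
    have hFr := hlow r (hIccsub hr)
    have hFrnn : 0 ≤ Dk * (1+r) ^ (-Ak) * r ^ Bk :=
      mul_nonneg (mul_nonneg hDk.le (Real.rpow_nonneg h1r.le _)) (Real.rpow_nonneg hr0 _)
    have h2 : (Dk * (1+r) ^ (-Ak) * r ^ Bk) ^ p ≤ F r ^ p :=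
      Real.rpow_le_rpow hFrnn hFr hp0
    have h3 : (Dk * (1+r) ^ (-Ak) * r ^ Bk) ^ p
        = Dk ^ p * (1+r) ^ (-(p*Ak)) * r ^ c := by
      rw [Real.mul_rpow (mul_nonneg hDk.le (Real.rpow_nonneg h1r.le _))
            (Real.rpow_nonneg hr0 _),
          Real.mul_rpow hDk.le (Real.rpow_nonneg h1r.le _),
          ← Real.rpow_mul h1r.le, ← Real.rpow_mul hr0]
      rw [show -Ak * p = -(p * Ak) by ring, show Bk * p = c by rw [hc]; ring]
    calc Kc * r ^ c ≤ (Dk ^ p * (1+r) ^ E) * r ^ c := by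
          apply mul_le_mul_of_nonneg_right _ (Real.rpow_nonneg hr0 c)
          apply mul_le_mul_of_nonneg_left _ (Real.rpow_nonneg hDk.le p)
          exact Real.rpow_le_rpow_of_nonpos h1r (by linarith) hE0
      _ = (1+r) ^ (-α) * (Dk ^ p * (1+r) ^ (-(p*Ak)) * r ^ c) := by
          rw [hE, show -(α + p*Ak) = (-α) + (-(p*Ak)) by ring, Real.rpow_add h1r]
          ring
      _ ≤ (1+r) ^ (-α) * F r ^ p := by
          apply mul_le_mul_of_nonneg_left _ (Real.rpow_nonneg h1r.le _)
          rw [← h3]; exact h2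
      _ = φ r := rfl
  -- inner integral bound
  have hinner : ∀ s ∈ Icc (0:ℝ) t,
      Kc / (c+1) * s ^ (c+1) ≤ ∫ r in (0:ℝ)..s, φ r := by
    intro s hs
    have hs0 : (0:ℝ) ≤ s := hs.1
    have hsub2 : Icc (0:ℝ) s ⊆ Icc 0 t := Icc_subset_Icc le_rfl hs.2
    have hψint : IntervalIntegrable (fun r => Kc * r ^ c) MeasureTheory.volume 0 s :=
      (continuous_const.mul (Real.continuous_rpow_const hc0.le)).intervalIntegrable 0 s
    have hφint : IntervalIntegrable φ MeasureTheory.volume 0 s := by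
      apply ContinuousOn.intervalIntegrable
      rw [uIcc_of_le hs0]
      exact hφcont.mono hsub2
    have hmono := intervalIntegral.integral_mono_on hs0 hψint hφint
      (fun x hx => hpt x (hsub2 hx))
    have hval : (∫ r in (0:ℝ)..s, Kc * r ^ c) = Kc / (c+1) * s ^ (c+1) := by
      rw [intervalIntegral.integral_const_mul, integral_rpow (Or.inl (by linarith))]
      rw [Real.zero_rpow (ne_of_gt (by linarith : (0:ℝ) < c + 1))]
      ring
    rw [hval] at hmono
    exact hmono
  -- outer integral
  have hφIntt : MeasureTheory.IntegrableOn φ (uIcc 0 t) MeasureTheory.volume := by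
    rw [uIcc_of_le ht0]
    exact hφcont.integrableOn_Icc
  set g : ℝ → ℝ := fun s => ∫ r in (0:ℝ)..s, φ r with hg
  have hgcont : ContinuousOn g (Icc 0 t) := by
    have := intervalIntegral.continuousOn_primitive_interval hφIntt
    rwa [uIcc_of_le ht0] at this
  have hgint : IntervalIntegrable g MeasureTheory.volume 0 t := by
    apply ContinuousOn.intervalIntegrable
    rwa [uIcc_of_le ht0]
  have hhint : IntervalIntegrable (fun s => Kc / (c+1) * s ^ (c+1))
      MeasureTheory.volume 0 t :=
    (continuous_const.mul (Real.continuous_rpow_const (by linarith))).intervalIntegrable 0 t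
  have houter := intervalIntegral.integral_mono_on ht0 hhint hgint hinner
  have hval2 : (∫ s in (0:ℝ)..t, Kc / (c+1) * s ^ (c+1))
      = Kc / ((c+1)*(c+2)) * t ^ (c+2) := by
    rw [intervalIntegral.integral_const_mul, integral_rpow (Or.inl (by linarith)),
        Real.zero_rpow (ne_of_gt (by linarith : (0:ℝ) < c + 1 + 1)),
        show c + 1 + 1 = c + 2 by ring]
    field_simp
    try ring
  rw [hval2] at houter
  have hFt := h1 t ⟨ht0, htT⟩
  have hC3mul : C₃ * (Kc / ((c+1)*(c+2)) * t ^ (c+2)) ≤ F t := by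
    calc C₃ * (Kc / ((c+1)*(c+2)) * t ^ (c+2))
        ≤ C₃ * ∫ s in (0:ℝ)..t, g s := by
          apply mul_le_mul_of_nonneg_left houter hC₃.le
      _ ≤ F t := hFt
  calc (C₃ * Dk ^ p / (p * Bk + 2) ^ 2) * (1 + t) ^ E * t ^ (p * Bk + 2)
      = C₃ * (Kc / ((c+2)^2) * t ^ (c+2)) := by
        rw [hKc, hc]
        ring
    _ ≤ C₃ * (Kc / ((c+1)*(c+2)) * t ^ (c+2)) := by
        apply mul_le_mul_of_nonneg_left _ hC₃.le
        apply mul_le_mul_of_nonneg_right _ (Real.rpow_nonneg ht0 _)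
        apply div_le_div_of_nonneg_left hKcpos.le (by nlinarith) (by nlinarith)
    _ ≤ F t := hC3mul

/-- The low-dimensional iteration (blow-up) lemma: for `n ≥ 1`, `p > 1` with
`γ(p,n) = 2 + (n+1)p - (n-1)p² > 2` and `C₃ > 0`, there is `C = C(n,p,C₃) > 0`
such that for every `D̃₁ > 0`: if `T > 1` and `F : [0,T) → ℝ` is continuous,
nonnegative, satisfies the iteration frame
`F(t) ≥ C₃ ∫₀ᵗ ∫₀ˢ (1+r)^{-n(p-1)} F(r)^p dr ds` and the first-step bound
`F(t) ≥ D̃₁ (1+t)^{-n(p-1)} t^{p+2}`, then `T ≤ max(1, C D̃₁^{-(p-1)/(γ(p,n)-2)})`. -/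
theorem stmt_13 (n : ℕ) (hn : 1 ≤ n) (p C₃ : ℝ) (hp : 1 < p)
    (hγ : 2 < 2 + ((n : ℝ) + 1) * p - ((n : ℝ) - 1) * p ^ 2) (hC₃ : 0 < C₃) :
    ∃ C : ℝ, 0 < C ∧
      ∀ D₁ : ℝ, 0 < D₁ →
        ∀ T : ℝ, 1 < T →
          ∀ F : ℝ → ℝ,
            ContinuousOn F (Ico 0 T) →
            (∀ t ∈ Ico (0 : ℝ) T, 0 ≤ F t) →
            (∀ t ∈ Ico (0 : ℝ) T,
              C₃ * ∫ s in (0 : ℝ)..t, ∫ r in (0 : ℝ)..s,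
                  (1 + r) ^ (-((n : ℝ) * (p - 1))) * F r ^ p ≤ F t) →
            (∀ t ∈ Ico (0 : ℝ) T,
              D₁ * (1 + t) ^ (-((n : ℝ) * (p - 1))) * t ^ (p + 2) ≤ F t) →
            T ≤ max 1
              (C * D₁ ^ (-((p - 1) / ((2 + ((n : ℝ) + 1) * p - ((n : ℝ) - 1) * p ^ 2) - 2)))) := by
  have hp1 : p - 1 ≠ 0 := by intro h'; nlinarith
  set g : ℝ := (2 + ((n : ℝ) + 1) * p - ((n : ℝ) - 1) * p ^ 2) - 2 with hgdef
  have hg : 0 < g := by rw [hgdef]; linarith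
  set X : ℝ := 2 * Real.exp (Kc' p C₃) * (2:ℝ) ^ ((n:ℝ) * p) with hX
  have hXpos : 0 < X := by
    rw [hX]
    have := Real.exp_pos (Kc' p C₃)
    have := Real.rpow_pos_of_pos (by norm_num : (0:ℝ) < 2) ((n:ℝ) * p)
    positivity
  refine ⟨X ^ ((p - 1)/g), Real.rpow_pos_of_pos hXpos _, ?_⟩
  intro D₁ hD₁ T hT F hFc hFnn h1 h2
  by_contra hcon
  push_neg at hcon
  set C : ℝ := X ^ ((p - 1)/g) with hC
  have hCpos : 0 < C := Real.rpow_pos_of_pos hXpos _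
  set mx : ℝ := max 1 (C * D₁ ^ (-((p - 1) / g))) with hmx
  have hmx1 : (1:ℝ) ≤ mx := le_max_left _ _
  have hmxlt : mx < T := hcon
  set t : ℝ := (mx + T) / 2 with htdef
  have ht1 : 1 < t := by rw [htdef]; linarith
  have htmx : mx < t := by rw [htdef]; linarith
  have htC : C * D₁ ^ (-((p - 1) / g)) < t :=
    lt_of_le_of_lt (le_max_right 1 _) htmx
  have htT : t < T := by rw [htdef]; linarith
  have ht0 : (0:ℝ) ≤ t := by linarith
  have htmem : t ∈ Ico (0:ℝ) T := ⟨ht0, htT⟩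
  have htpos : (0:ℝ) < t := by linarith
  -- main induction
  have main : ∀ k : ℕ, ∀ s ∈ Ico (0:ℝ) T,
      Dseq p C₃ D₁ k * (1 + s) ^ (-((n:ℝ) * (p ^ (k+1) - 1))) * s ^ (Bseq p k) ≤ F s := by
    intro k
    induction k with
    | zero =>
        intro s hs
        have := h2 s hs
        simpa [Dseq, Bseq, zero_add, pow_one] using this
    | succ k ih =>
        have hAk : (0:ℝ) ≤ (n:ℝ) * (p ^ (k+1) - 1) := by
          have h' : (1:ℝ) ≤ p ^ (k+1) := one_le_pow₀ hp.le
          have hn0 : (0:ℝ) ≤ (n:ℝ) := Nat.cast_nonneg n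
          nlinarith
        have step := iter_step n p C₃ T hp hC₃ F hFc hFnn h1
          (Dseq p C₃ D₁ k) ((n:ℝ) * (p ^ (k+1) - 1)) (Bseq p k)
          (Dseq_pos hp hC₃ hD₁ k) hAk (Bseq_pos hp k) ih
        intro s hs
        have hss := step s hs
        have hexp : -((n:ℝ)*(p-1) + p * ((n:ℝ) * (p ^ (k+1) - 1)))
            = -((n:ℝ) * (p ^ (k+1+1) - 1)) := by ring
        have hBstep : p * Bseq p k + 2 = Bseq p (k+1) := rfl
        rw [hexp, hBstep] at hss
        have hDstep : C₃ * (Dseq p C₃ D₁ k) ^ p / (Bseq p (k+1)) ^ 2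
            = Dseq p C₃ D₁ (k+1) := rfl
        rw [hDstep] at hss
        exact hss
  -- lower bound on Dseq
  have hDlow : ∀ k : ℕ, Real.exp (p ^ k * (Real.log D₁ - Kc' p C₃)) ≤ Dseq p C₃ D₁ k := by
    intro k
    have h := Dseq_log hp hC₃ hD₁ k
    have hM := Mc_nonneg C₃ hp
    have hnn : 0 ≤ Mc p C₃ * ((k:ℝ) + 1 + 2/(p-1)) := by
      apply mul_nonneg hM
      have h1' : (0:ℝ) ≤ (k:ℝ) := Nat.cast_nonneg k
      have h2' : (0:ℝ) < 2/(p-1) := div_pos two_pos (by linarith)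
      linarith
    calc Real.exp (p ^ k * (Real.log D₁ - Kc' p C₃))
        ≤ Real.exp (Real.log (Dseq p C₃ D₁ k)) := by
          apply Real.exp_le_exp.mpr
          linarith
      _ = Dseq p C₃ D₁ k := Real.exp_log (Dseq_pos hp hC₃ hD₁ k)
  -- the base quantity
  set β : ℝ := p + 2 + 2/(p-1) with hβ
  set δ : ℝ := Real.exp (Real.log D₁ - Kc' p C₃) with hδ
  have hδpos : 0 < δ := Real.exp_pos _
  set Q : ℝ := δ * ((2*t) ^ (-((n:ℝ)*p))) * t ^ β with hQdef
  have h2t1 : (1:ℝ) ≤ 2 * t := by linarith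
  have h2tpos : (0:ℝ) < 2 * t := by linarith
  -- Q ≥ 2
  have hQ2 : (2:ℝ) ≤ Q := by
    have e : (0:ℝ) < g/(p-1) := div_pos hg (by linarith)
    have hbase : (0:ℝ) ≤ C * D₁ ^ (-((p-1)/g)) :=
      mul_nonneg hCpos.le (Real.rpow_nonneg hD₁.le _)
    have ht_rpow : (C * D₁ ^ (-((p-1)/g))) ^ (g/(p-1)) ≤ t ^ (g/(p-1)) :=
      Real.rpow_le_rpow hbase htC.le e.le
    have hCval : (C * D₁ ^ (-((p-1)/g))) ^ (g/(p-1)) = X * D₁⁻¹ := by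
      rw [Real.mul_rpow hCpos.le (Real.rpow_nonneg hD₁.le _), hC,
          ← Real.rpow_mul hXpos.le, ← Real.rpow_mul hD₁.le]
      have h1' : (p-1)/g * (g/(p-1)) = 1 := by field_simp
      have h2' : -((p-1)/g) * (g/(p-1)) = -1 := by field_simp
      rw [h1', h2', Real.rpow_one, Real.rpow_neg_one]
    have hβnp : β - (n:ℝ)*p = g/(p-1) := by
      rw [hβ, hgdef]
      field_simp
      ring
    have hQcalc : Q = δ * (2:ℝ) ^ (-((n:ℝ)*p)) * t ^ (g/(p-1)) := by
      have hcomb : t ^ (-((n:ℝ)*p)) * t ^ β = t ^ (β - (n:ℝ)*p) := by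
        rw [← Real.rpow_add htpos]; congr 1; ring
      rw [hQdef, Real.mul_rpow (by norm_num : (0:ℝ) ≤ 2) ht0, ← hβnp, ← hcomb]
      ring
    have hδval : δ = D₁ / Real.exp (Kc' p C₃) := by
      rw [hδ, Real.exp_sub, Real.exp_log hD₁]
    have hfinal : δ * (2:ℝ) ^ (-((n:ℝ)*p)) * (X * D₁⁻¹) = 2 := by
      rw [hδval, hX, Real.rpow_neg (by norm_num : (0:ℝ) ≤ 2)]
      have hexpK : Real.exp (Kc' p C₃) ≠ 0 := (Real.exp_pos _).ne'
      have h2np : ((2:ℝ) ^ ((n:ℝ)*p)) ≠ 0 :=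
        (Real.rpow_pos_of_pos (by norm_num) _).ne'
      have hD₁ne : D₁ ≠ 0 := hD₁.ne'
      field_simp
      try ring
    calc (2:ℝ) = δ * (2:ℝ) ^ (-((n:ℝ)*p)) * (X * D₁⁻¹) := hfinal.symm
      _ = δ * (2:ℝ) ^ (-((n:ℝ)*p)) * ((C * D₁ ^ (-((p-1)/g))) ^ (g/(p-1))) := by
          rw [hCval]
      _ ≤ δ * (2:ℝ) ^ (-((n:ℝ)*p)) * t ^ (g/(p-1)) := by
          apply mul_le_mul_of_nonneg_left ht_rpow
          exact mul_nonneg hδpos.le (Real.rpow_nonneg (by norm_num) _)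
      _ = Q := hQcalc.symm
  -- per-k lower bound at t
  have hkey : ∀ k : ℕ, Q ^ ((p:ℝ) ^ k) * t ^ (-(2/(p-1))) ≤ F t := by
    intro k
    have hFt := main k t htmem
    have hD := hDlow k
    have hpk0 : (0:ℝ) ≤ p ^ k := pow_nonneg (by linarith) k
    have hAkle : (n:ℝ) * (p ^ (k+1) - 1) ≤ (n:ℝ)*p * p^k := by
      have hn0 : (0:ℝ) ≤ (n:ℝ) := Nat.cast_nonneg n
      have hps : p ^ (k+1) = p * p ^ k := by rw [pow_succ]; ring
      nlinarith
    have hstep1 : ((2*t) : ℝ) ^ (-((n:ℝ)*p*p^k)) ≤ (1+t) ^ (-((n:ℝ)*(p^(k+1)-1))) := by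
      calc ((2*t) : ℝ) ^ (-((n:ℝ)*p*p^k)) ≤ (2*t) ^ (-((n:ℝ)*(p^(k+1)-1))) := by
            apply Real.rpow_le_rpow_of_exponent_le h2t1
            linarith
        _ ≤ (1+t) ^ (-((n:ℝ)*(p^(k+1)-1))) := by
            apply Real.rpow_le_rpow_of_nonpos (by linarith) (by linarith)
            have h' : (1:ℝ) ≤ p ^ (k+1) := one_le_pow₀ hp.le
            have hn0 : (0:ℝ) ≤ (n:ℝ) := Nat.cast_nonneg n
            nlinarith
    have htB : t ^ (Bseq p k) = t ^ (β * p ^ k) * t ^ (-(2/(p-1))) := by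
      rw [Bseq_closed hp, ← hβ, show β * p^k - 2/(p-1) = β * p^k + (-(2/(p-1))) by ring,
          Real.rpow_add htpos]
    have hQexp : Q ^ ((p:ℝ) ^ k)
        = δ ^ ((p:ℝ)^k) * ((2*t) ^ (-((n:ℝ)*p*p^k))) * t ^ (β * p^k) := by
      rw [hQdef, Real.mul_rpow
            (mul_nonneg hδpos.le (Real.rpow_nonneg h2tpos.le _))
            (Real.rpow_nonneg ht0 β),
          Real.mul_rpow hδpos.le (Real.rpow_nonneg h2tpos.le _),
          ← Real.rpow_mul h2tpos.le, ← Real.rpow_mul ht0]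
      rw [show -((n:ℝ)*p) * p^k = -((n:ℝ)*p*p^k) by ring,
          show β * p^k = β * p^k by ring]
    have hδexp : δ ^ ((p:ℝ)^k) = Real.exp (p ^ k * (Real.log D₁ - Kc' p C₃)) := by
      rw [hδ, ← Real.exp_mul]
      congr 1
      ring
    have f1 : δ ^ ((p:ℝ)^k) ≤ Dseq p C₃ D₁ k := by rw [hδexp]; exact hD
    have nn2 : (0:ℝ) ≤ ((2*t) : ℝ) ^ (-((n:ℝ)*p*p^k)) := Real.rpow_nonneg h2tpos.le _
    have nn3 : (0:ℝ) ≤ t ^ (β * p^k) := Real.rpow_nonneg ht0 _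
    have nn4 : (0:ℝ) ≤ t ^ (-(2/(p-1))) := Real.rpow_nonneg ht0 _
    have nn6 : (0:ℝ) ≤ Dseq p C₃ D₁ k := (Dseq_pos hp hC₃ hD₁ k).le
    have hchain : Q ^ ((p:ℝ) ^ k) * t ^ (-(2/(p-1)))
        ≤ Dseq p C₃ D₁ k * (1 + t) ^ (-((n:ℝ)*(p^(k+1)-1))) * t ^ (Bseq p k) := by
      rw [hQexp, htB]
      calc δ ^ ((p:ℝ)^k) * ((2*t) ^ (-((n:ℝ)*p*p^k))) * t ^ (β * p^k)
            * (t ^ (-(2/(p-1))))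
          ≤ Dseq p C₃ D₁ k * ((1+t) ^ (-((n:ℝ)*(p^(k+1)-1)))) * t ^ (β * p^k)
            * (t ^ (-(2/(p-1)))) := by
            apply mul_le_mul_of_nonneg_right _ nn4
            apply mul_le_mul_of_nonneg_right _ nn3
            exact mul_le_mul f1 hstep1 nn2 nn6
        _ = Dseq p C₃ D₁ k * (1 + t) ^ (-((n:ℝ)*(p^(k+1)-1)))
            * (t ^ (β * p^k) * t ^ (-(2/(p-1)))) := by ring
    exact le_trans hchain hFt
  -- contradiction
  set c0 : ℝ := t ^ (-(2/(p-1))) with hc0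
  have hc0pos : 0 < c0 := Real.rpow_pos_of_pos htpos _
  have hlog2 : (0:ℝ) < Real.log 2 := Real.log_pos (by norm_num)
  obtain ⟨k, hk⟩ := exists_nat_gt ((F t / c0 / Real.log 2 - 1) / (p - 1))
  have hbern : 1 + (k:ℝ) * (p-1) ≤ p ^ k := by
    have h := one_add_mul_le_pow (a := p - 1) (by linarith) k
    have he : (1 + (p-1) : ℝ) = p := by ring
    rw [he] at h
    exact h
  have h2Q : (2:ℝ) ^ ((p:ℝ) ^ k) ≤ Q ^ ((p:ℝ) ^ k) :=
    Real.rpow_le_rpow (by norm_num) hQ2 (pow_nonneg (by linarith) k)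
  have hexp2 : (p:ℝ)^k * Real.log 2 < (2:ℝ) ^ ((p:ℝ) ^ k) := by
    rw [Real.rpow_def_of_pos (by norm_num : (0:ℝ) < 2)]
    calc (p:ℝ)^k * Real.log 2 < (p:ℝ)^k * Real.log 2 + 1 := by linarith
      _ = Real.log 2 * (p:ℝ)^k + 1 := by ring
      _ ≤ Real.exp (Real.log 2 * (p:ℝ)^k) := Real.add_one_le_exp _
  have hFtk := hkey k
  have hFdiv : Q ^ ((p:ℝ)^k) ≤ F t / c0 := by
    rw [le_div_iff₀ hc0pos]
    exact hFtk
  have hbig : (1 + (k:ℝ)*(p-1)) * Real.log 2 ≤ F t / c0 := by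
    calc (1 + (k:ℝ)*(p-1)) * Real.log 2 ≤ (p:ℝ)^k * Real.log 2 :=
          mul_le_mul_of_nonneg_right hbern hlog2.le
      _ ≤ (2:ℝ) ^ ((p:ℝ)^k) := hexp2.le
      _ ≤ Q ^ ((p:ℝ)^k) := h2Q
      _ ≤ F t / c0 := hFdiv
  have hklarge : F t / c0 / Real.log 2 - 1 < (k:ℝ) * (p-1) := by
    rw [div_lt_iff₀ (by linarith : (0:ℝ) < p - 1)] at hk
    linarith
  have hcontra : F t / c0 < (1 + (k:ℝ)*(p-1)) * Real.log 2 := by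
    have h' : F t / c0 / Real.log 2 < (k:ℝ)*(p-1) + 1 := by linarith
    have := (div_lt_iff₀ hlog2).mp h'
    linarith
  linarith
end

section
/- Let T > 0, ε > 0, R ≥ 1, let λ : [0,T) → (0,1] and Q : [0,T) → [0,∞) be continuous, and let g : ℝ² → [0,∞) be continuous and compactly supported. Suppose w : ℝ² × [0,T) → ℝ is continuous, vanishes for |x| > t + R, and satisfies for all (x,t) ∈ ℝ² × [0,T): w(x,t) = (λ(0)ε/(2π)) ∫_{|x−y|≤t} g(y)/√(t² − |x−y|²) dy + (1/(2π)) ∫₀ᵗ ∫_{|x−y|≤t−τ} (Q(τ)w(y,τ) + λ(τ)^{−1}|w(y,τ)|²)/√((t−τ)² − |x−y|²) dy dτ. Then w(x,t) ≥ 0 for all (x,t) ∈ ℝ² × [0,T). -/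
open MeasureTheory Set Real Filter Topology

local notation "E2" => EuclideanSpace ℝ (Fin 2)


lemma invSqrt_rpow (t : ℝ) : (Real.sqrt t)⁻¹ = t ^ (-(2⁻¹ : ℝ)) := by
  rcases lt_or_ge t 0 with h|h
  · rw [Real.sqrt_eq_zero_of_nonpos h.le, Real.rpow_def_of_neg h, inv_zero]
    have : (-(2⁻¹ : ℝ)) * π = -(π/2) := by ring
    rw [this, Real.cos_neg, Real.cos_pi_div_two, mul_zero]
  · rw [Real.sqrt_eq_rpow, ← Real.rpow_neg h]
    norm_num

lemma sqrt_zero_of_nonpos {t : ℝ} (h : t ≤ 0) : (Real.sqrt t)⁻¹ = 0 := by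
  rw [Real.sqrt_eq_zero_of_nonpos h, inv_zero]

lemma H0_supp {c : ℝ} :
    Function.support (fun b : ℝ => (Real.sqrt (c - |b|))⁻¹) ⊆ Icc (-c) c := by
  intro b hb
  by_contra hbc
  simp only [mem_Icc, not_and_or, not_le] at hbc
  have : c - |b| < 0 := by rcases hbc with h | h <;> cases abs_cases b <;> linarith
  exact hb (sqrt_zero_of_nonpos this.le)

lemma H0_integrable {c : ℝ} (hc : 0 < c) :
    Integrable (fun b : ℝ => (Real.sqrt (c - |b|))⁻¹) := by
  rw [← integrableOn_iff_integrable_of_support_subset H0_supp]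
  have hrpow : IntervalIntegrable (fun x : ℝ => x ^ (-(2⁻¹ : ℝ))) volume 0 c :=
    intervalIntegral.intervalIntegrable_rpow' (by norm_num)
  have h1 : IntegrableOn (fun b : ℝ => (Real.sqrt (c - |b|))⁻¹) (Icc 0 c) := by
    have h2 := (hrpow.comp_sub_left c).symm
    simp only [sub_self, sub_zero] at h2
    have h3 : IntegrableOn (fun b : ℝ => (c - b) ^ (-(2⁻¹:ℝ))) (Icc 0 c) := by
      rw [← intervalIntegrable_iff_integrableOn_Icc_of_le hc.le]; exact h2
    refine h3.congr_fun (fun b hb => ?_) measurableSet_Icc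
    rw [invSqrt_rpow, abs_of_nonneg hb.1]
  have h2 : IntegrableOn (fun b : ℝ => (Real.sqrt (c - |b|))⁻¹) (Icc (-c) 0) := by
    have h2 := hrpow.comp_add_right c
    simp only [zero_sub, sub_self] at h2
    have h3 : IntegrableOn (fun b : ℝ => (b + c) ^ (-(2⁻¹:ℝ))) (Icc (-c) 0) := by
      rw [← intervalIntegrable_iff_integrableOn_Icc_of_le (by linarith : -c ≤ (0:ℝ))]
      exact h2
    refine h3.congr_fun (fun b hb => ?_) measurableSet_Icc
    rw [invSqrt_rpow, abs_of_nonpos hb.2]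
    ring_nf
  have hu := h2.union h1
  rwa [Icc_union_Icc_eq_Icc (by linarith) hc.le] at hu

lemma rpow_int_val {c : ℝ} (hc : 0 < c) :
    (∫ x in (0:ℝ)..c, x ^ (-(2⁻¹:ℝ))) = 2 * Real.sqrt c := by
  rw [integral_rpow (Or.inl (by norm_num))]
  rw [Real.zero_rpow (by norm_num), Real.sqrt_eq_rpow]
  norm_num; ring

lemma H0_integral {c : ℝ} (hc : 0 < c) :
    (∫ b : ℝ, (Real.sqrt (c - |b|))⁻¹) = 4 * Real.sqrt c := by
  have h0 : (∫ b : ℝ, (Real.sqrt (c - |b|))⁻¹)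
      = ∫ b in Icc (-c) c, (Real.sqrt (c - |b|))⁻¹ := by
    rw [setIntegral_eq_integral_of_forall_compl_eq_zero]
    intro x hx
    exact Function.notMem_support.mp (fun hs => hx (H0_supp hs))
  rw [h0, integral_Icc_eq_integral_Ioc,
    ← intervalIntegral.integral_of_le (by linarith : -c ≤ c)]
  have hint : IntervalIntegrable (fun b : ℝ => (Real.sqrt (c - |b|))⁻¹) volume (-c) c :=
    (H0_integrable hc).intervalIntegrable
  have hsplit := intervalIntegral.integral_add_adjacent_intervals
    (hint.mono_set (by rw [uIcc_of_le (by linarith : -c ≤ (0:ℝ)), uIcc_of_le (by linarith : -c ≤ c)]; exact Icc_subset_Icc le_rfl hc.le))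
    (hint.mono_set (by rw [uIcc_of_le hc.le, uIcc_of_le (by linarith : -c ≤ c)]; exact Icc_subset_Icc (by linarith) le_rfl))
  rw [← hsplit]
  have e1 : (∫ b in (-c : ℝ)..0, (Real.sqrt (c - |b|))⁻¹)
      = ∫ b in (-c : ℝ)..0, (b + c) ^ (-(2⁻¹:ℝ)) := by
    refine intervalIntegral.integral_congr (fun b hb => ?_)
    rw [uIcc_of_le (by linarith : -c ≤ (0:ℝ))] at hb
    rw [invSqrt_rpow, abs_of_nonpos hb.2]
    ring_nf
  have e2 : (∫ b in (0 : ℝ)..c, (Real.sqrt (c - |b|))⁻¹)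
      = ∫ b in (0 : ℝ)..c, (c - b) ^ (-(2⁻¹:ℝ)) := by
    refine intervalIntegral.integral_congr (fun b hb => ?_)
    rw [uIcc_of_le hc.le] at hb
    rw [invSqrt_rpow, abs_of_nonneg hb.1]
  rw [e1, e2]
  have v1 : (∫ b in (-c : ℝ)..0, (b + c) ^ (-(2⁻¹:ℝ))) = 2 * Real.sqrt c := by
    have := intervalIntegral.integral_comp_add_right (a := -c) (b := 0)
      (fun x : ℝ => x ^ (-(2⁻¹:ℝ))) c
    simp only [neg_add_cancel, zero_add] at this
    rw [this, rpow_int_val hc]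
  have v2 : (∫ b in (0 : ℝ)..c, (c - b) ^ (-(2⁻¹:ℝ))) = 2 * Real.sqrt c := by
    have := intervalIntegral.integral_comp_sub_left (a := 0) (b := c)
      (fun x : ℝ => x ^ (-(2⁻¹:ℝ))) c
    simp only [sub_self, sub_zero] at this
    rw [this, rpow_int_val hc]
  rw [v1, v2]; ring

lemma oneD (s : ℝ) : Integrable (fun b : ℝ => (Real.sqrt (s - b^2))⁻¹) ∧
    (∫ b : ℝ, (Real.sqrt (s - b^2))⁻¹) ≤ 4 ∧
    (s < 0 → (∫ b : ℝ, (Real.sqrt (s - b^2))⁻¹) = 0) := by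
  rcases le_or_gt s 0 with hs | hs
  · have hz : (fun b : ℝ => (Real.sqrt (s - b^2))⁻¹) = fun _ => (0:ℝ) := by
      funext b; exact sqrt_zero_of_nonpos (by nlinarith [sq_nonneg b])
    rw [hz]
    exact ⟨integrable_zero _ _ _, by simp, fun _ => by simp⟩
  · set c := Real.sqrt s with hcdef
    have hc : 0 < c := Real.sqrt_pos.mpr hs
    have hc2 : c ^ 2 = s := Real.sq_sqrt hs.le
    have hmeas : Measurable (fun b : ℝ => (Real.sqrt (s - b^2))⁻¹) :=
      ((measurable_const.sub ((measurable_id : Measurable fun b : ℝ => b).pow_const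
        2)).sqrt).inv
    have hH : Integrable (fun b : ℝ => (Real.sqrt c)⁻¹ * (Real.sqrt (c - |b|))⁻¹) :=
      (H0_integrable hc).const_mul _
    have hbound : ∀ b : ℝ, (Real.sqrt (s - b^2))⁻¹
        ≤ (Real.sqrt c)⁻¹ * (Real.sqrt (c - |b|))⁻¹ := by
      intro b
      rcases le_or_gt c |b| with hb | hb
      · have : s - b^2 ≤ 0 := by nlinarith [sq_abs b, abs_nonneg b]
        rw [sqrt_zero_of_nonpos this]
        positivity
      · have h1 : 0 < c * (c - |b|) := by nlinarith [abs_nonneg b]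
        have h2 : c * (c - |b|) ≤ s - b^2 := by nlinarith [sq_abs b, abs_nonneg b]
        have h3 : Real.sqrt (c * (c - |b|)) ≤ Real.sqrt (s - b^2) :=
          Real.sqrt_le_sqrt h2
        have h4 : 0 < Real.sqrt (c * (c - |b|)) := Real.sqrt_pos.mpr h1
        calc (Real.sqrt (s - b^2))⁻¹ ≤ (Real.sqrt (c * (c - |b|)))⁻¹ := by
              exact inv_anti₀ h4 h3
          _ = (Real.sqrt c)⁻¹ * (Real.sqrt (c - |b|))⁻¹ := by
              rw [Real.sqrt_mul hc.le, mul_inv]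
    have hfi : Integrable (fun b : ℝ => (Real.sqrt (s - b^2))⁻¹) := by
      refine hH.mono' hmeas.aestronglyMeasurable (Filter.Eventually.of_forall fun b => ?_)
      rw [Real.norm_eq_abs, abs_of_nonneg (by positivity)]
      exact hbound b
    refine ⟨hfi, ?_, fun h => absurd h (not_lt.mpr hs.le)⟩
    calc (∫ b : ℝ, (Real.sqrt (s - b^2))⁻¹)
        ≤ ∫ b : ℝ, (Real.sqrt c)⁻¹ * (Real.sqrt (c - |b|))⁻¹ :=
          integral_mono hfi hH hbound
      _ = (Real.sqrt c)⁻¹ * (4 * Real.sqrt c) := by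
          rw [MeasureTheory.integral_const_mul, H0_integral hc]
      _ ≤ 4 := by
          rw [show (Real.sqrt c)⁻¹ * (4 * Real.sqrt c) = 4 * (Real.sqrt c / Real.sqrt c) by ring,
            div_self (by positivity : Real.sqrt c ≠ 0), mul_one]

lemma twoD (r : ℝ) (hr : 0 ≤ r) :
    Integrable (fun p : ℝ×ℝ => (Real.sqrt (r^2 - p.1^2 - p.2^2))⁻¹) ∧
    (∫ p : ℝ×ℝ, (Real.sqrt (r^2 - p.1^2 - p.2^2))⁻¹) ≤ 8 * r := by
  have hmeas : Measurable (fun p : ℝ×ℝ => (Real.sqrt (r^2 - p.1^2 - p.2^2))⁻¹) :=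
    (((measurable_const.sub (measurable_fst.pow_const 2)).sub
      (measurable_snd.pow_const 2)).sqrt).inv
  have hasm : AEStronglyMeasurable (fun p : ℝ×ℝ => (Real.sqrt (r^2 - p.1^2 - p.2^2))⁻¹)
      (volume : Measure (ℝ×ℝ)) := hmeas.aestronglyMeasurable
  have hnn : ∀ p : ℝ×ℝ, 0 ≤ (Real.sqrt (r^2 - p.1^2 - p.2^2))⁻¹ := fun p => by positivity
  -- inner integrals
  have hfa : ∀ a : ℝ, Integrable (fun b : ℝ => (Real.sqrt (r^2 - a^2 - b^2))⁻¹) := by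
    intro a
    have := (oneD (r^2 - a^2)).1
    simpa using this
  have hinner_nonneg : ∀ a : ℝ, 0 ≤ ∫ b : ℝ, (Real.sqrt (r^2 - a^2 - b^2))⁻¹ :=
    fun a => integral_nonneg (fun b => by positivity)
  have hinner_le : ∀ a : ℝ, (∫ b : ℝ, (Real.sqrt (r^2 - a^2 - b^2))⁻¹) ≤ 4 :=
    fun a => (oneD (r^2 - a^2)).2.1
  have hinner_zero : ∀ a : ℝ, r < |a| → (∫ b : ℝ, (Real.sqrt (r^2 - a^2 - b^2))⁻¹) = 0 := by
    intro a ha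
    refine (oneD (r^2 - a^2)).2.2 (by nlinarith [abs_nonneg a, sq_abs a])
  -- the indicator dominating function
  set G : ℝ → ℝ := (Icc (-r) r).indicator (fun _ => (4:ℝ)) with hGdef
  have hGint : Integrable G := by
    rw [hGdef, integrable_indicator_iff measurableSet_Icc]
    exact integrableOn_const measure_Icc_lt_top.ne
  have hbound : ∀ a : ℝ, (∫ b : ℝ, (Real.sqrt (r^2 - a^2 - b^2))⁻¹) ≤ G a := by
    intro a
    rcases le_or_gt |a| r with ha | ha
    · have : a ∈ Icc (-r) r := abs_le.mp ha
      rw [hGdef, indicator_of_mem this]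
      exact hinner_le a
    · have : a ∉ Icc (-r) r := by rw [mem_Icc, ← abs_le]; exact not_le.mpr ha
      rw [hGdef, indicator_of_notMem this, hinner_zero a ha]
  -- integrability on the product
  have hprod : Integrable (fun p : ℝ×ℝ => (Real.sqrt (r^2 - p.1^2 - p.2^2))⁻¹)
      (volume : Measure (ℝ×ℝ)) := by
    rw [Measure.volume_eq_prod] at hasm ⊢
    rw [integrable_prod_iff hasm]
    constructor
    · exact Filter.Eventually.of_forall (fun a => hfa a)
    · have hmeq : ∀ a : ℝ, (∫ b : ℝ, ‖(Real.sqrt (r^2 - a^2 - b^2))⁻¹‖)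
          = ∫ b : ℝ, (Real.sqrt (r^2 - a^2 - b^2))⁻¹ := by
        intro a
        congr 1; funext b
        rw [Real.norm_eq_abs, abs_of_nonneg (by positivity)]
      refine hGint.mono' (hasm.norm.integral_prod_right') ?_
      refine Filter.Eventually.of_forall (fun a => ?_)
      have h1 : ‖∫ b : ℝ, ‖(Real.sqrt (r^2 - a^2 - b^2))⁻¹‖‖
          = ∫ b : ℝ, (Real.sqrt (r^2 - a^2 - b^2))⁻¹ := by
        rw [hmeq a, Real.norm_eq_abs, abs_of_nonneg (hinner_nonneg a)]
      calc ‖∫ b : ℝ, ‖(Real.sqrt (r^2 - a^2 - b^2))⁻¹‖‖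
          = ∫ b : ℝ, (Real.sqrt (r^2 - a^2 - b^2))⁻¹ := h1
        _ ≤ G a := hbound a
  refine ⟨hprod, ?_⟩
  have hval : (∫ p : ℝ×ℝ, (Real.sqrt (r^2 - p.1^2 - p.2^2))⁻¹)
      = ∫ a : ℝ, ∫ b : ℝ, (Real.sqrt (r^2 - a^2 - b^2))⁻¹ := by
    rw [Measure.volume_eq_prod] at hprod ⊢
    exact integral_prod _ hprod
  rw [hval]
  have hFa_int : Integrable (fun a : ℝ => ∫ b : ℝ, (Real.sqrt (r^2 - a^2 - b^2))⁻¹) := by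
    have := hprod
    rw [Measure.volume_eq_prod] at this
    exact this.integral_prod_left
  calc (∫ a : ℝ, ∫ b : ℝ, (Real.sqrt (r^2 - a^2 - b^2))⁻¹)
      ≤ ∫ a : ℝ, G a := integral_mono hFa_int hGint hbound
    _ = 8 * r := by
        rw [hGdef, integral_indicator_const _ measurableSet_Icc, Real.volume_real_Icc_of_le (by linarith), smul_eq_mul]
        ring

lemma kernelE (x : E2) (r : ℝ) (hr : 0 ≤ r) :
    Integrable (fun y : E2 => (Real.sqrt (r^2 - ‖x - y‖^2))⁻¹) ∧
    (∫ y : E2, (Real.sqrt (r^2 - ‖x - y‖^2))⁻¹) ≤ 8 * r := by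
  set k : E2 → ℝ := fun z => (Real.sqrt (r^2 - ‖z‖^2))⁻¹ with hk
  have hcomp : (fun y : E2 => (Real.sqrt (r^2 - ‖x - y‖^2))⁻¹) = fun y => k (x - y) := rfl
  set φ : ℝ×ℝ → E2 :=
    (MeasurableEquiv.toLp 2 (Fin 2 → ℝ)) ∘ (MeasurableEquiv.finTwoArrow).symm with hφ
  have mpφ : MeasurePreserving φ (volume : Measure (ℝ×ℝ)) (volume : Measure E2) :=
    ((EuclideanSpace.volume_preserving_symm_measurableEquiv_toLp (Fin 2)).symm).comp
      ((volume_preserving_finTwoArrow ℝ).symm _)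
  have embφ : MeasurableEmbedding φ :=
    ((MeasurableEquiv.toLp 2 (Fin 2 → ℝ)).measurableEmbedding).comp
      ((MeasurableEquiv.finTwoArrow).symm.measurableEmbedding)
  have hnorm : ∀ p : ℝ×ℝ, ‖φ p‖^2 = p.1^2 + p.2^2 := by
    intro p
    rw [EuclideanSpace.norm_eq]
    rw [Real.sq_sqrt (by positivity)]
    simp [hφ, MeasurableEquiv.coe_toLp, MeasurableEquiv.finTwoArrow, Fin.sum_univ_two]
  have hkcomp : (k ∘ φ) = fun p : ℝ×ℝ => (Real.sqrt (r^2 - p.1^2 - p.2^2))⁻¹ := by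
    funext p
    simp only [Function.comp_apply, hk, hnorm p]
    ring_nf
  have hki : Integrable k (volume : Measure E2) := by
    rw [← mpφ.integrable_comp_emb embφ, hkcomp]
    exact (twoD r hr).1
  have hkval : (∫ z : E2, k z) ≤ 8 * r := by
    rw [← mpφ.integral_comp embφ k]
    have e : (fun p : ℝ×ℝ => k (φ p)) = fun p : ℝ×ℝ => (Real.sqrt (r^2 - p.1^2 - p.2^2))⁻¹ :=
      hkcomp
    rw [e]
    exact (twoD r hr).2
  constructor
  · rw [hcomp]
    exact (integrable_comp_sub_left k x).mpr hki
  · rw [hcomp]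
    calc (∫ y : E2, k (x - y)) = ∫ z : E2, k z := integral_sub_left_eq_self k volume x
      _ ≤ 8 * r := hkval

set_option maxHeartbeats 1000000 in
/-- Positivity for the 2D Duhamel integral equation
`w = (λ(0)ε/2π) ∫ g/√(t²-|x-y|²) + (1/2π) ∫∫ (Q w + λ⁻¹|w|²)/√((t-τ)²-|x-y|²)`:
if `λ : [0,T) → (0,1]` and `Q : [0,T) → [0,∞)` are continuous, `g ≥ 0` is continuous
with compact support, and `w` is continuous, vanishes for `|x| > t + R`, and satisfies
the integral equation, then `w ≥ 0` on `ℝ² × [0,T)`. -/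
theorem stmt_15 (T ε R : ℝ) (hT : 0 < T) (hε : 0 < ε) (hR : 1 ≤ R)
    (lam Q : ℝ → ℝ)
    (hlamc : ContinuousOn lam (Ico 0 T))
    (hlam : ∀ t ∈ Ico (0 : ℝ) T, 0 < lam t ∧ lam t ≤ 1)
    (hQc : ContinuousOn Q (Ico 0 T))
    (hQ : ∀ t ∈ Ico (0 : ℝ) T, 0 ≤ Q t)
    (g : EuclideanSpace ℝ (Fin 2) → ℝ)
    (hgc : Continuous g) (hgsupp : HasCompactSupport g) (hgpos : ∀ y, 0 ≤ g y)
    (w : EuclideanSpace ℝ (Fin 2) → ℝ → ℝ)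
    (hwc : ContinuousOn (fun q : EuclideanSpace ℝ (Fin 2) × ℝ => w q.1 q.2)
      (univ ×ˢ Ico 0 T))
    (hwsupp : ∀ x : EuclideanSpace ℝ (Fin 2), ∀ t ∈ Ico (0 : ℝ) T,
      t + R < ‖x‖ → w x t = 0)
    (heq : ∀ x : EuclideanSpace ℝ (Fin 2), ∀ t ∈ Ico (0 : ℝ) T,
      w x t =
        (lam 0 * ε / (2 * π)) *
          (∫ y in {y : EuclideanSpace ℝ (Fin 2) | ‖x - y‖ ≤ t},
            g y / Real.sqrt (t ^ 2 - ‖x - y‖ ^ 2))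
        + (1 / (2 * π)) *
          ∫ τ in (0 : ℝ)..t,
            ∫ y in {y : EuclideanSpace ℝ (Fin 2) | ‖x - y‖ ≤ t - τ},
              (Q τ * w y τ + (lam τ)⁻¹ * |w y τ| ^ 2) /
                Real.sqrt ((t - τ) ^ 2 - ‖x - y‖ ^ 2)) :
    ∀ x : EuclideanSpace ℝ (Fin 2), ∀ t ∈ Ico (0 : ℝ) T, 0 ≤ w x t := by
  have hπ : 0 < π := Real.pi_pos
  have hπ3 : 3 < π := Real.pi_gt_three
  -- measurable balls
  have hmset : ∀ (x : E2) (a : ℝ), MeasurableSet {y : E2 | ‖x - y‖ ≤ a} := by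
    intro x a
    exact (isClosed_le ((continuous_const.sub continuous_id).norm) continuous_const).measurableSet
  -- w x 0 = 0
  have hw0 : ∀ x : E2, w x 0 = 0 := by
    intro x
    have h := heq x 0 ⟨le_refl 0, hT⟩
    rw [intervalIntegral.integral_same] at h
    have hzero : (volume : Measure E2) {y : E2 | ‖x - y‖ ≤ (0:ℝ)} = 0 := by
      have : {y : E2 | ‖x - y‖ ≤ (0:ℝ)} = {x} := by
        ext y
        simp [norm_le_zero_iff, sub_eq_zero, eq_comm]
      rw [this]
      exact measure_singleton x
    rw [Measure.restrict_eq_zero.mpr hzero, integral_zero_measure] at h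
    simpa using h
  by_contra hcon
  push_neg at hcon
  obtain ⟨x', t', ht', hneg⟩ := hcon
  -- the set of good times
  set A : Set ℝ := {t : ℝ | t ∈ Icc 0 t' ∧ ∀ x : E2, ∀ s ∈ Icc 0 t, 0 ≤ w x s} with hA
  have h0A : (0:ℝ) ∈ A := by
    refine ⟨⟨le_rfl, ht'.1⟩, fun x s hs => ?_⟩
    have : s = 0 := le_antisymm hs.2 hs.1
    rw [this, hw0 x]
  have hAne : A.Nonempty := ⟨0, h0A⟩
  have hbdd : BddAbove A := ⟨t', fun t ht => ht.1.2⟩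
  set m := sSup A with hm
  have hm0 : 0 ≤ m := le_csSup hbdd h0A
  have hmt' : m ≤ t' := csSup_le hAne (fun t ht => ht.1.2)
  have hmT : m < T := lt_of_le_of_lt hmt' ht'.2
  have hnonneg_lt : ∀ x : E2, ∀ s ∈ Ico (0:ℝ) m, 0 ≤ w x s := by
    intro x s hs
    obtain ⟨t, htA, hst⟩ := exists_lt_of_lt_csSup hAne hs.2
    exact htA.2 x s ⟨hs.1, hst.le⟩
  have hnonneg_m : ∀ x : E2, ∀ s ∈ Icc (0:ℝ) m, 0 ≤ w x s := by
    intro x s hs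
    rcases eq_or_lt_of_le hs.2 with he | hl
    · rcases eq_or_lt_of_le hm0 with hm0' | hm0'
      · rw [he, ← hm0', hw0 x]
      · -- m > 0 : limit from the left
        have hcx : Continuous (fun s : ℝ => ((x, s) : E2 × ℝ)) := Continuous.prodMk_right x
        have hcont : ContinuousOn (fun s : ℝ => w x s) (Ico 0 T) :=
          hwc.comp hcx.continuousOn (fun s hs => ⟨mem_univ _, hs⟩)
        have hcw : ContinuousWithinAt (fun s : ℝ => w x s) (Ico 0 m) m :=
          (hcont m ⟨hm0, hmT⟩).mono (fun s hs => ⟨hs.1, lt_of_lt_of_le hs.2 (le_of_lt hmT)⟩)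
        haveI hne : (𝓝[Ico (0:ℝ) m] m).NeBot := by
          refine mem_closure_iff_nhdsWithin_neBot.mp ?_
          rw [closure_Ico (ne_of_lt hm0')]
          exact ⟨hm0, le_rfl⟩
        have := ge_of_tendsto hcw
          (eventually_nhdsWithin_of_forall (fun s hs => hnonneg_lt x s hs))
        rw [he]
        exact this
    · exact hnonneg_lt x s ⟨hs.1, hl⟩
  rcases eq_or_lt_of_le hmt' with hcase | hmlt
  · exact absurd (hnonneg_m x' t' ⟨ht'.1, hcase.ge⟩) (not_le.mpr hneg)
  -- bootstrap beyond m
  -- maximum of Q on [0, t']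
  obtain ⟨τ₀, hτ₀mem, hτ₀max⟩ := isCompact_Icc.exists_isMaxOn ⟨0, ⟨le_rfl, ht'.1⟩⟩
    (hQc.mono (fun τ hτ => ⟨hτ.1, lt_of_le_of_lt hτ.2 ht'.2⟩))
  set Cq := Q τ₀ with hCq
  have hCq0 : 0 ≤ Cq := hQ τ₀ ⟨hτ₀mem.1, lt_of_le_of_lt hτ₀mem.2 ht'.2⟩
  have ht'0 : 0 ≤ t' := ht'.1
  set δ : ℝ := (Cq * 8 * t' + 1)⁻¹ with hδdef
  have hδ : 0 < δ := by rw [hδdef]; positivity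
  have hfac : Cq * 8 * t' * δ ≤ 1 := by
    rw [hδdef, ← div_eq_mul_inv]
    exact div_le_one_of_le₀ (by linarith) (by positivity)
  set t₁ := min (m + δ) t' with ht₁def
  have hmt1 : m < t₁ := lt_min (by linarith) hmlt
  have ht1t' : t₁ ≤ t' := min_le_right _ _
  have ht1T : t₁ < T := lt_of_le_of_lt ht1t' ht'.2
  have ht1δ : t₁ ≤ m + δ := min_le_left _ _
  -- sup of -w on the strip
  set K : Set (E2 × ℝ) := Metric.closedBall (0:E2) (t' + R + 1) ×ˢ Icc m t₁ with hKdef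
  have hKc : IsCompact K := (isCompact_closedBall _ _).prod isCompact_Icc
  have hKne : K.Nonempty := by
    refine ⟨(0, m), ?_, ⟨le_rfl, hmt1.le⟩⟩
    rw [mem_closedBall_zero_iff, norm_zero]
    linarith
  have hKsub : K ⊆ univ ×ˢ Ico 0 T := by
    intro p hp
    exact ⟨mem_univ _, ⟨le_trans hm0 hp.2.1, lt_of_le_of_lt hp.2.2 ht1T⟩⟩
  obtain ⟨p₀, hp₀K, hp₀max⟩ := hKc.exists_isMaxOn hKne ((hwc.mono hKsub).neg)
  set N := max 0 (-(w p₀.1 p₀.2)) with hNdef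
  have hN0 : 0 ≤ N := le_max_left _ _
  have hstrip : ∀ x : E2, ∀ s ∈ Icc m t₁, -N ≤ w x s := by
    intro x s hs
    rcases le_or_gt ‖x‖ (t' + R + 1) with hx | hx
    · have hmem : (x, s) ∈ K := ⟨mem_closedBall_zero_iff.mpr hx, hs⟩
      have h1 : -(w x s) ≤ -(w p₀.1 p₀.2) := hp₀max hmem
      have h2 : -(w p₀.1 p₀.2) ≤ N := le_max_right _ _
      linarith
    · have hz : w x s = 0 := by
        refine hwsupp x s ⟨le_trans hm0 hs.1, lt_of_le_of_lt hs.2 ht1T⟩ ?_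
        have : s ≤ t' := le_trans hs.2 ht1t'
        linarith
      rw [hz]
      exact neg_nonpos.mpr hN0
  -- the key estimate
  set K₀ := Cq * N * (8 * t') with hK₀def
  have hK₀0 : 0 ≤ K₀ := by rw [hK₀def]; positivity
  have hkey : ∀ x : E2, ∀ s ∈ Icc m t₁, -(K₀ * δ / (2*π)) ≤ w x s := by
    intro x s hs
    have hs0 : 0 ≤ s := le_trans hm0 hs.1
    have hsT : s < T := lt_of_le_of_lt hs.2 ht1T
    have hst' : s ≤ t' := le_trans hs.2 ht1t'
    have hsm : s - m ≤ δ := by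
      have := hs.2
      linarith [ht1δ]
    set F : ℝ → ℝ := fun τ => ∫ y in {y : E2 | ‖x - y‖ ≤ s - τ},
        (Q τ * w y τ + (lam τ)⁻¹ * |w y τ| ^ 2) /
          Real.sqrt ((s - τ) ^ 2 - ‖x - y‖ ^ 2) with hFdef
    have heqs := heq x s ⟨hs0, hsT⟩
    -- first term nonneg
    have hA1 : 0 ≤ (lam 0 * ε / (2 * π)) *
        (∫ y in {y : E2 | ‖x - y‖ ≤ s}, g y / Real.sqrt (s ^ 2 - ‖x - y‖ ^ 2)) := by
      apply mul_nonneg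
      · have := (hlam 0 ⟨le_rfl, hT⟩).1
        positivity
      · exact setIntegral_nonneg (hmset x s)
          (fun y _ => div_nonneg (hgpos y) (Real.sqrt_nonneg _))
    -- C1 : nonneg on [0, m]
    have hC1 : ∀ τ ∈ Icc (0:ℝ) m, 0 ≤ F τ := by
      intro τ hτ
      apply setIntegral_nonneg (hmset x _)
      intro y _
      apply div_nonneg _ (Real.sqrt_nonneg _)
      have hτT : τ ∈ Ico (0:ℝ) T := ⟨hτ.1, lt_of_le_of_lt hτ.2 hmT⟩
      have h1 : 0 ≤ Q τ * w y τ := mul_nonneg (hQ τ hτT) (hnonneg_m y τ hτ)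
      have h2 : 0 ≤ (lam τ)⁻¹ * |w y τ| ^ 2 :=
        mul_nonneg (inv_nonneg.mpr (hlam τ hτT).1.le) (by positivity)
      linarith
    -- C2 : lower bound on [m, s]
    have hC2 : ∀ τ ∈ Icc m s, -K₀ ≤ F τ := by
      intro τ hτ
      have hτ0 : 0 ≤ τ := le_trans hm0 hτ.1
      have hτT : τ ∈ Ico (0:ℝ) T := ⟨hτ0, lt_of_le_of_lt hτ.2 hsT⟩
      have hwlow : ∀ y : E2, -N ≤ w y τ :=
        fun y => hstrip y τ ⟨hτ.1, le_trans hτ.2 hs.2⟩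
      have hr0 : 0 ≤ s - τ := sub_nonneg.mpr hτ.2
      have hrt' : s - τ ≤ t' := by linarith
      have hnum : ∀ y : E2, -(Cq * N) ≤ Q τ * w y τ + (lam τ)⁻¹ * |w y τ| ^ 2 := by
        intro y
        have h1 : Q τ * (-N) ≤ Q τ * w y τ :=
          mul_le_mul_of_nonneg_left (hwlow y) (hQ τ hτT)
        have h2 : Cq * (-N) ≤ Q τ * (-N) :=
          mul_le_mul_of_nonpos_right (hτ₀max ⟨hτ0, le_trans hτ.2 hst'⟩)
            (neg_nonpos.mpr hN0)
        have h3 : 0 ≤ (lam τ)⁻¹ * |w y τ| ^ 2 :=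
          mul_nonneg (inv_nonneg.mpr (hlam τ hτT).1.le) (by positivity)
        nlinarith
      have hpt : ∀ y ∈ {y : E2 | ‖x - y‖ ≤ s - τ},
          -(Cq * N) * (Real.sqrt ((s - τ) ^ 2 - ‖x - y‖ ^ 2))⁻¹
          ≤ (Q τ * w y τ + (lam τ)⁻¹ * |w y τ| ^ 2) /
              Real.sqrt ((s - τ) ^ 2 - ‖x - y‖ ^ 2) := by
        intro y _
        rw [div_eq_mul_inv]
        exact mul_le_mul_of_nonneg_right (hnum y) (inv_nonneg.mpr (Real.sqrt_nonneg _))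
      by_cases hint : IntegrableOn (fun y : E2 =>
          (Q τ * w y τ + (lam τ)⁻¹ * |w y τ| ^ 2) /
            Real.sqrt ((s - τ) ^ 2 - ‖x - y‖ ^ 2)) {y : E2 | ‖x - y‖ ≤ s - τ} volume
      · have hklow := kernelE x (s - τ) hr0
        have hglow : IntegrableOn (fun y : E2 =>
            -(Cq * N) * (Real.sqrt ((s - τ) ^ 2 - ‖x - y‖ ^ 2))⁻¹)
            {y : E2 | ‖x - y‖ ≤ s - τ} volume :=
          (hklow.1.integrableOn).const_mul _
        have hmono := setIntegral_mono_on hglow hint (hmset x _) hpt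
        have hsetk : (∫ y in {y : E2 | ‖x - y‖ ≤ s - τ},
            (Real.sqrt ((s - τ) ^ 2 - ‖x - y‖ ^ 2))⁻¹) ≤ 8 * t' := by
          calc (∫ y in {y : E2 | ‖x - y‖ ≤ s - τ},
              (Real.sqrt ((s - τ) ^ 2 - ‖x - y‖ ^ 2))⁻¹)
              ≤ ∫ y : E2, (Real.sqrt ((s - τ) ^ 2 - ‖x - y‖ ^ 2))⁻¹ :=
                setIntegral_le_integral hklow.1
                  (Filter.Eventually.of_forall (fun y => by positivity))
            _ ≤ 8 * (s - τ) := hklow.2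
            _ ≤ 8 * t' := by linarith
        calc -K₀ = -(Cq * N) * (8 * t') := by rw [hK₀def]; ring
          _ ≤ -(Cq * N) * ∫ y in {y : E2 | ‖x - y‖ ≤ s - τ},
              (Real.sqrt ((s - τ) ^ 2 - ‖x - y‖ ^ 2))⁻¹ := by
              apply mul_le_mul_of_nonpos_left hsetk
              simp only [neg_nonpos]
              positivity
          _ = ∫ y in {y : E2 | ‖x - y‖ ≤ s - τ},
              -(Cq * N) * (Real.sqrt ((s - τ) ^ 2 - ‖x - y‖ ^ 2))⁻¹ := by
              rw [integral_const_mul]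
          _ ≤ F τ := hmono
      · have : F τ = 0 := integral_undef hint
        rw [this]
        exact neg_nonpos.mpr hK₀0
    -- combine
    have hI : -(K₀ * δ) ≤ ∫ τ in (0:ℝ)..s, F τ := by
      by_cases hFI : IntervalIntegrable F volume 0 s
      · have hsub1 : uIcc (0:ℝ) m ⊆ uIcc (0:ℝ) s := by
          rw [uIcc_of_le hm0, uIcc_of_le hs0]
          exact Icc_subset_Icc le_rfl hs.1
        have hsub2 : uIcc m s ⊆ uIcc (0:ℝ) s := by
          rw [uIcc_of_le hs.1, uIcc_of_le hs0]
          exact Icc_subset_Icc hm0 le_rfl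
        have hsplit := intervalIntegral.integral_add_adjacent_intervals
          (hFI.mono_set hsub1) (hFI.mono_set hsub2)
        have h1 : 0 ≤ ∫ τ in (0:ℝ)..m, F τ :=
          intervalIntegral.integral_nonneg hm0 hC1
        have h2 : -(K₀ * (s - m)) ≤ ∫ τ in m..s, F τ := by
          have hmono := intervalIntegral.integral_mono_on hs.1
            (intervalIntegrable_const (c := -K₀)) (hFI.mono_set hsub2) hC2
          rw [intervalIntegral.integral_const, smul_eq_mul] at hmono
          linarith
        have h3 : K₀ * (s - m) ≤ K₀ * δ := mul_le_mul_of_nonneg_left hsm hK₀0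
        rw [← hsplit]
        linarith
      · rw [intervalIntegral.integral_undef hFI]
        simp only [neg_nonpos]
        positivity
    calc -(K₀ * δ / (2*π)) = (1 / (2*π)) * (-(K₀ * δ)) := by ring
      _ ≤ (1 / (2*π)) * ∫ τ in (0:ℝ)..s, F τ :=
          mul_le_mul_of_nonneg_left hI (by positivity)
      _ ≤ (lam 0 * ε / (2 * π)) *
          (∫ y in {y : E2 | ‖x - y‖ ≤ s}, g y / Real.sqrt (s ^ 2 - ‖x - y‖ ^ 2))
          + (1 / (2*π)) * ∫ τ in (0:ℝ)..s, F τ := le_add_of_nonneg_left hA1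
      _ = w x s := heqs.symm
  -- conclude N = 0
  have hNzero : N = 0 := by
    by_contra hNne
    have hNpos : 0 < N := lt_of_le_of_ne hN0 (Ne.symm hNne)
    have hNval : N = -(w p₀.1 p₀.2) := by
      rcases max_cases 0 (-(w p₀.1 p₀.2)) with ⟨h1, _⟩ | ⟨h1, _⟩
      · rw [hNdef] at hNpos ⊢
        rw [h1] at hNpos
        exact absurd hNpos (lt_irrefl 0)
      · rw [hNdef, h1]
    have hp₀2 : p₀.2 ∈ Icc m t₁ := hp₀K.2
    have hwp := hkey p₀.1 p₀.2 hp₀2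
    have hNle : N ≤ K₀ * δ / (2*π) := by rw [hNval]; linarith
    have h2π : N * (2*π) ≤ K₀ * δ := (le_div_iff₀ (by positivity)).mp hNle
    have hKδ : K₀ * δ ≤ N := by
      have : K₀ * δ = N * (Cq * 8 * t' * δ) := by rw [hK₀def]; ring
      rw [this]
      calc N * (Cq * 8 * t' * δ) ≤ N * 1 := mul_le_mul_of_nonneg_left hfac hN0
        _ = N := mul_one N
    have h6 : N * 6 ≤ N * (2*π) := mul_le_mul_of_nonneg_left (by linarith) hN0
    linarith
  -- t₁ ∈ A, contradiction
  have ht₁A : t₁ ∈ A := by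
    refine ⟨⟨le_trans hm0 hmt1.le, ht1t'⟩, fun x s hs => ?_⟩
    rcases le_or_gt s m with h | h
    · exact hnonneg_m x s ⟨hs.1, h⟩
    · have := hkey x s ⟨h.le, hs.2⟩
      rw [hK₀def, hNzero] at this
      simpa using this
  have : t₁ ≤ m := le_csSup hbdd ht₁A
  linarith
end
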